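/- arXiv:2601.06871 — 11 statements merged into one kernel-verified Lean document; each statement's English description precedes it below -/
import Mathlib

section
/- Let F be the family consisting of all k-element subsets of [n] containing [t], together with all k-element subsets of [n] containing {2,…,t+ℓ-2} but not containing 1. Then for any ℓ distinct members F₁,…,F_ℓ of F, ∑_{1≤i<j≤ℓ} |F_i ∩ F_j| ≥ binomial(ℓ,2)·(t-1) + binomial(ℓ-1,2). -/
/-!
Every member of the family contains `{2, …, t}`, and contains `1` or the block
`B = {2, …, t + ℓ - 2}`. So a pair of members meets in at least `t - 1` points, plus one more
if both contain `1`, plus `ℓ - 2` more if both contain `B`. If `p` members contain `1` and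
`q` contain `B`, then `p + q ≥ ℓ` and the pair sum is at least
`C(ℓ,2)(t-1) + C(p,2) + (ℓ-2) C(q,2) ≥ C(ℓ,2)(t-1) + C(ℓ-q,2) + (ℓ-2) C(q,2)`, and the last
two terms exceed `C(ℓ-1,2)` by `(ℓ-1)(q-1)(q-2)/2 ≥ 0`.
-/

open Finset

theorem Nat.choose_two_sub_le_add_mul_choose_two (m q : ℕ) :
    (m - 1).choose 2 ≤ (m - q).choose 2 + (m - 2) * q.choose 2 := by
  rcases le_or_gt m 2 with hm | hm
  · rw [Nat.choose_eq_zero_of_lt (by omega : m - 1 < 2)]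
    exact Nat.zero_le _
  rcases le_or_gt m q with hq | hq
  · calc (m - 1).choose 2 ≤ q.choose 2 := Nat.choose_le_choose 2 (by omega)
      _ ≤ (m - 2) * q.choose 2 := Nat.le_mul_of_pos_left _ (by omega)
      _ ≤ _ := Nat.le_add_left _ _
  · have hq12 : (0 : ℚ) ≤ ((q : ℚ) - 1) * ((q : ℚ) - 2) := by
      rcases le_or_gt q 1 with h | h
      · have : (q : ℚ) ≤ 1 := by exact_mod_cast h
        nlinarith
      · have : (2 : ℚ) ≤ q := by exact_mod_cast h
        nlinarith
    have hm1 : (0 : ℚ) ≤ (m : ℚ) - 1 := by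
      have : (1 : ℚ) ≤ m := by exact_mod_cast (by omega : 1 ≤ m)
      linarith
    rw [← Nat.cast_le (α := ℚ)]
    push_cast [Nat.cast_choose_two, Nat.cast_sub hq.le, Nat.cast_sub (by omega : 1 ≤ m),
      Nat.cast_sub hm.le]
    nlinarith [mul_nonneg hm1 hq12]

namespace Finset

variable {ι α M : Type*} [Fintype ι] [LinearOrder ι]

theorem sum_sum_ite_lt_eq_sum_filter [AddCommMonoid M] (f : ι → ι → M) :
    (∑ i, ∑ j, if i < j then f i j else 0) = ∑ x ∈ {x : ι × ι | x.1 < x.2}, f x.1 x.2 := by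
  rw [sum_filter, Fintype.sum_prod_type]

theorem sum_filter_lt_ite_mem_mem (S : Finset ι) :
    (∑ x ∈ {x : ι × ι | x.1 < x.2}, if x.1 ∈ S ∧ x.2 ∈ S then 1 else 0) = (#S).choose 2 := by
  rw [sum_boole, Nat.cast_id, filter_filter, ← card_product_filter_lt]
  congr 1
  ext x
  simp only [mem_filter, mem_univ, mem_product, true_and]
  tauto

theorem card_add_ite_add_mul_ite_le [DecidableEq α] {X C B : Finset α} {a : α}
    (hCB : C ⊆ B) (haB : a ∉ B) (hCX : C ⊆ X) :
    #C + ((if a ∈ X then 1 else 0) + (#B - #C) * (if B ⊆ X then 1 else 0)) ≤ #X := by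
  have hCB' := card_le_card hCB
  by_cases ha : a ∈ X <;> by_cases hB : B ⊆ X <;> simp only [ha, hB, if_true, if_false]
  · have := card_le_card (insert_subset ha hB)
    rw [card_insert_of_notMem haB] at this
    omega
  · have := card_le_card (insert_subset ha hCX)
    rw [card_insert_of_notMem (fun h => haB (hCB h))] at this
    omega
  · have := card_le_card hB
    omega
  · have := card_le_card hCX
    omega

theorem choose_two_mul_card_add_choose_two_le_sum_card_inter [DecidableEq α] (G : ι → Finset α)
    {C B : Finset α} {a : α}
    (hCB : C ⊆ B) (haB : a ∉ B) (hC : ∀ i, C ⊆ G i) (hcover : ∀ i, a ∈ G i ∨ B ⊆ G i)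
    (hBC : Fintype.card ι - 2 ≤ #B - #C) :
    (Fintype.card ι).choose 2 * #C + (Fintype.card ι - 1).choose 2 ≤
      ∑ x ∈ {x : ι × ι | x.1 < x.2}, #(G x.1 ∩ G x.2) := by
  set m := Fintype.card ι
  set S : Finset ι := {i | a ∈ G i}
  set T : Finset ι := {i | B ⊆ G i}
  have hST : m ≤ #S + #T := by
    have hunion : S ∪ T = univ := eq_univ_of_forall fun i => by simpa [S, T] using hcover i
    calc m = #(S ∪ T) := by rw [hunion, card_univ]
      _ ≤ #S + #T := card_union_le S T
  have hpair : ∀ i j, #C + ((if i ∈ S ∧ j ∈ S then 1 else 0) +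
      (#B - #C) * (if i ∈ T ∧ j ∈ T then 1 else 0)) ≤ #(G i ∩ G j) := fun i j => by
    simpa only [S, T, mem_filter, mem_univ, true_and, mem_inter, subset_inter_iff] using
      card_add_ite_add_mul_ite_le (X := G i ∩ G j) hCB haB (subset_inter (hC i) (hC j))
  calc m.choose 2 * #C + (m - 1).choose 2
      ≤ m.choose 2 * #C + ((#S).choose 2 + (#B - #C) * (#T).choose 2) := by
        gcongr
        calc (m - 1).choose 2 ≤ (m - #T).choose 2 + (m - 2) * (#T).choose 2 :=
              Nat.choose_two_sub_le_add_mul_choose_two m #T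
          _ ≤ (#S).choose 2 + (#B - #C) * (#T).choose 2 := by
              gcongr
              omega
    _ = ∑ x ∈ {x : ι × ι | x.1 < x.2}, (#C + ((if x.1 ∈ S ∧ x.2 ∈ S then 1 else 0) +
          (#B - #C) * (if x.1 ∈ T ∧ x.2 ∈ T then 1 else 0))) := by
        rw [sum_add_distrib, sum_add_distrib, ← mul_sum, sum_filter_lt_ite_mem_mem,
          sum_filter_lt_ite_mem_mem, sum_const, Fintype.card_product_filter_lt, smul_eq_mul]
    _ ≤ _ := sum_le_sum fun x _ => hpair x.1 x.2

end Finset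

theorem stmt_3_general (n k t ℓ : ℕ) (ht : 1 ≤ t) (hℓ : 3 ≤ ℓ)
    (F : Finset (Finset ℕ))
    (hF : F = ((Finset.Icc 1 n).powersetCard k).filter
        (fun A => Finset.Icc 1 t ⊆ A) ∪
      ((Finset.Icc 1 n).powersetCard k).filter
        (fun A => Finset.Icc 2 (t + ℓ - 2) ⊆ A ∧ 1 ∉ A))
    (G : Fin ℓ → Finset ℕ)
    (hGmem : ∀ i, G i ∈ F) :
    Nat.choose ℓ 2 * (t - 1) + Nat.choose (ℓ - 1) 2 ≤
      ∑ i : Fin ℓ, ∑ j : Fin ℓ, if i < j then (G i ∩ G j).card else 0 := by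
  subst hF
  have hmem : ∀ i, Icc 2 t ⊆ G i ∧ (1 ∈ G i ∨ Icc 2 (t + ℓ - 2) ⊆ G i) := by
    intro i
    rcases mem_union.1 (hGmem i) with h | h
    · have h := (mem_filter.1 h).2
      exact ⟨(Icc_subset_Icc (by omega) le_rfl).trans h, .inl (h (mem_Icc.2 ⟨le_rfl, ht⟩))⟩
    · have h := (mem_filter.1 h).2.1
      exact ⟨(Icc_subset_Icc le_rfl (by omega)).trans h, .inr h⟩
  have h := choose_two_mul_card_add_choose_two_le_sum_card_inter G
    (Icc_subset_Icc le_rfl (by omega)) (by simp) (fun i => (hmem i).1) (fun i => (hmem i).2)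
    (by simp only [Fintype.card_fin, Nat.card_Icc]; omega)
  rw [Fintype.card_fin, Nat.card_Icc] at h
  rwa [sum_sum_ite_lt_eq_sum_filter, show t - 1 = t + 1 - 2 by omega]

theorem stmt_3 (n k t ℓ : ℕ) (ht : 1 ≤ t) (hℓ : 3 ≤ ℓ) (hk : t + ℓ - 2 ≤ k)
    (hkn : k ≤ n)
    (F : Finset (Finset ℕ))
    (hF : F = ((Finset.Icc 1 n).powersetCard k).filter
        (fun A => Finset.Icc 1 t ⊆ A) ∪
      ((Finset.Icc 1 n).powersetCard k).filter
        (fun A => Finset.Icc 2 (t + ℓ - 2) ⊆ A ∧ 1 ∉ A))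
    (G : Fin ℓ → Finset ℕ) (hGinj : Function.Injective G)
    (hGmem : ∀ i, G i ∈ F) :
    Nat.choose ℓ 2 * (t - 1) + Nat.choose (ℓ - 1) 2 ≤
      ∑ i : Fin ℓ, ∑ j : Fin ℓ, if i < j then (G i ∩ G j).card else 0 :=
  stmt_3_general n k t ℓ ht hℓ F hF G hGmem
end

section
/- Let A and B be nonempty families of k-element subsets of [n] that are each r-intersecting and are cross (r+1)-intersecting (|A ∩ B| ≥ r+1 for A ∈ A, B ∈ B). Then |A| ≤ binomial(k, r+1)·binomial(n-r-1, k-r-1) + 1, and the same bound holds for |B|. -/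
open Finset

noncomputable def pick4 (X B₀ : Finset ℕ) (r : ℕ) : Finset ℕ :=
  if h : r + 1 ≤ (X ∩ B₀).card then (Finset.exists_subset_card_eq h).choose else ∅

lemma pick4_spec {X B₀ : Finset ℕ} {r : ℕ} (h : r + 1 ≤ (X ∩ B₀).card) :
    pick4 X B₀ r ⊆ X ∩ B₀ ∧ (pick4 X B₀ r).card = r + 1 := by
  rw [pick4, dif_pos h]
  exact (Finset.exists_subset_card_eq h).choose_spec

lemma key4 (n k r : ℕ) (hrk : r < k) (hkn : k ≤ n)
    (A : Finset (Finset ℕ)) (B₀ : Finset ℕ)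
    (hB₀sub : B₀ ⊆ Finset.Icc 1 n) (hB₀card : B₀.card = k)
    (hA : ∀ X ∈ A, X ⊆ Finset.Icc 1 n ∧ X.card = k)
    (hcross : ∀ X ∈ A, r + 1 ≤ (X ∩ B₀).card) :
    A.card ≤ Nat.choose k (r + 1) * Nat.choose (n - r - 1) (k - r - 1) := by
  set T := (B₀.powersetCard (r + 1)).sigma
      (fun S => ((Finset.Icc 1 n) \ S).powersetCard (k - r - 1)) with hT
  have hTcard : T.card = Nat.choose k (r + 1) * Nat.choose (n - r - 1) (k - r - 1) := by
    rw [hT, Finset.card_sigma]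
    have : ∀ S ∈ B₀.powersetCard (r + 1),
        (((Finset.Icc 1 n) \ S).powersetCard (k - r - 1)).card
          = Nat.choose (n - r - 1) (k - r - 1) := by
      intro S hS
      rw [Finset.mem_powersetCard] at hS
      rw [Finset.card_powersetCard, Finset.card_sdiff_of_subset (hS.1.trans hB₀sub),
        Nat.card_Icc, hS.2]
      congr 1
    rw [Finset.sum_congr rfl this, Finset.sum_const, Finset.card_powersetCard, hB₀card,
      smul_eq_mul]
  rw [← hTcard]
  apply Finset.card_le_card_of_injOn (fun X => ⟨pick4 X B₀ r, X \ pick4 X B₀ r⟩)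
  · intro X hX
    obtain ⟨hsub, hcard⟩ := pick4_spec (hcross X hX)
    rw [hT, Finset.mem_coe, Finset.mem_sigma, Finset.mem_powersetCard, Finset.mem_powersetCard]
    refine ⟨⟨hsub.trans inter_subset_right, hcard⟩, ?_, ?_⟩
    · exact Finset.sdiff_subset_sdiff (hA X hX).1 (Finset.Subset.refl _)
    · rw [Finset.card_sdiff_of_subset (hsub.trans inter_subset_left), hcard, (hA X hX).2]
      omega
  · intro X₁ h₁ X₂ h₂ heq
    simp only [Sigma.mk.inj_iff, heq_eq_eq] at heq
    obtain ⟨hS, hD⟩ := heq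
    have s₁ : pick4 X₁ B₀ r ⊆ X₁ := (pick4_spec (hcross X₁ h₁)).1.trans inter_subset_left
    have s₂ : pick4 X₂ B₀ r ⊆ X₂ := (pick4_spec (hcross X₂ h₂)).1.trans inter_subset_left
    have e₁ : X₁ = pick4 X₁ B₀ r ∪ (X₁ \ pick4 X₁ B₀ r) :=
      (Finset.union_sdiff_of_subset s₁).symm
    have e₂ : X₂ = pick4 X₂ B₀ r ∪ (X₂ \ pick4 X₂ B₀ r) :=
      (Finset.union_sdiff_of_subset s₂).symm
    rw [e₁, e₂, hD, hS]

theorem stmt_4 (n k r : ℕ) (hrk : r < k) (hkn : k ≤ n)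
    (A B : Finset (Finset ℕ))
    (hAne : A.Nonempty) (hBne : B.Nonempty)
    (hA : ∀ X ∈ A, X ⊆ Finset.Icc 1 n ∧ X.card = k)
    (hB : ∀ X ∈ B, X ⊆ Finset.Icc 1 n ∧ X.card = k)
    (hAint : ∀ X ∈ A, ∀ Y ∈ A, r ≤ (X ∩ Y).card)
    (hBint : ∀ X ∈ B, ∀ Y ∈ B, r ≤ (X ∩ Y).card)
    (hcross : ∀ X ∈ A, ∀ Y ∈ B, r + 1 ≤ (X ∩ Y).card) :
    A.card ≤ Nat.choose k (r + 1) * Nat.choose (n - r - 1) (k - r - 1) + 1 ∧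
    B.card ≤ Nat.choose k (r + 1) * Nat.choose (n - r - 1) (k - r - 1) + 1 := by
  obtain ⟨B₀, hB₀⟩ := hBne
  obtain ⟨A₀, hA₀⟩ := hAne
  constructor
  · have := key4 n k r hrk hkn A B₀ (hB B₀ hB₀).1 (hB B₀ hB₀).2 hA
      (fun X hX => hcross X hX B₀ hB₀)
    omega
  · have := key4 n k r hrk hkn B A₀ (hA A₀ hA₀).1 (hA A₀ hA₀).2 hB
      (fun Y hY => by rw [Finset.inter_comm]; exact hcross A₀ hA₀ Y hY)
    omega
end

section
/- There exists n₀ such that for all n ≥ n₀: if A and B are families of k-element subsets of [n] that are each r-intersecting and cross (r+1)-intersecting, then |A| + |B| ≤ binomial(n-r, k-r), with equality only if A or B is empty. -/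
open Finset

/-- descFactorial comparison with a shift. -/
lemma aux_desc (r : ℕ) : ∀ d n : ℕ, 2 * r + d ≤ n →
    n.descFactorial d ≤ 2 ^ d * (n - r).descFactorial d := by
  intro d
  induction d with
  | zero => intro n _; simp
  | succ d ih =>
    intro n hn
    rw [Nat.descFactorial_succ, Nat.descFactorial_succ]
    have h1 : n - d ≤ 2 * (n - r - d) := by omega
    calc (n - d) * n.descFactorial d
        ≤ (2 * (n - r - d)) * (2 ^ d * (n - r).descFactorial d) :=
          Nat.mul_le_mul h1 (ih n (by omega))
      _ = 2 ^ (d + 1) * ((n - r - d) * (n - r).descFactorial d) := by ring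

/-- Asymptotic lemma: `c * C(n,d) < C(n-r, d+1)` for large `n`. -/
lemma asym (c r d : ℕ) : ∃ n₀ : ℕ, ∀ n ≥ n₀, c * n.choose d < (n - r).choose (d + 1) := by
  refine ⟨2 * r + d + c * (d + 1) * 2 ^ d + r + d + 1, fun n hn => ?_⟩
  have hpos : 0 < (n - r).descFactorial d := by
    rcases Nat.eq_zero_or_pos ((n - r).descFactorial d) with h | h
    · rw [Nat.descFactorial_eq_zero_iff_lt] at h; omega
    · exact h
  have key : Nat.factorial (d+1) * (c * n.choose d) < Nat.factorial (d+1) * ((n - r).choose (d + 1)) := by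
    have e1 : Nat.factorial (d+1) * (c * n.choose d) = c * (d + 1) * (Nat.factorial d * n.choose d) := by
      rw [Nat.factorial_succ]; ring
    rw [e1, ← Nat.descFactorial_eq_factorial_mul_choose,
      ← Nat.descFactorial_eq_factorial_mul_choose, Nat.descFactorial_succ]
    calc c * (d + 1) * n.descFactorial d
        ≤ c * (d + 1) * (2 ^ d * (n - r).descFactorial d) :=
          Nat.mul_le_mul_left _ (aux_desc r d n (by omega))
      _ = (c * (d + 1) * 2 ^ d) * (n - r).descFactorial d := by ring
      _ < (n - r - d) * (n - r).descFactorial d :=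
          Nat.mul_lt_mul_of_lt_of_le (by omega) le_rfl hpos
  exact Nat.lt_of_mul_lt_mul_left key

/-- Counting sets of size `k` inside `Icc 1 n` containing a fixed set `S`. -/
lemma count_supersets (n k : ℕ) (S : Finset ℕ) (F : Finset (Finset ℕ))
    (hF : ∀ X ∈ F, X ⊆ Finset.Icc 1 n ∧ X.card = k) (hS : ∀ X ∈ F, S ⊆ X) :
    F.card ≤ (n - S.card).choose (k - S.card) := by
  rcases F.eq_empty_or_nonempty with rfl | ⟨X₀, hX₀⟩
  · simp
  have hSI : S ⊆ Finset.Icc 1 n := (hS X₀ hX₀).trans (hF X₀ hX₀).1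
  have hcard : (Finset.Icc 1 n \ S).card = n - S.card := by
    rw [card_sdiff_of_subset hSI, Nat.card_Icc]; omega
  have := Finset.card_le_card_of_injOn (fun X => X \ S)
    (fun X hX => ?_) (s := F) (t := powersetCard (k - S.card) (Finset.Icc 1 n \ S)) ?_
  · rwa [card_powersetCard, hcard] at this
  · simp only [Finset.mem_coe, mem_powersetCard]
    refine ⟨fun a ha => ?_, ?_⟩
    · rw [mem_sdiff] at ha ⊢
      exact ⟨(hF X hX).1 ha.1, ha.2⟩
    · rw [card_sdiff_of_subset (hS X hX), (hF X hX).2]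
  · intro X hX Y hY h
    have : X \ S ∪ S = Y \ S ∪ S := by simp only at h; rw [h]
    rwa [sdiff_union_of_subset (hS X hX), sdiff_union_of_subset (hS Y hY)] at this

/-- Covering bound. -/
lemma cover_bound (F : Finset (Finset ℕ)) (𝒮 : Finset (Finset ℕ))
    (h : ∀ X ∈ F, ∃ S ∈ 𝒮, S ⊆ X) :
    F.card ≤ ∑ S ∈ 𝒮, (F.filter (fun X => S ⊆ X)).card := by
  calc F.card ≤ (𝒮.biUnion (fun S => F.filter (fun X => S ⊆ X))).card := by
        apply Finset.card_le_card
        intro X hX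
        obtain ⟨S, hS, hSX⟩ := h X hX
        exact Finset.mem_biUnion.2 ⟨S, hS, Finset.mem_filter.2 ⟨hX, hSX⟩⟩
    _ ≤ _ := Finset.card_biUnion_le

/-- Crude bound for families meeting a fixed `k`-set in at least `s` points. -/
lemma crude (n k s : ℕ) (F : Finset (Finset ℕ)) (Y₀ : Finset ℕ)
    (hF : ∀ X ∈ F, X ⊆ Finset.Icc 1 n ∧ X.card = k)
    (hcross : ∀ X ∈ F, s ≤ (X ∩ Y₀).card) (hY : Y₀.card = k) :
    F.card ≤ k.choose s * n.choose (k - s) := by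
  have hcov : ∀ X ∈ F, ∃ S ∈ powersetCard s Y₀, S ⊆ X := by
    intro X hX
    obtain ⟨T, hT, hTc⟩ := Finset.exists_subset_card_eq (hcross X hX)
    exact ⟨T, mem_powersetCard.2 ⟨hT.trans inter_subset_right, hTc⟩,
      hT.trans inter_subset_left⟩
  calc F.card ≤ ∑ S ∈ powersetCard s Y₀, (F.filter (fun X => S ⊆ X)).card :=
        cover_bound F _ hcov
    _ ≤ ∑ _S ∈ powersetCard s Y₀, n.choose (k - s) := by
        apply Finset.sum_le_sum
        intro S hS
        rw [mem_powersetCard] at hS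
        calc (F.filter (fun X => S ⊆ X)).card ≤ (n - S.card).choose (k - S.card) :=
              count_supersets n k S _ (fun X hX => hF X (Finset.mem_filter.1 hX).1)
                (fun X hX => (Finset.mem_filter.1 hX).2)
          _ ≤ n.choose (k - s) := by
              rw [hS.2]; exact Nat.choose_le_choose _ (by omega)
    _ = k.choose s * n.choose (k - s) := by
        rw [Finset.sum_const, card_powersetCard, hY, smul_eq_mul]

/-- Frankl-type bound for a single `r`-intersecting family, large `n`. -/
lemma frankl (n k r : ℕ) (hrk : r < k) (A : Finset (Finset ℕ))
    (hA : ∀ X ∈ A, X ⊆ Finset.Icc 1 n ∧ X.card = k)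
    (hAA : ∀ X ∈ A, ∀ Y ∈ A, r ≤ (X ∩ Y).card)
    (hbig : (k.choose r * k) * n.choose (k - r - 1) ≤ (n - r).choose (k - r)) :
    A.card ≤ (n - r).choose (k - r) := by
  rcases A.eq_empty_or_nonempty with rfl | ⟨X₀, hX₀⟩
  · simp
  by_cases hstar : ∃ T ∈ powersetCard r X₀, ∀ Y ∈ A, T ⊆ Y
  · obtain ⟨T, hT, hTall⟩ := hstar
    rw [mem_powersetCard] at hT
    have := count_supersets n k T A hA hTall
    rwa [hT.2] at this
  push_neg at hstar
  have hcov : ∀ Y ∈ A, ∃ T ∈ powersetCard r X₀, T ⊆ Y := by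
    intro Y hY
    obtain ⟨T, hT, hTc⟩ := Finset.exists_subset_card_eq (hAA Y hY X₀ hX₀)
    exact ⟨T, mem_powersetCard.2 ⟨hT.trans inter_subset_right, hTc⟩,
      hT.trans inter_subset_left⟩
  have hper : ∀ T ∈ powersetCard r X₀,
      (A.filter (fun X => T ⊆ X)).card ≤ k * n.choose (k - r - 1) := by
    intro T hT
    rw [mem_powersetCard] at hT
    obtain ⟨Z, hZA, hZT⟩ := hstar T (mem_powersetCard.2 hT)
    have hsub : A.filter (fun X => T ⊆ X) ⊆
        (Z \ T).biUnion (fun a => A.filter (fun X => insert a T ⊆ X)) := by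
      intro Y hY
      rw [Finset.mem_filter] at hY
      obtain ⟨hYA, hTY⟩ := hY
      have h1 : r ≤ (Y ∩ Z).card := hAA Y hYA Z hZA
      have h2 : (Z ∩ T).card < r := by
        have h3 : Z ∩ T ⊂ T := by
          constructor
          · exact inter_subset_right
          · intro hc
            exact hZT (fun t ht => (Finset.mem_inter.1 (hc ht)).1)
        have := Finset.card_lt_card h3
        omega
      have : ¬ (Y ∩ Z ⊆ Z ∩ T) := by
        intro hc
        exact absurd (Finset.card_le_card hc) (by omega)
      obtain ⟨a, haYZ, haZT⟩ := Finset.not_subset.1 this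
      rw [Finset.mem_inter] at haYZ
      have haT : a ∉ T := fun hc => haZT (Finset.mem_inter.2 ⟨haYZ.2, hc⟩)
      refine Finset.mem_biUnion.2 ⟨a, Finset.mem_sdiff.2 ⟨haYZ.2, haT⟩,
        Finset.mem_filter.2 ⟨hYA, ?_⟩⟩
      exact Finset.insert_subset haYZ.1 hTY
    calc (A.filter (fun X => T ⊆ X)).card
        ≤ ∑ a ∈ Z \ T, (A.filter (fun X => insert a T ⊆ X)).card :=
          (Finset.card_le_card hsub).trans Finset.card_biUnion_le
      _ ≤ ∑ _a ∈ Z \ T, n.choose (k - r - 1) := by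
          apply Finset.sum_le_sum
          intro a ha
          rw [Finset.mem_sdiff] at ha
          have hcardi : (insert a T).card = r + 1 := by
            rw [Finset.card_insert_of_notMem ha.2, hT.2]
          calc (A.filter (fun X => insert a T ⊆ X)).card
              ≤ (n - (insert a T).card).choose (k - (insert a T).card) :=
                count_supersets n k _ _ (fun X hX => hA X (Finset.mem_filter.1 hX).1)
                  (fun X hX => (Finset.mem_filter.1 hX).2)
            _ ≤ n.choose (k - r - 1) := by
                rw [hcardi]
                have : k - (r + 1) = k - r - 1 := by omega
                rw [this]
                exact Nat.choose_le_choose _ (by omega)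
      _ ≤ k * n.choose (k - r - 1) := by
          rw [Finset.sum_const, smul_eq_mul]
          have : (Z \ T).card ≤ k := by
            calc (Z \ T).card ≤ Z.card := Finset.card_le_card (sdiff_subset)
              _ = k := (hA Z hZA).2
          exact Nat.mul_le_mul_right _ this
  calc A.card ≤ ∑ T ∈ powersetCard r X₀, (A.filter (fun X => T ⊆ X)).card :=
        cover_bound A _ hcov
    _ ≤ ∑ _T ∈ powersetCard r X₀, k * n.choose (k - r - 1) := Finset.sum_le_sum hper
    _ = k.choose r * (k * n.choose (k - r - 1)) := by
        rw [Finset.sum_const, card_powersetCard, (hA X₀ hX₀).2, smul_eq_mul]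
    _ ≤ (n - r).choose (k - r) := by rw [← mul_assoc]; exact hbig

theorem stmt_5 (k r : ℕ) (hrk : r < k) :
    ∃ n₀ : ℕ, ∀ n ≥ n₀, ∀ A B : Finset (Finset ℕ),
      (∀ X ∈ A, X ⊆ Finset.Icc 1 n ∧ X.card = k) →
      (∀ X ∈ B, X ⊆ Finset.Icc 1 n ∧ X.card = k) →
      (∀ X ∈ A, ∀ Y ∈ A, r ≤ (X ∩ Y).card) →
      (∀ X ∈ B, ∀ Y ∈ B, r ≤ (X ∩ Y).card) →
      (∀ X ∈ A, ∀ Y ∈ B, r + 1 ≤ (X ∩ Y).card) →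
      A.card + B.card ≤ Nat.choose (n - r) (k - r) ∧
      (A.card + B.card = Nat.choose (n - r) (k - r) → A = ∅ ∨ B = ∅) := by
  set d := k - r - 1 with hd
  set c := k.choose r * k + 2 * k.choose (r + 1) with hc
  obtain ⟨n₀, hn₀⟩ := asym c r d
  refine ⟨n₀, fun n hn A B hA hB hAA hBB hAB => ?_⟩
  have hkr : k - r = d + 1 := by omega
  have hasym : c * n.choose d < (n - r).choose (k - r) := by
    rw [hkr]; exact hn₀ n hn
  have hbig : (k.choose r * k) * n.choose (k - r - 1) ≤ (n - r).choose (k - r) := by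
    calc (k.choose r * k) * n.choose (k - r - 1) ≤ c * n.choose d := by
          rw [← hd]; exact Nat.mul_le_mul_right _ (by omega)
      _ ≤ (n - r).choose (k - r) := hasym.le
  rcases A.eq_empty_or_nonempty with rfl | ⟨X₀, hX₀⟩
  · have := frankl n k r hrk B hB hBB hbig
    simp only [Finset.card_empty, Nat.zero_add]
    exact ⟨this, fun _ => Or.inl trivial⟩
  rcases B.eq_empty_or_nonempty with rfl | ⟨Y₀, hY₀⟩
  · have := frankl n k r hrk A hA hAA hbig
    simp only [Finset.card_empty, Nat.add_zero]
    exact ⟨this, fun _ => Or.inr trivial⟩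
  -- both nonempty: strict inequality
  have hkd : k - (r + 1) = d := by omega
  have bA : A.card ≤ k.choose (r + 1) * n.choose d := by
    have := crude n k (r + 1) A Y₀ hA (fun X hX => hAB X hX Y₀ hY₀) (hB Y₀ hY₀).2
    rwa [hkd] at this
  have bB : B.card ≤ k.choose (r + 1) * n.choose d := by
    have hc2 : ∀ Y ∈ B, r + 1 ≤ (Y ∩ X₀).card := by
      intro Y hY
      rw [Finset.inter_comm]
      exact hAB X₀ hX₀ Y hY
    have := crude n k (r + 1) B X₀ hB hc2 (hA X₀ hX₀).2
    rwa [hkd] at this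
  have hlt : A.card + B.card < (n - r).choose (k - r) := by
    calc A.card + B.card ≤ 2 * k.choose (r + 1) * n.choose d := by
          rw [two_mul, add_mul]; exact Nat.add_le_add bA bB
      _ ≤ c * n.choose d := Nat.mul_le_mul_right _ (by omega)
      _ < (n - r).choose (k - r) := hasym
  exact ⟨hlt.le, fun h => absurd h hlt.ne⟩
end

section
/- Suppose F ⊆ binomial([n],k) satisfies: for any ℓ distinct members F₁,…,F_ℓ of F, ∑_{i<j} |F_i ∩ F_j| ≥ binomial(ℓ,2)(t-1) + binomial(ℓ-1,2). Suppose further that F contains a sunflower with t-element kernel T and 2k+ℓ-2 petals. Then every member F of F satisfies |F ∩ T| ≥ t-1. -/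
open Finset

lemma sum_ite_lt_const (n : ℕ) (i : Fin n) (c : ℕ) :
    (∑ j : Fin n, if i < j then c else 0) = (n - 1 - i) * c := by
  have h : univ.filter (fun j => i < j) = Ioi i := by ext j; simp
  rw [← Finset.sum_filter, h, Finset.sum_const, smul_eq_mul, Fin.card_Ioi i]

theorem stmt_6 (n k t ℓ : ℕ) (ht : 1 ≤ t) (hℓ : 3 ≤ ℓ) (hk : t + ℓ - 2 ≤ k)
    (hkn : k ≤ n)
    (F : Finset (Finset ℕ))
    (hF : ∀ A ∈ F, A ⊆ Finset.Icc 1 n ∧ A.card = k)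
    (hcond : ∀ G : Fin ℓ → Finset ℕ, Function.Injective G → (∀ i, G i ∈ F) →
      Nat.choose ℓ 2 * (t - 1) + Nat.choose (ℓ - 1) 2 ≤
        ∑ i : Fin ℓ, ∑ j : Fin ℓ, if i < j then (G i ∩ G j).card else 0)
    (T : Finset ℕ) (hT : T.card = t)
    (S : Finset (Finset ℕ)) (hSF : S ⊆ F) (hScard : S.card = 2 * k + ℓ - 2)
    (hsun : ∀ A ∈ S, ∀ B ∈ S, A ≠ B → A ∩ B = T) :
    ∀ X ∈ F, t - 1 ≤ (X ∩ T).card := by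
  intro X hX
  have hk2 : 2 ≤ k := by omega
  have hS2 : 2 ≤ S.card := by omega
  have hTsub : ∀ A ∈ S, T ⊆ A := by
    intro A hA
    obtain ⟨B, hB, hBA⟩ := S.exists_mem_ne (by omega) A
    rw [← hsun A hA B hB (Ne.symm hBA)]
    exact inter_subset_left
  set m := (X ∩ T).card with hm
  set Bad := S.filter (fun A => (X ∩ (A \ T)).Nonempty) with hBadDef
  have hBadcard : Bad.card ≤ k := by
    have hXcard : X.card = k := (hF X hX).2
    rw [← hXcard]
    apply Finset.card_le_card_of_injOn
      (fun A => if h : (X ∩ (A \ T)).Nonempty then (X ∩ (A \ T)).min' h else 0)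
    · intro A hA
      simp only [hBadDef, Finset.mem_coe, mem_filter] at hA
      dsimp only
      rw [dif_pos hA.2]
      exact (mem_inter.mp ((X ∩ (A \ T)).min'_mem hA.2)).1
    · intro A hA B hB hEq
      simp only [Finset.coe_filter, Set.mem_setOf_eq, hBadDef, mem_filter] at hA hB
      dsimp only at hEq
      rw [dif_pos hA.2, dif_pos hB.2] at hEq
      by_contra hne
      have h1 := (X ∩ (A \ T)).min'_mem hA.2
      have h2 := (X ∩ (B \ T)).min'_mem hB.2
      rw [hEq] at h1
      have h1' := mem_sdiff.mp (mem_inter.mp h1).2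
      have h2' := mem_sdiff.mp (mem_inter.mp h2).2
      have : (X ∩ (B \ T)).min' hB.2 ∈ A ∩ B := mem_inter.mpr ⟨h1'.1, h2'.1⟩
      rw [hsun A hA.1 B hB.1 hne] at this
      exact h1'.2 this
  set Good := S \ insert X Bad with hGoodDef
  have hGoodcard : ℓ - 1 ≤ Good.card := by
    have h1 : S.card - (insert X Bad).card ≤ Good.card :=
      Finset.le_card_sdiff (insert X Bad) S
    have h2 := Finset.card_insert_le X Bad
    omega
  obtain ⟨P, hPG, hPcard⟩ := Finset.exists_subset_card_eq (s := Good) (n := ℓ - 1) hGoodcard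
  have hPS : ∀ A ∈ P, A ∈ S := fun A hA => (Finset.mem_sdiff.mp (hPG hA)).1
  have hPX : ∀ A ∈ P, A ≠ X := by
    intro A hA h
    exact (Finset.mem_sdiff.mp (hPG hA)).2 (by rw [h]; exact mem_insert_self _ _)
  have hPinter : ∀ A ∈ P, X ∩ A = X ∩ T := by
    intro A hA
    have hAS := hPS A hA
    have hnotbad : ¬ (X ∩ (A \ T)).Nonempty := by
      intro h
      exact (Finset.mem_sdiff.mp (hPG hA)).2
        (mem_insert_of_mem (mem_filter.mpr ⟨hAS, h⟩))
    apply Finset.Subset.antisymm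
    · intro x hx
      obtain ⟨hxX, hxA⟩ := mem_inter.mp hx
      by_cases hxT : x ∈ T
      · exact mem_inter.mpr ⟨hxX, hxT⟩
      · exact absurd ⟨x, mem_inter.mpr ⟨hxX, mem_sdiff.mpr ⟨hxA, hxT⟩⟩⟩ hnotbad
    · exact Finset.inter_subset_inter (Finset.Subset.refl X) (hTsub A hAS)
  obtain ⟨l', rfl⟩ : ∃ l', ℓ = l' + 1 := ⟨ℓ - 1, by omega⟩
  have hPcard' : P.card = l' := by omega
  set e := P.equivFinOfCardEq hPcard' with he
  set G : Fin (l' + 1) → Finset ℕ :=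
    fun i => if h : (i : ℕ) = 0 then X
      else (e.symm ⟨(i : ℕ) - 1, by have := i.isLt; omega⟩ : Finset ℕ) with hGdef
  have hGmem : ∀ i : Fin (l' + 1), (i : ℕ) ≠ 0 → G i ∈ P := by
    intro i h
    simp only [hGdef, dif_neg h]
    exact coe_mem _
  have hG0 : ∀ i : Fin (l' + 1), (i : ℕ) = 0 → G i = X := by
    intro i h
    simp only [hGdef, dif_pos h]
  have hGinj : Function.Injective G := by
    intro i j hij
    by_cases hi : (i : ℕ) = 0 <;> by_cases hj : (j : ℕ) = 0
    · exact Fin.ext (by omega)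
    · exact absurd (hG0 i hi ▸ hij).symm (hPX _ (hGmem j hj))
    · exact absurd (hG0 j hj ▸ hij) (hPX _ (hGmem i hi))
    · simp only [hGdef, dif_neg hi, dif_neg hj] at hij
      have hv : (i : ℕ) - 1 = (j : ℕ) - 1 :=
        congrArg Fin.val (e.symm.injective (Subtype.ext hij))
      exact Fin.ext (by omega)
  have hGF : ∀ i, G i ∈ F := by
    intro i
    by_cases hi : (i : ℕ) = 0
    · rw [hG0 i hi]; exact hX
    · exact hSF (hPS _ (hGmem i hi))
  have key : ∀ i j : Fin (l' + 1), i < j →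
      (G i ∩ G j).card = if (i : ℕ) = 0 then m else t := by
    intro i j hij
    have hj : (j : ℕ) ≠ 0 := by
      have := (Fin.lt_iff_val_lt_val.mp hij)
      omega
    by_cases hi : (i : ℕ) = 0
    · rw [if_pos hi, hG0 i hi, hPinter _ (hGmem j hj)]
    · rw [if_neg hi]
      have hne : G i ≠ G j := fun h => absurd (hGinj h) (ne_of_lt hij)
      rw [hsun _ (hPS _ (hGmem i hi)) _ (hPS _ (hGmem j hj)) hne, hT]
  have hval := hcond G hGinj hGF
  have hsum : (∑ i : Fin (l' + 1), ∑ j : Fin (l' + 1),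
      if i < j then (G i ∩ G j).card else 0) = l' * m + l'.choose 2 * t := by
    have step1 : (∑ i : Fin (l' + 1), ∑ j : Fin (l' + 1),
        if i < j then (G i ∩ G j).card else 0)
        = ∑ i : Fin (l' + 1), ((l' + 1) - 1 - (i : ℕ)) * (if (i : ℕ) = 0 then m else t) := by
      refine Finset.sum_congr rfl fun i _ => ?_
      rw [← sum_ite_lt_const (l' + 1) i (if (i : ℕ) = 0 then m else t)]
      refine Finset.sum_congr rfl fun j _ => ?_
      by_cases hij : i < j
      · rw [if_pos hij, if_pos hij, key i j hij]
      · rw [if_neg hij, if_neg hij]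
    rw [step1, Fin.sum_univ_succ]
    simp only [Fin.val_zero, Fin.val_succ, if_pos rfl]
    have h2 : ∀ i : Fin l', ((l' + 1) - 1 - ((i : ℕ) + 1)) * (if (i : ℕ) + 1 = 0 then m else t)
        = (l' - 1 - (i : ℕ)) * t := by
      intro i
      rw [if_neg (by omega)]
      congr 1
      omega
    rw [Finset.sum_congr rfl fun i _ => h2 i]
    have h3 : ∑ i : Fin l', (l' - 1 - (i : ℕ)) * t = l'.choose 2 * t := by
      rw [← Finset.sum_mul]
      congr 1
      rw [Fin.sum_univ_eq_sum_range (fun j => l' - 1 - j) l',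
        Finset.sum_range_reflect (fun j => j) l', Finset.sum_range_id,
        Nat.choose_two_right]
    rw [h3]
    simp
  rw [hsum] at hval
  have hch : (l' + 1).choose 2 = l' + l'.choose 2 := by
    rw [Nat.choose_succ_succ]
    simp
  obtain ⟨t', rfl⟩ : ∃ t', t = t' + 1 := ⟨t - 1, by omega⟩
  simp only [hch, Nat.add_sub_cancel] at hval ⊢
  have hl2 : 0 < l' := by omega
  have : l' * t' ≤ l' * m := by nlinarith
  exact Nat.le_of_mul_le_mul_left this hl2
end

section
/- Suppose F ⊆ binomial([n],k) satisfies: for any ℓ distinct members F₁,…,F_ℓ of F, ∑_{i<j} |F_i ∩ F_j| ≥ binomial(ℓ,2)(t-1) + binomial(ℓ-1,2). Suppose F contains a sunflower with t-element kernel T and 2k+ℓ-2 petals, and let a ∈ T. Then any two members F, G of F with F ∩ T = G ∩ T = T ∖ {a} satisfy |F ∩ G| ≥ t + ℓ - 3; in particular |(F∖T) ∩ (G∖T)| ≥ ℓ - 2. -/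
open Finset

theorem stmt_7 (n k t ℓ : ℕ) (ht : 1 ≤ t) (hℓ : 3 ≤ ℓ) (hk : t + ℓ - 2 ≤ k)
    (hkn : k ≤ n)
    (F : Finset (Finset ℕ))
    (hF : ∀ A ∈ F, A ⊆ Finset.Icc 1 n ∧ A.card = k)
    (hcond : ∀ G : Fin ℓ → Finset ℕ, Function.Injective G → (∀ i, G i ∈ F) →
      Nat.choose ℓ 2 * (t - 1) + Nat.choose (ℓ - 1) 2 ≤
        ∑ i : Fin ℓ, ∑ j : Fin ℓ, if i < j then (G i ∩ G j).card else 0)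
    (T : Finset ℕ) (hT : T.card = t)
    (S : Finset (Finset ℕ)) (hSF : S ⊆ F) (hScard : S.card = 2 * k + ℓ - 2)
    (hsun : ∀ A ∈ S, ∀ B ∈ S, A ≠ B → A ∩ B = T)
    (a : ℕ) (ha : a ∈ T)
    (X Y : Finset ℕ) (hX : X ∈ F) (hY : Y ∈ F) (hXY : X ≠ Y)
    (hXT : X ∩ T = T.erase a) (hYT : Y ∩ T = T.erase a) :
    t + ℓ - 3 ≤ (X ∩ Y).card ∧ ℓ - 2 ≤ ((X \ T) ∩ (Y \ T)).card := by
  obtain ⟨u, rfl⟩ : ∃ u, ℓ = u + 2 := ⟨ℓ - 2, by omega⟩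
  obtain ⟨t', rfl⟩ : ∃ t', t = t' + 1 := ⟨t - 1, by omega⟩
  have hu : 1 ≤ u := by omega
  -- basic facts about the sunflower
  have hS2 : 1 < S.card := by rw [hScard]; omega
  have hTS : ∀ A ∈ S, T ⊆ A := by
    intro A hA
    obtain ⟨B, hB, hBA⟩ := Finset.exists_mem_ne hS2 A
    rw [← hsun B hB A hA hBA]
    exact inter_subset_right
  have hXS : X ∉ S := by
    intro h
    have : a ∈ X ∩ T := mem_inter.mpr ⟨hTS X h ha, ha⟩
    rw [hXT] at this
    exact (notMem_erase a T) this
  have hYS : Y ∉ S := by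
    intro h
    have : a ∈ Y ∩ T := mem_inter.mpr ⟨hTS Y h ha, ha⟩
    rw [hYT] at this
    exact (notMem_erase a T) this
  have heX : T.erase a ⊆ X := by rw [← hXT]; exact inter_subset_left
  have heY : T.erase a ⊆ Y := by rw [← hYT]; exact inter_subset_left
  -- petals avoiding X ∪ Y outside T meet X and Y exactly in T.erase a
  have key : ∀ A ∈ S, Disjoint (A \ T) (X ∪ Y) →
      A ∩ X = T.erase a ∧ A ∩ Y = T.erase a := by
    intro A hA hd
    have hTA := hTS A hA
    constructor
    · ext x
      simp only [mem_inter]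
      constructor
      · rintro ⟨hxA, hxX⟩
        by_cases hxT : x ∈ T
        · rw [← hXT]; exact mem_inter.mpr ⟨hxX, hxT⟩
        · exact absurd (Finset.disjoint_left.mp hd (mem_sdiff.mpr ⟨hxA, hxT⟩)
            (mem_union_left _ hxX)) (by simp)
      · intro hx
        exact ⟨hTA (mem_of_mem_erase hx), heX hx⟩
    · ext x
      simp only [mem_inter]
      constructor
      · rintro ⟨hxA, hxY⟩
        by_cases hxT : x ∈ T
        · rw [← hYT]; exact mem_inter.mpr ⟨hxY, hxT⟩
        · exact absurd (Finset.disjoint_left.mp hd (mem_sdiff.mpr ⟨hxA, hxT⟩)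
            (mem_union_right _ hxY)) (by simp)
      · intro hx
        exact ⟨hTA (mem_of_mem_erase hx), heY hx⟩
  -- counting: at least u petals avoid X ∪ Y outside T
  set S' := S.filter (fun A => Disjoint (A \ T) (X ∪ Y)) with hS'def
  have hS'S : S' ⊆ S := filter_subset _ _
  have hcount : (S \ S').card ≤ 2 * k := by
    have h1 : (S \ S').card ≤ (X ∪ Y).card := by
      apply Finset.card_le_card_of_injOn
        (fun A => if h : ((A \ T) ∩ (X ∪ Y)).Nonempty then h.choose else 0)
      · intro A hA
        rw [mem_coe, mem_sdiff, hS'def, mem_filter] at hA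
        have hne : ((A \ T) ∩ (X ∪ Y)).Nonempty := by
          rw [← Finset.not_disjoint_iff_nonempty_inter]
          tauto
        simp only [dif_pos hne]
        exact (mem_inter.mp hne.choose_spec).2
      · intro A hA B hB hfAB
        by_contra hAB
        simp only [mem_coe, mem_sdiff, hS'def, mem_filter] at hA hB
        have hneA : ((A \ T) ∩ (X ∪ Y)).Nonempty := by
          rw [← Finset.not_disjoint_iff_nonempty_inter]; tauto
        have hneB : ((B \ T) ∩ (X ∪ Y)).Nonempty := by
          rw [← Finset.not_disjoint_iff_nonempty_inter]; tauto
        simp only [dif_pos hneA, dif_pos hneB] at hfAB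
        have hxA := hneA.choose_spec
        have hxB := hneB.choose_spec
        rw [hfAB] at hxA
        have hxA' := mem_sdiff.mp (mem_inter.mp hxA).1
        have hxB' := mem_sdiff.mp (mem_inter.mp hxB).1
        have : hneB.choose ∈ A ∩ B := mem_inter.mpr ⟨hxA'.1, hxB'.1⟩
        rw [hsun A hA.1 B hB.1 hAB] at this
        exact hxA'.2 this
    have h2 : (X ∪ Y).card ≤ 2 * k := by
      have := Finset.card_union_le X Y
      have hXc := (hF X hX).2
      have hYc := (hF Y hY).2
      omega
    omega
  have hS'card : u ≤ S'.card := by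
    have := Finset.card_sdiff_add_card_eq_card hS'S
    omega
  obtain ⟨P, hPS', hPcard⟩ := Finset.exists_subset_card_eq hS'card
  -- enumerate the chosen petals
  let p : ℕ → Finset ℕ := fun i => if h : i < P.card then (P.equivFin.symm ⟨i, h⟩ : Finset ℕ) else ∅
  have hpP : ∀ i, i < u → p i ∈ P := by
    intro i hi
    have h : i < P.card := by omega
    simp only [p, dif_pos h]
    exact (P.equivFin.symm ⟨i, h⟩).2
  have hpinj : ∀ i, i < u → ∀ j, j < u → p i = p j → i = j := by
    intro i hi j hj h
    have h1 : i < P.card := by omega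
    have h2 : j < P.card := by omega
    simp only [p, dif_pos h1, dif_pos h2] at h
    have := P.equivFin.symm.injective (Subtype.ext h)
    exact congrArg Fin.val this
  have hpS : ∀ i, i < u → p i ∈ S := fun i hi => hS'S (hPS' (hpP i hi))
  have hpd : ∀ i, i < u → Disjoint (p i \ T) (X ∪ Y) := by
    intro i hi
    have := hPS' (hpP i hi)
    rw [hS'def, mem_filter] at this
    exact this.2
  -- the family of ℓ sets
  let g : ℕ → Finset ℕ := fun i => if i < u then p i else if i = u then X else Y
  have hg1 : ∀ i, i < u → g i = p i := fun i hi => if_pos hi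
  have hg2 : g u = X := by simp [g]
  have hg3 : g (u + 1) = Y := by
    simp only [g]
    rw [if_neg (by omega), if_neg (by omega)]
  have hgS : ∀ i, i < u → g i ∈ S := by
    intro i hi; rw [hg1 i hi]; exact hpS i hi
  have hginj : ∀ i, i ≤ u + 1 → ∀ j, j ≤ u + 1 → g i = g j → i = j := by
    intro i hi j hj h
    rcases Nat.lt_or_ge i u with h1 | h1 <;> rcases Nat.lt_or_ge j u with h2 | h2
    · exact hpinj i h1 j h2 (by rwa [hg1 i h1, hg1 j h2] at h)
    · exfalso
      have hiu : g i ∈ S := hgS i h1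
      rcases Nat.eq_or_lt_of_le h2 with h2' | h2'
    -- j = u or j = u+1
      · rw [← h2', hg2] at h; rw [h] at hiu; exact hXS hiu
      · have : j = u + 1 := by omega
        rw [this, hg3] at h; rw [h] at hiu; exact hYS hiu
    · exfalso
      have hju : g j ∈ S := hgS j h2
      rcases Nat.eq_or_lt_of_le h1 with h1' | h1'
      · rw [← h1', hg2] at h; rw [← h] at hju; exact hXS hju
      · have : i = u + 1 := by omega
        rw [this, hg3] at h; rw [← h] at hju; exact hYS hju
    · rcases Nat.eq_or_lt_of_le h1 with h1' | h1' <;> rcases Nat.eq_or_lt_of_le h2 with h2' | h2'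
      · omega
      · exfalso
        have : j = u + 1 := by omega
        rw [← h1', hg2, this, hg3] at h
        exact hXY h
      · exfalso
        have : i = u + 1 := by omega
        rw [this, hg3, ← h2', hg2] at h
        exact hXY h.symm
      · omega
  let G : Fin (u + 2) → Finset ℕ := fun i => g i.1
  have hGinj : Function.Injective G := by
    intro i j h
    exact Fin.ext (hginj i.1 (by omega) j.1 (by omega) h)
  have hGmem : ∀ i, G i ∈ F := by
    intro i
    rcases Nat.lt_or_ge i.1 u with h1 | h1
    · exact hSF (hgS i.1 h1)
    · have hi2 : i.1 < u + 2 := i.isLt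
      rcases Nat.eq_or_lt_of_le h1 with h1' | h1'
      · show g i.1 ∈ F
        rw [← h1', hg2]; exact hX
      · have : i.1 = u + 1 := by omega
        show g i.1 ∈ F
        rw [this, hg3]; exact hY
  have hmain := hcond G hGinj hGmem
  -- intersection sizes
  have hpt : ∀ i, i < u → ∀ j, j < u → i ≠ j → (g i ∩ g j).card = t' + 1 := by
    intro i hi j hj hij
    have hne : g i ≠ g j := fun h => hij (hginj i (by omega) j (by omega) h)
    rw [hsun (g i) (hgS i hi) (g j) (hgS j hj) hne, hT]
  have hcardE : (T.erase a).card = t' := by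
    rw [Finset.card_erase_of_mem ha, hT]
    omega

  have hpX : ∀ i, i < u → (g i ∩ X).card = t' := by
    intro i hi
    rw [hg1 i hi, (key (p i) (hpS i hi) (hpd i hi)).1, hcardE]
  have hpY : ∀ i, i < u → (g i ∩ Y).card = t' := by
    intro i hi
    rw [hg1 i hi, (key (p i) (hpS i hi) (hpd i hi)).2, hcardE]
  set m := (X ∩ Y).card with hm
  -- compute the double sum
  have step1 : (∑ i : Fin (u + 2), ∑ j : Fin (u + 2), if i < j then (G i ∩ G j).card else 0)
      = ∑ j ∈ range (u + 2), ∑ i ∈ range j, (g i ∩ g j).card := by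
    rw [Finset.sum_comm]
    rw [← Fin.sum_univ_eq_sum_range (fun j => ∑ i ∈ range j, (g i ∩ g j).card) (u + 2)]
    refine Finset.sum_congr rfl fun j _ => ?_
    rw [show (∑ i ∈ range j.1, (g i ∩ g j.1).card)
        = ∑ i ∈ (range (u + 2)).filter (· < j.1), (g i ∩ g j.1).card from by
      congr 1
      ext x
      simp only [mem_filter, mem_range]
      have := j.isLt
      omega]
    rw [Finset.sum_filter]
    rw [← Fin.sum_univ_eq_sum_range (fun i => if i < j.1 then (g i ∩ g j.1).card else 0) (u + 2)]
    refine Finset.sum_congr rfl fun i _ => ?_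
    rfl
  have step2 : (∑ j ∈ range (u + 2), ∑ i ∈ range j, (g i ∩ g j).card)
      = (∑ j ∈ range u, j) * (t' + 1) + u * t' + (u * t' + m) := by
    rw [Finset.sum_range_succ, Finset.sum_range_succ]
    congr 1
    · congr 1
      · rw [Finset.sum_congr rfl (g := fun j => j * (t' + 1)) (fun j hj => ?_)]
        · rw [← Finset.sum_mul]
        · rw [mem_range] at hj
          rw [Finset.sum_congr rfl (g := fun _ => t' + 1) (fun i hi => ?_),
            Finset.sum_const, card_range, smul_eq_mul]
          rw [mem_range] at hi
          exact hpt i (by omega) j hj (by omega)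
      · rw [hg2, Finset.sum_congr rfl (g := fun _ => t') (fun i hi => ?_),
          Finset.sum_const, card_range, smul_eq_mul]
        rw [mem_range] at hi
        exact hpX i hi
    · rw [hg3, Finset.sum_range_succ, hg2, ← hm]
      congr 1
      rw [Finset.sum_congr rfl (g := fun _ => t') (fun i hi => ?_),
        Finset.sum_const, card_range, smul_eq_mul]
      rw [mem_range] at hi
      exact hpY i hi
  have hsum := step1.trans step2
  rw [hsum] at hmain
  -- simplify the binomial coefficients
  have hA : (∑ j ∈ range u, j) = u.choose 2 := by
    rw [Finset.sum_range_id, Nat.choose_two_right]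
  have hB : (u + 2).choose 2 = u.choose 2 + 2 * u + 1 := by
    simp [Nat.choose_succ_succ']
    omega
  have hC : (u + 2 - 1).choose 2 = u.choose 2 + u := by
    simp [Nat.choose_succ_succ']
    omega
  rw [hA, hB, hC] at hmain
  have ht1 : t' + 1 - 1 = t' := by omega
  rw [ht1] at hmain
  -- derive the first conclusion
  have hmle : t' + u ≤ m := by nlinarith [hmain]
  constructor
  · omega
  · -- second conclusion
    have hsplit : ((X ∩ Y) \ T).card + ((X ∩ Y) ∩ T).card = (X ∩ Y).card :=
      Finset.card_sdiff_add_card_inter _ _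
    have hXYT : (X ∩ Y) ∩ T = T.erase a := by
      ext x
      simp only [mem_inter]
      constructor
      · rintro ⟨⟨hx1, _⟩, hx2⟩
        rw [← hXT]; exact mem_inter.mpr ⟨hx1, hx2⟩
      · intro hx
        exact ⟨⟨heX hx, heY hx⟩, mem_of_mem_erase hx⟩
    have heq : (X \ T) ∩ (Y \ T) = (X ∩ Y) \ T := by
      ext x
      simp only [mem_inter, mem_sdiff]
      tauto
    rw [heq]
    rw [hXYT, hcardE] at hsplit
    omega
end

section
/- Suppose F ⊆ binomial([n],k) satisfies: for any ℓ distinct members F₁,…,F_ℓ of F, ∑_{i<j} |F_i ∩ F_j| ≥ binomial(ℓ,2)(t-1) + binomial(ℓ-1,2). Suppose F contains a sunflower with t-element kernel T and 2k+ℓ-2 petals, and let a, b ∈ T with a ≠ b. Then for any F, G ∈ F with F ∩ T = T ∖ {a} and G ∩ T = T ∖ {b}, we have |(F∖T) ∩ (G∖T)| ≥ ℓ - 1. -/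
/-!
Outside the kernel the petals of a sunflower are pairwise disjoint, so at most `|X ∪ Y| ≤ 2k` of
the `2k + ℓ - 2` petals meet `X ∪ Y` outside `T`; pick `ℓ - 2` petals `A` that do not, so
`A ∩ X = T \ {a}` and `A ∩ Y = T \ {b}`. Applying the hypothesis to `X`, `Y` and these petals,
the intersection sum is `|X ∩ Y| + 2(ℓ - 2)(t - 1) + binom(ℓ - 2, 2) t` with
`|X ∩ Y| = t - 2 + |(X \ T) ∩ (Y \ T)|`, and comparing with the required bound leaves exactly
`|(X \ T) ∩ (Y \ T)| ≥ ℓ - 1`.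
-/

open Finset Function

section

variable {α : Type*} [DecidableEq α]

theorem subset_of_pairwise_inter_eq {S : Finset (Finset α)} {T A : Finset α}
    (hS : (S : Set (Finset α)).Pairwise fun A B => A ∩ B = T) (hS1 : 1 < #S) (hA : A ∈ S) :
    T ⊆ A := by
  obtain ⟨B, hB, hBA⟩ := exists_mem_ne hS1 A
  rw [← hS hA hB hBA.symm]
  exact inter_subset_left

theorem card_sub_card_le_card_filter_disjoint {S : Finset (Finset α)} {T : Finset α}
    (hS : (S : Set (Finset α)).Pairwise fun A B => A ∩ B = T) (Z : Finset α) :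
    #S - #Z ≤ #{A ∈ S | Disjoint (A \ T) Z} := by
  have hpetals : (S : Set (Finset α)).PairwiseDisjoint fun A => A \ T := by
    intro A hA B hB hAB
    rw [Function.onFun, disjoint_left]
    intro x hxA hxB
    have hx : x ∈ A ∩ B := mem_inter.mpr ⟨(mem_sdiff.mp hxA).1, (mem_sdiff.mp hxB).1⟩
    rw [hS hA hB hAB] at hx
    exact (mem_sdiff.mp hxA).2 hx
  have hmeet : #{A ∈ S | ¬Disjoint (A \ T) Z} ≤ #Z :=
    calc #{A ∈ S | ¬Disjoint (A \ T) Z}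
        ≤ #({A ∈ S | ¬Disjoint (A \ T) Z}.biUnion fun A => (A \ T) ∩ Z) :=
          card_le_card_biUnion
            (fun A hA B hB hAB => (hpetals (mem_filter.mp hA).1 (mem_filter.mp hB).1 hAB).mono
              inter_subset_left inter_subset_left)
            fun A hA => not_disjoint_iff_nonempty_inter.mp (mem_filter.mp hA).2
      _ ≤ #Z := card_le_card (biUnion_subset.mpr fun _ _ => inter_subset_right)
  have := card_filter_add_card_filter_not (s := S) fun A => Disjoint (A \ T) Z
  omega

theorem inter_eq_inter_of_disjoint_sdiff {T A X : Finset α} (hTA : T ⊆ A)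
    (hdisj : Disjoint (A \ T) X) : A ∩ X = T ∩ X := by
  ext x
  simp only [mem_inter]
  constructor
  · rintro ⟨hxA, hxX⟩
    by_contra hxT
    exact disjoint_left.mp hdisj (mem_sdiff.mpr ⟨hxA, fun h => hxT ⟨h, hxX⟩⟩) hxX
  · exact fun ⟨hxT, hxX⟩ => ⟨hTA hxT, hxX⟩

theorem exists_petals_inter_eq {S : Finset (Finset α)} {T : Finset α} (X Y : Finset α)
    (hS : (S : Set (Finset α)).Pairwise fun A B => A ∩ B = T) (hS1 : 1 < #S) {p : ℕ}
    (hp : p + #X + #Y ≤ #S) :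
    ∃ P ⊆ S, #P = p ∧ ∀ A ∈ P, A ∩ X = T ∩ X ∧ A ∩ Y = T ∩ Y := by
  have hfew := card_sub_card_le_card_filter_disjoint hS (X ∪ Y)
  have hXY := card_union_le X Y
  obtain ⟨P, hPS, hP⟩ := exists_subset_card_eq (s := {A ∈ S | Disjoint (A \ T) (X ∪ Y)}) (n := p)
    (by omega)
  refine ⟨P, fun A hA => (mem_filter.mp (hPS hA)).1, hP, fun A hA => ?_⟩
  obtain ⟨hAS, hdisj⟩ := mem_filter.mp (hPS hA)
  have hTA := subset_of_pairwise_inter_eq hS hS1 hAS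
  exact ⟨inter_eq_inter_of_disjoint_sdiff hTA (hdisj.mono_right subset_union_left),
    inter_eq_inter_of_disjoint_sdiff hTA (hdisj.mono_right subset_union_right)⟩

/-- Summed over ordered pairs, so twice the sum over unordered pairs. -/
def interCardSum (Q : Finset (Finset α)) : ℕ := ∑ A ∈ Q, ∑ B ∈ Q.erase A, #(A ∩ B)

theorem interCardSum_insert {Q : Finset (Finset α)} {X : Finset α} (hX : X ∉ Q) :
    interCardSum (insert X Q) = interCardSum Q + 2 * ∑ B ∈ Q, #(X ∩ B) := by
  have hrow : ∀ A ∈ Q, ∑ B ∈ (insert X Q).erase A, #(A ∩ B)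
      = #(X ∩ A) + ∑ B ∈ Q.erase A, #(A ∩ B) := by
    intro A hA
    rw [erase_insert_of_ne (ne_of_mem_of_not_mem hA hX).symm,
      sum_insert fun h => hX (mem_of_mem_erase h), inter_comm]
  rw [interCardSum, interCardSum, sum_insert hX, erase_insert hX, sum_congr rfl hrow,
    sum_add_distrib]
  ring

theorem interCardSum_of_pairwise_inter_eq {P : Finset (Finset α)} {T : Finset α}
    (hP : (P : Set (Finset α)).Pairwise fun A B => A ∩ B = T) :
    interCardSum P = #P * (#P - 1) * #T := by
  have hrow : ∀ A ∈ P, ∑ B ∈ P.erase A, #(A ∩ B) = (#P - 1) * #T := by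
    intro A hA
    rw [sum_congr rfl fun B hB => by rw [hP hA (mem_of_mem_erase hB) (ne_of_mem_erase hB).symm],
      sum_const, card_erase_of_mem hA, smul_eq_mul]
  rw [interCardSum, sum_congr rfl hrow, sum_const, smul_eq_mul, mul_assoc]

theorem interCardSum_insert_insert_of_inter_eq {P : Finset (Finset α)} {T X Y : Finset α}
    (hP : (P : Set (Finset α)).Pairwise fun A B => A ∩ B = T) (hX : X ∉ insert Y P) (hY : Y ∉ P)
    (hPX : ∀ A ∈ P, A ∩ X = T ∩ X) (hPY : ∀ A ∈ P, A ∩ Y = T ∩ Y) :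
    interCardSum (insert X (insert Y P))
      = #P * (#P - 1) * #T + 2 * (#P * #(T ∩ Y)) + 2 * (#(X ∩ Y) + #P * #(T ∩ X)) := by
  have hrow : ∀ Z : Finset α, (∀ A ∈ P, A ∩ Z = T ∩ Z) → ∑ B ∈ P, #(Z ∩ B) = #P * #(T ∩ Z) :=
    fun Z hZ => by rw [sum_congr rfl fun B hB => by rw [inter_comm, hZ B hB], sum_const, smul_eq_mul]
  rw [interCardSum_insert hX, sum_insert hY, interCardSum_insert hY,
    interCardSum_of_pairwise_inter_eq hP, hrow X hPX, hrow Y hPY]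

theorem two_mul_sum_lt_eq_interCardSum {ι : Type*} [Fintype ι] [LinearOrder ι]
    {G : ι → Finset α} (hG : Injective G) :
    2 * ∑ i, ∑ j, (if i < j then #(G i ∩ G j) else 0) = interCardSum (univ.image G) := by
  have hsym : ∑ i, ∑ j, (if i < j then #(G i ∩ G j) else 0)
      = ∑ i, ∑ j, (if j < i then #(G i ∩ G j) else 0) := by
    rw [sum_comm]
    simp_rw [inter_comm]
  have hrow : ∀ i, ∑ B ∈ (univ.image G).erase (G i), #(G i ∩ B)
      = ∑ j, ((if i < j then #(G i ∩ G j) else 0) + (if j < i then #(G i ∩ G j) else 0)) := by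
    intro i
    rw [← image_erase hG, sum_image hG.injOn, ← filter_ne', sum_filter]
    refine sum_congr rfl fun j _ => ?_
    rcases lt_trichotomy i j with h | rfl | h
    · simp [h, h.ne', not_lt_of_gt h]
    · simp
    · simp [h, h.ne, not_lt_of_gt h]
  rw [interCardSum, sum_image hG.injOn, sum_congr rfl fun i _ => hrow i, two_mul]
  nth_rw 2 [hsym]
  simp only [sum_add_distrib]

theorem two_mul_le_interCardSum {F Q : Finset (Finset α)} {ℓ c : ℕ} (hQF : Q ⊆ F) (hQ : #Q = ℓ)
    (hF : ∀ G : Fin ℓ → Finset α, Injective G → (∀ i, G i ∈ F) →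
      c ≤ ∑ i, ∑ j, if i < j then #(G i ∩ G j) else 0) :
    2 * c ≤ interCardSum Q := by
  set e := Q.equivFinOfCardEq hQ
  have hG : Injective fun i => (e.symm i : Finset α) :=
    Subtype.val_injective.comp e.symm.injective
  have himage : univ.image (fun i => (e.symm i : Finset α)) = Q := by
    ext A
    simp only [mem_image, mem_univ, true_and]
    exact ⟨fun ⟨i, hi⟩ => hi ▸ (e.symm i).2, fun hA => ⟨e ⟨A, hA⟩, by simp⟩⟩
  rw [← himage, ← two_mul_sum_lt_eq_interCardSum hG]
  exact Nat.mul_le_mul_left 2 (hF _ hG fun i => hQF (e.symm i).2)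

theorem card_inter_eq_of_inter_eq_erase {T X Y : Finset α} {a b : α} (ha : a ∈ T) (hb : b ∈ T)
    (hab : a ≠ b) (hXT : X ∩ T = T.erase a) (hYT : Y ∩ T = T.erase b) :
    #(X ∩ Y) = #T - 2 + #((X \ T) ∩ (Y \ T)) := by
  have hkernel : X ∩ Y ∩ T = (T.erase b).erase a := by
    rw [inter_inter_distrib_right, hXT, hYT]
    ext x; simp only [mem_inter, mem_erase]; tauto
  have houter : (X ∩ Y) \ T = (X \ T) ∩ (Y \ T) := by
    ext x; simp only [mem_inter, mem_sdiff]; tauto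
  rw [← card_inter_add_card_sdiff (X ∩ Y) T, hkernel, houter, card_erase_of_mem
    (mem_erase.mpr ⟨hab, ha⟩), card_erase_of_mem hb, Nat.sub_sub]

end

/-- The left side is twice the assumed bound, the right side twice the intersection sum of `X`,
`Y` and `ℓ - 2` petals, with `m = |(X \ T) ∩ (Y \ T)|`. -/
theorem sub_one_le_of_choose_le {ℓ t m : ℕ} (hℓ : 3 ≤ ℓ) (ht : 2 ≤ t)
    (h : 2 * (ℓ.choose 2 * (t - 1) + (ℓ - 1).choose 2) ≤
      (ℓ - 2) * (ℓ - 2 - 1) * t + 2 * ((ℓ - 2) * (t - 1))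
        + 2 * ((t - 2 + m) + (ℓ - 2) * (t - 1))) :
    ℓ - 1 ≤ m := by
  have two_mul_choose (n : ℕ) : 2 * n.choose 2 = n * (n - 1) := by
    rw [Nat.choose_two_right, Nat.mul_div_cancel' (Nat.even_mul_pred_self n).two_dvd]
  obtain ⟨L, rfl⟩ : ∃ L, ℓ = L + 3 := ⟨ℓ - 3, by omega⟩
  obtain ⟨s, rfl⟩ : ∃ s, t = s + 2 := ⟨t - 2, by omega⟩
  have h1 := two_mul_choose (L + 3)
  have h2 := two_mul_choose (L + 2)
  simp only [Nat.add_sub_cancel, show L + 3 - 1 = L + 2 by omega, show L + 3 - 2 = L + 1 by omega,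
    show L + 2 - 1 = L + 1 by omega, show s + 2 - 1 = s + 1 by omega] at h h1 h2 ⊢
  nlinarith

theorem stmt_8_general (n k t ℓ : ℕ) (hℓ : 3 ≤ ℓ) (hk : t + ℓ - 2 ≤ k)
    (F : Finset (Finset ℕ))
    (hF : ∀ A ∈ F, A ⊆ Finset.Icc 1 n ∧ A.card = k)
    (hcond : ∀ G : Fin ℓ → Finset ℕ, Function.Injective G → (∀ i, G i ∈ F) →
      Nat.choose ℓ 2 * (t - 1) + Nat.choose (ℓ - 1) 2 ≤
        ∑ i : Fin ℓ, ∑ j : Fin ℓ, if i < j then (G i ∩ G j).card else 0)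
    (T : Finset ℕ) (hT : T.card = t)
    (S : Finset (Finset ℕ)) (hSF : S ⊆ F) (hScard : S.card = 2 * k + ℓ - 2)
    (hsun : ∀ A ∈ S, ∀ B ∈ S, A ≠ B → A ∩ B = T)
    (a b : ℕ) (ha : a ∈ T) (hb : b ∈ T) (hab : a ≠ b)
    (X Y : Finset ℕ) (hX : X ∈ F) (hY : Y ∈ F)
    (hXT : X ∩ T = T.erase a) (hYT : Y ∩ T = T.erase b) :
    ℓ - 1 ≤ ((X \ T) ∩ (Y \ T)).card := by
  have hsunflower : (S : Set (Finset ℕ)).Pairwise fun A B => A ∩ B = T := hsun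
  have ht2 : 2 ≤ t :=
    hT ▸ card_pair hab ▸ card_le_card (insert_subset ha (singleton_subset_iff.mpr hb))
  have haX : a ∉ X := fun h => (mem_erase.mp (hXT ▸ mem_inter.mpr ⟨h, ha⟩)).1 rfl
  have hbY : b ∉ Y := fun h => (mem_erase.mp (hYT ▸ mem_inter.mpr ⟨h, hb⟩)).1 rfl
  have haY : a ∈ Y := (mem_inter.mp (hYT ▸ mem_erase.mpr ⟨hab, ha⟩ : a ∈ Y ∩ T)).1
  have hS1 : 1 < #S := by omega
  obtain ⟨P, hPS, hPcard, hPXY⟩ := exists_petals_inter_eq X Y hsunflower hS1 (p := ℓ - 2)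
    (by rw [(hF X hX).2, (hF Y hY).2]; omega)
  have hXP : X ∉ P := fun h => haX (subset_of_pairwise_inter_eq hsunflower hS1 (hPS h) ha)
  have hYP : Y ∉ P := fun h => hbY (subset_of_pairwise_inter_eq hsunflower hS1 (hPS h) hb)
  have hXYP : X ∉ insert Y P := by
    simp only [mem_insert, not_or]
    exact ⟨fun h => haX (h ▸ haY), hXP⟩
  have hbound := two_mul_le_interCardSum
    (insert_subset hX (insert_subset hY (hPS.trans hSF)))
    (by rw [card_insert_of_notMem hXYP, card_insert_of_notMem hYP, hPcard]; omega) hcond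
  have hTX : #(T ∩ X) = t - 1 := by rw [inter_comm, hXT, card_erase_of_mem ha, hT]
  have hTY : #(T ∩ Y) = t - 1 := by rw [inter_comm, hYT, card_erase_of_mem hb, hT]
  rw [interCardSum_insert_insert_of_inter_eq (hsunflower.mono hPS) hXYP hYP
      (fun A hA => (hPXY A hA).1) (fun A hA => (hPXY A hA).2),
    card_inter_eq_of_inter_eq_erase ha hb hab hXT hYT, hPcard, hT, hTX, hTY] at hbound
  exact sub_one_le_of_choose_le hℓ ht2 hbound

theorem stmt_8 (n k t ℓ : ℕ) (ht : 1 ≤ t) (hℓ : 3 ≤ ℓ) (hk : t + ℓ - 2 ≤ k)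
    (hkn : k ≤ n)
    (F : Finset (Finset ℕ))
    (hF : ∀ A ∈ F, A ⊆ Finset.Icc 1 n ∧ A.card = k)
    (hcond : ∀ G : Fin ℓ → Finset ℕ, Function.Injective G → (∀ i, G i ∈ F) →
      Nat.choose ℓ 2 * (t - 1) + Nat.choose (ℓ - 1) 2 ≤
        ∑ i : Fin ℓ, ∑ j : Fin ℓ, if i < j then (G i ∩ G j).card else 0)
    (T : Finset ℕ) (hT : T.card = t)
    (S : Finset (Finset ℕ)) (hSF : S ⊆ F) (hScard : S.card = 2 * k + ℓ - 2)
    (hsun : ∀ A ∈ S, ∀ B ∈ S, A ≠ B → A ∩ B = T)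
    (a b : ℕ) (ha : a ∈ T) (hb : b ∈ T) (hab : a ≠ b)
    (X Y : Finset ℕ) (hX : X ∈ F) (hY : Y ∈ F)
    (hXT : X ∩ T = T.erase a) (hYT : Y ∩ T = T.erase b) :
    ℓ - 1 ≤ ((X \ T) ∩ (Y \ T)).card :=
  stmt_8_general n k t ℓ hℓ hk F hF hcond T hT S hSF hScard hsun a b ha hb hab X Y hX hY hXT hYT
end

section
/- Suppose F ⊆ binomial([n],k) satisfies: for any ℓ distinct members F₁,…,F_ℓ of F, ∑_{i<j} |F_i ∩ F_j| ≥ binomial(ℓ,2)(t-1) + binomial(ℓ-1,2). Let G₁,…,G_m ∈ F be a maximal collection with pairwise intersections of size at most t-1, and set W = G₁ ∪ ⋯ ∪ G_m. Then every F ∈ F satisfies |F ∩ W| ≥ t. -/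
open Finset

theorem card_inter_le_card_inter_biUnion {α ι : Type*} [DecidableEq α] {s : Finset ι}
    {i : ι} (hi : i ∈ s) (H : Finset α) (G : ι → Finset α) :
    (H ∩ G i).card ≤ (H ∩ s.biUnion G).card :=
  card_le_card (inter_subset_inter_left (subset_biUnion_of_mem G hi))

theorem stmt_11_general (n k t ℓ m : ℕ) (hℓ : 3 ≤ ℓ) (hk : t + ℓ - 2 ≤ k)
    (F : Finset (Finset ℕ))
    (hF : ∀ A ∈ F, A ⊆ Finset.Icc 1 n ∧ A.card = k)
    (G : Fin m → Finset ℕ)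
    (hmax : ∀ H ∈ F, (∀ i, H ≠ G i) → ∃ i, t ≤ (H ∩ G i).card) :
    ∀ H ∈ F, t ≤ (H ∩ Finset.univ.biUnion G).card := by
  intro H hH
  suffices ∃ i, t ≤ (H ∩ G i).card by
    obtain ⟨i, hi⟩ := this
    exact hi.trans (card_inter_le_card_inter_biUnion (mem_univ i) H G)
  by_cases hold : ∃ i, H = G i
  · obtain ⟨i, rfl⟩ := hold
    refine ⟨i, ?_⟩
    rw [inter_self, (hF _ hH).2]
    omega
  · exact hmax H hH fun i hi => hold ⟨i, hi⟩

theorem stmt_11 (n k t ℓ m : ℕ) (ht : 1 ≤ t) (hℓ : 3 ≤ ℓ) (hk : t + ℓ - 2 ≤ k)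
    (hkn : k ≤ n)
    (F : Finset (Finset ℕ))
    (hF : ∀ A ∈ F, A ⊆ Finset.Icc 1 n ∧ A.card = k)
    (hcond : ∀ G : Fin ℓ → Finset ℕ, Function.Injective G → (∀ i, G i ∈ F) →
      Nat.choose ℓ 2 * (t - 1) + Nat.choose (ℓ - 1) 2 ≤
        ∑ i : Fin ℓ, ∑ j : Fin ℓ, if i < j then (G i ∩ G j).card else 0)
    (G : Fin m → Finset ℕ) (hGinj : Function.Injective G)
    (hGmem : ∀ i, G i ∈ F)
    (hGsmall : ∀ i j, i ≠ j → (G i ∩ G j).card ≤ t - 1)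
    (hmax : ∀ H ∈ F, (∀ i, H ≠ G i) → ∃ i, t ≤ (H ∩ G i).card) :
    ∀ H ∈ F, t ≤ (H ∩ Finset.univ.biUnion G).card :=
  stmt_11_general n k t ℓ m hℓ hk F hF G hmax
end

section
/- There exists n₀ such that for all n ≥ n₀ the following holds. If F ⊆ binomial([n],k) satisfies, for any ℓ distinct members F₁,…,F_ℓ, the inequality ∑_{1≤i<j≤ℓ} |F_i ∩ F_j| ≥ binomial(ℓ-1,2), then |F| ≤ binomial(n-1,k-1) + binomial(n-ℓ+1, k-ℓ+2). -/
open Finset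

lemma consSum {α : Type*} (w : α → α → ℕ) (B : α) {m : ℕ} (S : Fin m → α) :
    (∑ i : Fin (m+1), ∑ j : Fin (m+1),
      if i < j then w ((Fin.cons B S : Fin (m+1) → α) i) ((Fin.cons B S : Fin (m+1) → α) j) else 0)
    = (∑ j : Fin m, w B (S j)) +
      ∑ i : Fin m, ∑ j : Fin m, if i < j then w (S i) (S j) else 0 := by
  rw [Fin.sum_univ_succ]
  congr 1
  · rw [Fin.sum_univ_succ]
    simp [Fin.succ_pos]
  · apply Finset.sum_congr rfl
    intro i _
    rw [Fin.sum_univ_succ]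
    simp [Fin.succ_lt_succ_iff]

lemma countPairs : ∀ m : ℕ, (∑ i : Fin m, ∑ j : Fin m, if i < j then 1 else 0) = Nat.choose m 2
  | 0 => by simp
  | (m+1) => by
    have h := consSum (α := ℕ) (fun _ _ => 1) 0 (fun _ : Fin m => 0)
    simp only [h, countPairs m]
    simp [Nat.choose_succ_succ, Nat.choose_one_right, Nat.add_comm]

lemma no_disjoint_family {m : ℕ} (hm : 1 ≤ m) {F : Finset (Finset ℕ)}
    (hG : ∀ G : Fin (m+2) → Finset ℕ, Function.Injective G → (∀ i, G i ∈ F) →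
        Nat.choose (m+1) 2 ≤
          ∑ i : Fin (m+2), ∑ j : Fin (m+2), if i < j then (G i ∩ G j).card else 0)
    (s : Finset (Finset ℕ)) (hsF : s ⊆ F) (hscard : s.card = m + 2)
    (hdisj : ∀ A ∈ s, ∀ B ∈ s, A ≠ B → Disjoint A B) : False := by
  set G : Fin (m+2) → Finset ℕ := fun i => (s.equivFin.symm (Fin.cast hscard.symm i) : Finset ℕ)
    with hGdef
  have hGinj : Function.Injective G := by
    intro i j hij
    have h2 := Subtype.val_injective hij
    have h3 := s.equivFin.symm.injective h2
    exact Fin.cast_injective _ h3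
  have hGmem : ∀ i, G i ∈ s := fun i => (s.equivFin.symm (Fin.cast hscard.symm i)).2
  have hsum := hG G hGinj (fun i => hsF (hGmem i))
  have hz : (∑ i : Fin (m+2), ∑ j : Fin (m+2), if i < j then (G i ∩ G j).card else 0) = 0 := by
    apply Finset.sum_eq_zero
    intro i _
    apply Finset.sum_eq_zero
    intro j _
    by_cases h : i < j
    · rw [if_pos h, Finset.card_eq_zero, ← Finset.disjoint_iff_inter_eq_empty]
      exact hdisj _ (hGmem i) _ (hGmem j) (fun he => h.ne (hGinj he))
    · rw [if_neg h]
  rw [hz] at hsum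
  have : 0 < Nat.choose (m+1) 2 := Nat.choose_pos (by omega)
  omega

lemma exists_disjoint_family {F : Finset (Finset ℕ)} {k Δ : ℕ} (hk : 1 ≤ k)
    (hcard : ∀ A ∈ F, A.card = k)
    (hdeg : ∀ y, (F.filter (fun A => y ∈ A)).card ≤ Δ) :
    ∀ t : ℕ, t * k * Δ < F.card →
    ∃ s ⊆ F, s.card = t + 1 ∧ (∀ A ∈ s, ∀ B ∈ s, A ≠ B → Disjoint A B) := by
  intro t
  induction t with
  | zero =>
    intro hF
    obtain ⟨A, hA⟩ := Finset.card_pos.1 (by simpa using hF)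
    exact ⟨{A}, by simpa using hA, by simp, by simp⟩
  | succ t ih =>
    intro hF
    obtain ⟨s, hsF, hscard, hdisj⟩ := ih (lt_of_le_of_lt (by nlinarith) hF)
    set U : Finset ℕ := s.biUnion id with hU
    have hUcard : U.card ≤ (t+1) * k := by
      calc U.card ≤ ∑ A ∈ s, (id A).card := Finset.card_biUnion_le
        _ = ∑ A ∈ s, k := by
            apply Finset.sum_congr rfl; intro A hA; exact hcard A (hsF hA)
        _ = (t+1) * k := by rw [Finset.sum_const, hscard]; ring
    have hmeet : (F.filter (fun A => ¬ Disjoint A U)).card ≤ (t+1) * k * Δ := by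
      have hsub : F.filter (fun A => ¬ Disjoint A U) ⊆
          U.biUnion (fun y => F.filter (fun A => y ∈ A)) := by
        intro A hA
        rw [Finset.mem_filter] at hA
        obtain ⟨y, hy1, hy2⟩ := Finset.not_disjoint_iff.1 hA.2
        exact Finset.mem_biUnion.2 ⟨y, hy2, Finset.mem_filter.2 ⟨hA.1, hy1⟩⟩
      calc (F.filter (fun A => ¬ Disjoint A U)).card
          ≤ (U.biUnion (fun y => F.filter (fun A => y ∈ A))).card := Finset.card_le_card hsub
        _ ≤ ∑ y ∈ U, (F.filter (fun A => y ∈ A)).card := Finset.card_biUnion_le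
        _ ≤ ∑ y ∈ U, Δ := Finset.sum_le_sum (fun y _ => hdeg y)
        _ = U.card * Δ := by rw [Finset.sum_const, smul_eq_mul]
        _ ≤ (t+1) * k * Δ := Nat.mul_le_mul_right _ hUcard
    have hex : ∃ A ∈ F, Disjoint A U := by
      by_contra hcon
      push_neg at hcon
      have : F.filter (fun A => ¬ Disjoint A U) = F := by
        apply Finset.filter_true_of_mem
        intro A hA
        exact hcon A hA
      rw [this] at hmeet
      omega
    obtain ⟨A, hAF, hAU⟩ := hex
    have hAs : A ∉ s := by
      intro hAs
      have hAsub : A ⊆ U := Finset.subset_biUnion_of_mem id hAs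
      have hAe : A = ∅ := Finset.eq_empty_of_forall_notMem
        (fun y hy => Finset.disjoint_left.1 hAU hy (hAsub hy))
      have hc := hcard A hAF
      rw [hAe, Finset.card_empty] at hc
      omega
    refine ⟨insert A s, ?_, ?_, ?_⟩
    · exact Finset.insert_subset hAF hsF
    · rw [Finset.card_insert_of_notMem hAs, hscard]
    · intro X hX Y hY hXY
      rw [Finset.mem_insert] at hX hY
      rcases hX with rfl | hX
      · rcases hY with rfl | hY
        · exact absurd rfl hXY
        · exact Finset.disjoint_of_subset_right (Finset.subset_biUnion_of_mem id hY) hAU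
      · rcases hY with rfl | hY
        · exact (Finset.disjoint_of_subset_right (Finset.subset_biUnion_of_mem id hX) hAU).symm
        · exact hdisj X hX Y hY hXY

lemma count_fiber {F : Finset (Finset ℕ)} {n k : ℕ}
    (hF : ∀ A ∈ F, A ⊆ Finset.Icc 1 n ∧ A.card = k)
    (τ avoid : Finset ℕ) :
    (F.filter (fun A => τ ⊆ A ∧ Disjoint A avoid)).card ≤
      Nat.choose ((Finset.Icc 1 n \ (τ ∪ avoid)).card) (k - τ.card) := by
  rw [← Finset.card_powersetCard]
  apply Finset.card_le_card_of_injOn (fun A => A \ τ)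
  · intro A hA
    rw [Finset.mem_coe, Finset.mem_filter] at hA
    obtain ⟨hAF, hτA, hAav⟩ := hA
    rw [Finset.mem_coe, Finset.mem_powersetCard]
    constructor
    · intro a ha
      rw [Finset.mem_sdiff] at ha ⊢
      refine ⟨(hF A hAF).1 ha.1, ?_⟩
      rw [Finset.mem_union]
      rintro (h | h)
      · exact ha.2 h
      · exact Finset.disjoint_left.1 hAav ha.1 h
    · rw [Finset.card_sdiff_of_subset hτA, (hF A hAF).2]
  · intro A hA A' hA' h
    simp only [Finset.coe_filter, Set.mem_setOf_eq] at hA hA'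
    have e1 : A = τ ∪ (A \ τ) := by
      rw [Finset.union_sdiff_of_subset hA.2.1]
    have e2 : A' = τ ∪ (A' \ τ) := by
      rw [Finset.union_sdiff_of_subset hA'.2.1]
    rw [e1, e2]
    exact congrArg (τ ∪ ·) h

lemma count_big_inter {F₀ : Finset (Finset ℕ)} {n k : ℕ}
    (hF : ∀ A ∈ F₀, A ⊆ Finset.Icc 1 n ∧ A.card = k)
    (U : Finset ℕ) (r : ℕ)
    (hbig : ∀ A ∈ F₀, r ≤ (A ∩ U).card) :
    F₀.card ≤ Nat.choose U.card r * Nat.choose n (k - r) := by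
  classical
  set σ : Finset ℕ → Finset ℕ := fun A =>
    if h : ∃ s ⊆ A ∩ U, s.card = r then h.choose else ∅ with hσdef
  have hσspec : ∀ A ∈ F₀, σ A ⊆ A ∩ U ∧ (σ A).card = r := by
    intro A hA
    have h : ∃ s ⊆ A ∩ U, s.card = r := Finset.exists_subset_card_eq (hbig A hA)
    rw [hσdef]
    simp only [dif_pos h]
    exact h.choose_spec
  have hn : ((Finset.powersetCard r U) ×ˢ (Finset.powersetCard (k - r) (Finset.Icc 1 n))).card
      = Nat.choose U.card r * Nat.choose n (k - r) := by
    rw [Finset.card_product, Finset.card_powersetCard, Finset.card_powersetCard,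
      Nat.card_Icc]
    simp
  rw [← hn]
  apply Finset.card_le_card_of_injOn (fun A => (σ A, A \ σ A))
  · intro A hA
    obtain ⟨hsub, hcard⟩ := hσspec A hA
    rw [Finset.mem_coe, Finset.mem_product]
    constructor
    · rw [Finset.mem_powersetCard]
      exact ⟨hsub.trans Finset.inter_subset_right, hcard⟩
    · rw [Finset.mem_powersetCard]
      refine ⟨Finset.Subset.trans (Finset.sdiff_subset) (hF A hA).1, ?_⟩
      rw [Finset.card_sdiff_of_subset (hsub.trans Finset.inter_subset_left), (hF A hA).2, hcard]
  · intro A hA A' hA' h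
    simp only [Finset.mem_coe] at hA hA'
    simp only [Prod.mk.injEq] at h
    obtain ⟨h1, h2⟩ := h
    have e1 : A = σ A ∪ (A \ σ A) :=
      (Finset.union_sdiff_of_subset ((hσspec A hA).1.trans Finset.inter_subset_left)).symm
    have e2 : A' = σ A' ∪ (A' \ σ A') :=
      (Finset.union_sdiff_of_subset ((hσspec A' hA').1.trans Finset.inter_subset_left)).symm
    rw [e1, e2]
    exact congrArg₂ (· ∪ ·) h1 h2

lemma exists_petal_set {F : Finset (Finset ℕ)} {k x : ℕ}
    (hcardF : ∀ A ∈ F, A.card = k) (hk : 2 ≤ k)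
    (W : Finset ℕ) (hxW : x ∉ W) {D : ℕ}
    (hcount : ∀ y, y ≠ x → (F.filter (fun A => x ∈ A ∧ y ∈ A)).card ≤ D) :
    ∀ m : ℕ, (W.card + m * k) * D < (F.filter (fun A => x ∈ A)).card →
    ∃ P : Finset (Finset ℕ), P ⊆ F ∧ P.card = m ∧ (∀ A ∈ P, x ∈ A ∧ Disjoint A W) ∧
      (∀ A ∈ P, ∀ B ∈ P, A ≠ B → A ∩ B = {x}) := by
  intro m
  induction m with
  | zero => intro _; exact ⟨∅, by simp, by simp, by simp, by simp⟩
  | succ m ih =>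
    intro hdeg
    obtain ⟨P, hPF, hPcard, hPx, hPP⟩ := ih (lt_of_le_of_lt (by nlinarith) hdeg)
    set Y : Finset ℕ := (W ∪ P.biUnion id) \ {x} with hY
    have hYcard : Y.card ≤ W.card + m * k := by
      calc Y.card ≤ (W ∪ P.biUnion id).card := Finset.card_le_card (Finset.sdiff_subset)
        _ ≤ W.card + (P.biUnion id).card := Finset.card_union_le _ _
        _ ≤ W.card + m * k := by
            have : (P.biUnion id).card ≤ ∑ A ∈ P, (id A).card := Finset.card_biUnion_le
            have h2 : ∑ A ∈ P, (id A).card = m * k := by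
              have : ∀ A ∈ P, (id A).card = k := fun A hA => hcardF A (hPF hA)
              rw [Finset.sum_congr rfl this, Finset.sum_const, hPcard, smul_eq_mul]
            omega
    have hbad : ((F.filter (fun A => x ∈ A)).filter (fun A => ¬ Disjoint A Y)).card
        ≤ (W.card + m * k) * D := by
      have hsub : (F.filter (fun A => x ∈ A)).filter (fun A => ¬ Disjoint A Y) ⊆
          Y.biUnion (fun y => F.filter (fun A => x ∈ A ∧ y ∈ A)) := by
        intro A hA
        rw [Finset.mem_filter, Finset.mem_filter] at hA
        obtain ⟨⟨hAF, hxA⟩, hnd⟩ := hA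
        obtain ⟨y, hy1, hy2⟩ := Finset.not_disjoint_iff.1 hnd
        exact Finset.mem_biUnion.2 ⟨y, hy2, Finset.mem_filter.2 ⟨hAF, hxA, hy1⟩⟩
      calc _ ≤ (Y.biUnion (fun y => F.filter (fun A => x ∈ A ∧ y ∈ A))).card :=
            Finset.card_le_card hsub
        _ ≤ ∑ y ∈ Y, (F.filter (fun A => x ∈ A ∧ y ∈ A)).card := Finset.card_biUnion_le
        _ ≤ ∑ y ∈ Y, D := by
            apply Finset.sum_le_sum
            intro y hy
            have hyx : y ≠ x := by
              rw [hY] at hy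
              simp only [Finset.mem_sdiff, Finset.mem_singleton] at hy
              exact hy.2
            exact hcount y hyx
        _ = Y.card * D := by rw [Finset.sum_const, smul_eq_mul]
        _ ≤ (W.card + m * k) * D := Nat.mul_le_mul_right _ hYcard
    have hex : ∃ A ∈ F.filter (fun A => x ∈ A), Disjoint A Y := by
      by_contra hcon
      push_neg at hcon
      have : (F.filter (fun A => x ∈ A)).filter (fun A => ¬ Disjoint A Y)
          = F.filter (fun A => x ∈ A) := Finset.filter_true_of_mem (fun A hA => hcon A hA)
      rw [this] at hbad
      nlinarith
    obtain ⟨A, hAFx, hAY⟩ := hex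
    rw [Finset.mem_filter] at hAFx
    obtain ⟨hAF, hxA⟩ := hAFx
    have hAP : A ∉ P := by
      intro hAP
      have hsub : A \ {x} ⊆ Y := by
        intro y hy
        rw [Finset.mem_sdiff] at hy
        rw [hY, Finset.mem_sdiff]
        exact ⟨Finset.mem_union_right _ (Finset.mem_biUnion.2 ⟨A, hAP, hy.1⟩), hy.2⟩
      have h1 : A \ {x} = ∅ := Finset.eq_empty_of_forall_notMem
        (fun y hy => Finset.disjoint_left.1 hAY (Finset.mem_sdiff.1 hy).1 (hsub hy))
      have h2 : A ⊆ {x} := by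
        intro y hy
        by_contra hyx
        exact absurd (Finset.mem_sdiff.2 ⟨hy, hyx⟩) (h1 ▸ Finset.notMem_empty y)
      have h3 := Finset.card_le_card h2
      rw [hcardF A hAF, Finset.card_singleton] at h3
      omega
    have hinterx : ∀ B ∈ P, A ∩ B = {x} := by
      intro B hBP
      ext y
      simp only [Finset.mem_inter, Finset.mem_singleton]
      constructor
      · rintro ⟨hyA, hyB⟩
        by_contra hyx
        have hyY : y ∈ Y := by
          rw [hY, Finset.mem_sdiff, Finset.mem_singleton]
          exact ⟨Finset.mem_union_right _ (Finset.mem_biUnion.2 ⟨B, hBP, hyB⟩), hyx⟩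
        exact Finset.disjoint_left.1 hAY hyA hyY
      · rintro rfl
        exact ⟨hxA, (hPx B hBP).1⟩
    refine ⟨insert A P, Finset.insert_subset hAF hPF,
      by rw [Finset.card_insert_of_notMem hAP, hPcard], ?_, ?_⟩
    · intro B hB
      rw [Finset.mem_insert] at hB
      rcases hB with rfl | hB
      · refine ⟨hxA, ?_⟩
        apply Finset.disjoint_left.2
        intro y hyA hyW
        have hyY : y ∈ Y := by
          rw [hY, Finset.mem_sdiff, Finset.mem_singleton]
          exact ⟨Finset.mem_union_left _ hyW, fun h => hxW (h ▸ hyW)⟩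
        exact Finset.disjoint_left.1 hAY hyA hyY
      · exact hPx B hB
    · intro B hB C hC hBC
      rw [Finset.mem_insert] at hB hC
      rcases hB with rfl | hB
      · rcases hC with rfl | hC
        · exact absurd rfl hBC
        · exact hinterx C hC
      · rcases hC with rfl | hC
        · rw [Finset.inter_comm]; exact hinterx B hB
        · exact hPP B hB C hC hBC

lemma arith1 {c k n : ℕ} (hk : 2 ≤ k) (hn : 2 ≤ n) (h : c * (k-1) ≤ n - 1) :
    c * Nat.choose (n-2) (k-2) ≤ Nat.choose (n-1) (k-1) := by
  have hid : (n-1) * Nat.choose (n-2) (k-2) = Nat.choose (n-1) (k-1) * (k-1) := by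
    have h2 := Nat.add_one_mul_choose_eq (n-2) (k-2)
    rw [show n-2+1 = n-1 by omega, show k-2+1 = k-1 by omega] at h2
    exact h2
  have hpos : 0 < k - 1 := by omega
  apply Nat.le_of_mul_le_mul_right _ hpos
  calc c * Nat.choose (n-2) (k-2) * (k-1) = (c * (k-1)) * Nat.choose (n-2) (k-2) := by ring
    _ ≤ (n-1) * Nat.choose (n-2) (k-2) := Nat.mul_le_mul_right _ h
    _ = Nat.choose (n-1) (k-1) * (k-1) := hid

lemma arith2 {c s r g n : ℕ} (hsr : s + 1 ≤ r)
    (h1 : 2*(g+r) ≤ n) (h2 : g + r + 2^s * (Nat.factorial r * c) ≤ n) :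
    c * Nat.choose n s ≤ Nat.choose (n - g) r := by
  set q : ℕ := n - (g + r) + 1 with hq
  have hqpos : 1 ≤ q := by omega
  have hn2q : n ≤ 2 * q := by omega
  have hns : n^s ≤ 2^s * q^s := by
    calc n^s ≤ (2*q)^s := Nat.pow_le_pow_left hn2q s
      _ = 2^s * q^s := mul_pow 2 q s
  have hstep : Nat.factorial r * (c * n^s) ≤ q^(s+1) := by
    calc Nat.factorial r * (c * n^s) ≤ Nat.factorial r * (c * (2^s * q^s)) :=
          Nat.mul_le_mul_left _ (Nat.mul_le_mul_left _ hns)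
      _ = (2^s * (Nat.factorial r * c)) * q^s := by ring
      _ ≤ q * q^s := Nat.mul_le_mul_right _ (by omega)
      _ = q^(s+1) := by ring
  have hqr : q^(s+1) ≤ q^r := Nat.pow_le_pow_right hqpos hsr
  have hdesc : q^r ≤ Nat.factorial r * Nat.choose (n-g) r := by
    have he : n - g + 1 - r = q := by omega
    have h3 := Nat.pow_sub_le_descFactorial (n-g) r
    rw [he] at h3
    rwa [Nat.descFactorial_eq_factorial_mul_choose] at h3
  have hfin : Nat.factorial r * (c * Nat.choose n s) ≤ Nat.factorial r * Nat.choose (n-g) r := by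
    calc Nat.factorial r * (c * Nat.choose n s)
        ≤ Nat.factorial r * (c * n^s) :=
          Nat.mul_le_mul_left _ (Nat.mul_le_mul_left _ (Nat.choose_le_pow n s))
      _ ≤ q^(s+1) := hstep
      _ ≤ q^r := hqr
      _ ≤ _ := hdesc
  exact Nat.le_of_mul_le_mul_left hfin (Nat.factorial_pos r)

lemma arith3 {M j : ℕ} (hj : j ≤ 2) (hM : 3 ≤ M) : Nat.choose M j ≤ Nat.choose M 2 := by
  interval_cases j
  · rw [Nat.choose_zero_right]
    exact Nat.one_le_iff_ne_zero.2 (Nat.ne_of_gt (Nat.choose_pos (by omega)))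
  · rw [Nat.choose_one_right, Nat.choose_two_right]
    rw [Nat.le_div_iff_mul_le (by omega)]
    exact Nat.mul_le_mul_left M (by omega)
  · exact le_rfl

lemma kernel_or_small {F₀ : Finset (Finset ℕ)} {k m : ℕ} (hkm : m + 1 ≤ k)
    (hcard : ∀ A ∈ F₀, A.card = k)
    (hint : ∀ A ∈ F₀, ∀ B ∈ F₀, A ≠ B → m ≤ (A ∩ B).card)
    {A₀ : Finset ℕ} (hA₀ : A₀ ∈ F₀) :
    (∃ τ, τ.card = m ∧ τ ⊆ A₀ ∧ ∀ B ∈ F₀, τ ⊆ B) ∨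
    (∃ U : Finset ℕ, U.card ≤ k + Nat.choose k m * k ∧ ∀ C ∈ F₀, m+1 ≤ (C ∩ U).card) := by
  classical
  by_cases hker : ∃ τ ∈ Finset.powersetCard m A₀, ∀ B ∈ F₀, τ ⊆ B
  · obtain ⟨τ, hτ, hτall⟩ := hker
    rw [Finset.mem_powersetCard] at hτ
    exact Or.inl ⟨τ, hτ.2, hτ.1, hτall⟩
  · push_neg at hker
    set v : Finset ℕ → Finset ℕ := fun τ =>
      if h : ∃ B ∈ F₀, ¬ τ ⊆ B then h.choose else ∅ with hv
    have hvspec : ∀ τ ∈ Finset.powersetCard m A₀, v τ ∈ F₀ ∧ ¬ τ ⊆ v τ := by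
      intro τ hτ
      obtain ⟨B, hB1, hB2⟩ := hker τ hτ
      have h : ∃ B ∈ F₀, ¬ τ ⊆ B := ⟨B, hB1, hB2⟩
      rw [hv]; simp only [dif_pos h]
      exact h.choose_spec
    set U : Finset ℕ := A₀ ∪ (Finset.powersetCard m A₀).biUnion v with hU
    refine Or.inr ⟨U, ?_, ?_⟩
    · calc U.card ≤ A₀.card + ((Finset.powersetCard m A₀).biUnion v).card :=
          Finset.card_union_le _ _
        _ ≤ k + Nat.choose k m * k := by
          have h1 : ((Finset.powersetCard m A₀).biUnion v).card
              ≤ ∑ τ ∈ Finset.powersetCard m A₀, (v τ).card := Finset.card_biUnion_le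
          have h2 : ∑ τ ∈ Finset.powersetCard m A₀, (v τ).card
              = Nat.choose k m * k := by
            have : ∀ τ ∈ Finset.powersetCard m A₀, (v τ).card = k :=
              fun τ hτ => hcard _ (hvspec τ hτ).1
            rw [Finset.sum_congr rfl this, Finset.sum_const, smul_eq_mul,
              Finset.card_powersetCard, hcard A₀ hA₀]
          have h3 := hcard A₀ hA₀
          omega
    · intro C hC
      by_cases hCA : C = A₀
      · subst hCA
        have : C ∩ U = C := by
          rw [Finset.inter_eq_left, hU]
          exact Finset.subset_union_left
        rw [this, hcard C hC]
        omega
      · have hm := hint C hC A₀ hA₀ hCA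
        obtain ⟨τ, hτsub, hτcard⟩ := Finset.exists_subset_card_eq hm
        have hτA₀ : τ ⊆ A₀ := hτsub.trans Finset.inter_subset_right
        have hτC : τ ⊆ C := hτsub.trans Finset.inter_subset_left
        by_cases hbig : m + 1 ≤ (C ∩ A₀).card
        · calc m + 1 ≤ (C ∩ A₀).card := hbig
            _ ≤ (C ∩ U).card := by
                apply Finset.card_le_card
                refine Finset.inter_subset_inter (Finset.Subset.refl C) ?_
                rw [hU]
                exact Finset.subset_union_left
        · -- C ∩ A₀ = τ
          have hCA₀ : C ∩ A₀ = τ := by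
            refine (Finset.eq_of_subset_of_card_le hτsub ?_).symm
            omega
          have hτmem : τ ∈ Finset.powersetCard m A₀ :=
            Finset.mem_powersetCard.2 ⟨hτA₀, hτcard⟩
          obtain ⟨hBF, hBτ⟩ := hvspec τ hτmem
          set B : Finset ℕ := v τ
          have hCB : C ≠ B := fun h => hBτ (h ▸ hτC)
          have hmB := hint C hC B hBF hCB
          have hCBA : C ∩ B ∩ A₀ ⊆ τ ∩ B := by
            intro z hz
            simp only [Finset.mem_inter] at hz ⊢
            exact ⟨hCA₀ ▸ Finset.mem_inter.2 ⟨hz.1.1, hz.2⟩, hz.1.2⟩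
          have hτB : (τ ∩ B).card < m := by
            obtain ⟨a, haτ, haB⟩ := Finset.not_subset.1 hBτ
            have hss : τ ∩ B ⊂ τ := by
              refine Finset.ssubset_iff_of_subset Finset.inter_subset_left |>.2 ?_
              exact ⟨a, haτ, fun h => haB (Finset.mem_inter.1 h).2⟩
            have := Finset.card_lt_card hss
            omega
          have hz : ∃ z ∈ C ∩ B, z ∉ A₀ := by
            by_contra hcon
            push_neg at hcon
            have : C ∩ B ⊆ τ ∩ B := by
              intro z hzmem
              exact hCBA (Finset.mem_inter.2 ⟨hzmem, hcon z hzmem⟩)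
            have := Finset.card_le_card this
            omega
          obtain ⟨z, hzCB, hzA₀⟩ := hz
          have hzτ : z ∉ τ := fun h => hzA₀ (hτA₀ h)
          have hins : insert z τ ⊆ C ∩ U := by
            intro w hw
            rw [Finset.mem_insert] at hw
            rcases hw with rfl | hw
            · refine Finset.mem_inter.2 ⟨(Finset.mem_inter.1 hzCB).1, ?_⟩
              rw [hU]
              refine Finset.mem_union_right _ ?_
              exact Finset.mem_biUnion.2 ⟨τ, hτmem, (Finset.mem_inter.1 hzCB).2⟩
            · exact Finset.mem_inter.2 ⟨hτC hw, hU ▸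
                Finset.mem_union_left _ (hτA₀ hw)⟩
          calc m + 1 = (insert z τ).card := by
                rw [Finset.card_insert_of_notMem hzτ, hτcard]
            _ ≤ (C ∩ U).card := Finset.card_le_card hins
lemma pair_bound {m : ℕ} {F : Finset (Finset ℕ)}
    (hG : ∀ G : Fin (m+2) → Finset ℕ, Function.Injective G → (∀ i, G i ∈ F) →
        Nat.choose (m+1) 2 ≤
          ∑ i : Fin (m+2), ∑ j : Fin (m+2), if i < j then (G i ∩ G j).card else 0)
    {B B' : Finset ℕ} {x : ℕ} (hB : B ∈ F) (hB' : B' ∈ F) (hne : B ≠ B')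
    (hxB : x ∉ B) (hxB' : x ∉ B')
    (S : Fin m → Finset ℕ) (hSF : ∀ i, S i ∈ F) (hxS : ∀ i, x ∈ S i)
    (hScard : ∀ i, 2 ≤ (S i).card)
    (hSS : ∀ i j, i ≠ j → S i ∩ S j = {x})
    (hSB : ∀ i, Disjoint (S i) B) (hSB' : ∀ i, Disjoint (S i) B') :
    m ≤ (B ∩ B').card := by
  have hSinj : Function.Injective S := by
    intro i j hij
    by_contra hij'
    have h1 : S i ∩ S j = {x} := hSS i j hij'
    rw [hij, Finset.inter_self] at h1
    have := hScard j
    rw [h1] at this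
    simp at this
  have hxSne : ∀ i, S i ≠ B ∧ S i ≠ B' := by
    intro i
    constructor
    · intro h
      exact (Finset.disjoint_left.1 (hSB i)) (hxS i) (h ▸ hxS i)
    · intro h
      exact (Finset.disjoint_left.1 (hSB' i)) (hxS i) (h ▸ hxS i)
  set G : Fin (m+2) → Finset ℕ := Fin.cons B (Fin.cons B' S) with hGdef
  have hGinj : Function.Injective G := by
    apply Fin.cons_injective_of_injective
    · rw [Fin.range_cons]
      rintro (h | ⟨i, rfl⟩)
      · exact hne (Set.mem_singleton_iff.1 h)
      · exact (hxSne _).1 rfl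
    · apply Fin.cons_injective_of_injective
      · rintro ⟨i, rfl⟩
        exact (hxSne _).2 rfl
      · exact hSinj
  have hGF : ∀ i, G i ∈ F := by
    intro i
    refine Fin.cases ?_ (fun j => ?_) i
    · exact hB
    · refine Fin.cases ?_ (fun j' => ?_) j <;> simp [hGdef, hB', hSF]
  have hsum := hG G hGinj hGF
  have e1 : (∑ i : Fin (m+2), ∑ j : Fin (m+2), if i < j then (G i ∩ G j).card else 0)
      = (B ∩ B').card + Nat.choose m 2 := by
    rw [hGdef]
    rw [consSum (fun a b => (a ∩ b).card) B (Fin.cons B' S)]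
    rw [consSum (fun a b => (a ∩ b).card) B' S]
    rw [Fin.sum_univ_succ]
    have hz1 : ∀ j : Fin m, (B ∩ S j).card = 0 := by
      intro j
      rw [Finset.card_eq_zero, ← Finset.disjoint_iff_inter_eq_empty]
      exact (hSB j).symm
    have hz2 : ∀ j : Fin m, (B' ∩ S j).card = 0 := by
      intro j
      rw [Finset.card_eq_zero, ← Finset.disjoint_iff_inter_eq_empty]
      exact (hSB' j).symm
    have hpet : (∑ i : Fin m, ∑ j : Fin m, if i < j then ((S i) ∩ (S j)).card else 0)
        = Nat.choose m 2 := by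
      rw [← countPairs m]
      apply Finset.sum_congr rfl
      intro i _
      apply Finset.sum_congr rfl
      intro j _
      by_cases h : i < j
      · simp only [if_pos h, hSS i j h.ne, Finset.card_singleton]
      · simp [h]
    simp only [Fin.cons_zero, Fin.cons_succ, hz1, hz2, hpet]
    simp
  rw [e1] at hsum
  have : Nat.choose (m+1) 2 = m + Nat.choose m 2 := by
    rw [Nat.choose_succ_succ]
    simp [Nat.choose_one_right]
  omega
theorem stmt_12 (k ℓ : ℕ) (hℓ : 3 ≤ ℓ) (hk : ℓ - 2 ≤ k) :
    ∃ n₀ : ℕ, ∀ n ≥ n₀, ∀ F : Finset (Finset ℕ),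
      (∀ A ∈ F, A ⊆ Finset.Icc 1 n ∧ A.card = k) →
      (∀ G : Fin ℓ → Finset ℕ, Function.Injective G → (∀ i, G i ∈ F) →
        Nat.choose (ℓ - 1) 2 ≤
          ∑ i : Fin ℓ, ∑ j : Fin ℓ, if i < j then (G i ∩ G j).card else 0) →
      F.card ≤ Nat.choose (n - 1) (k - 1) +
        Nat.choose (n - ℓ + 1) (k - ℓ + 2) := by
  classical
  obtain ⟨m, rfl⟩ : ∃ m, ℓ = m + 2 := ⟨ℓ - 2, by omega⟩
  have hm : 1 ≤ m := by omega
  have hkm : m ≤ k := by omega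
  set c₁ : ℕ := (m+1)*(m+2)*k*k + (m+1)*(m+2)*k with hc₁
  set c₂ : ℕ := Nat.choose (k + Nat.choose k m * k) (m+1) with hc₂
  set r : ℕ := k - (m+2) + 2 with hr
  set s : ℕ := k - (m+1) with hs
  refine ⟨(k + m + 10) + (c₁*(k-1) + 1) + 2*((m+1)+r)
      + ((m+1) + r + 2^s*(Nat.factorial r * c₂)), ?_⟩
  intro n hn F hF hG
  have hG' : ∀ G : Fin (m+2) → Finset ℕ, Function.Injective G → (∀ i, G i ∈ F) →
      Nat.choose (m+1) 2 ≤
        ∑ i : Fin (m+2), ∑ j : Fin (m+2), if i < j then (G i ∩ G j).card else 0 := by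
    intro G h1 h2
    have h3 := hG G h1 h2
    rwa [show m + 2 - 1 = m + 1 by omega] at h3
  -- special case k = 1
  by_cases hk1 : k ≤ 1
  · have hk1' : k = 1 := by omega
    have hm1 : m = 1 := by omega
    have hFle : F.card ≤ 2 := by
      by_contra hcon
      push_neg at hcon
      obtain ⟨s3, hs3F, hs3card⟩ := Finset.exists_subset_card_eq
        (show m + 2 ≤ F.card by omega)
      refine no_disjoint_family hm hG' s3 hs3F hs3card ?_
      intro A hA B hB hAB
      obtain ⟨a, ha⟩ := Finset.card_eq_one.1 (by rw [(hF A (hs3F hA)).2]; omega)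
      obtain ⟨b, hb⟩ := Finset.card_eq_one.1 (by rw [(hF B (hs3F hB)).2]; omega)
      subst ha; subst hb
      rw [Finset.disjoint_singleton]
      intro h
      exact hAB (by rw [h])
    have h1 : 1 ≤ Nat.choose (n-1) (k-1) := by
      rw [hk1']
      simp
    have h2 : 1 ≤ Nat.choose (n - (m+2) + 1) r :=
      Nat.choose_pos (by omega)
    omega
  push_neg at hk1
  -- general case, k ≥ 2
  set D : ℕ := Nat.choose (n-2) (k-2) with hDdef
  set D₁ : ℕ := (m+2)*k*D with hD₁
  by_cases hcase : ∀ y, (F.filter (fun A => y ∈ A)).card ≤ D₁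
  · -- Case I : all degrees small
    have hbound : F.card ≤ (m+1) * k * D₁ := by
      by_contra hcon
      push_neg at hcon
      obtain ⟨s3, hs3F, hs3card, hs3disj⟩ := exists_disjoint_family (by omega)
        (fun A hA => (hF A hA).2) hcase (m+1) hcon
      exact no_disjoint_family hm hG' s3 hs3F hs3card hs3disj
    have hDpos : 1 ≤ D := Nat.choose_pos (by omega)
    have hle1 : (m+1) * k * D₁ ≤ c₁ * D := by
      have e1 : (m+1) * k * D₁ = ((m+1)*(m+2)*k*k) * D := by rw [hD₁]; ring
      rw [e1, hc₁]
      exact Nat.mul_le_mul_right D (Nat.le_add_right _ _)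
    have hle2 : c₁ * D ≤ Nat.choose (n-1) (k-1) := by
      rw [hDdef]
      exact arith1 hk1 (by omega) (by omega)
    have := le_trans hbound (le_trans hle1 hle2)
    exact le_trans this (Nat.le_add_right _ _)
  · -- Case II : some x has large degree
    push_neg at hcase
    obtain ⟨x, hx⟩ := hcase
    have hxIcc : x ∈ Finset.Icc 1 n := by
      obtain ⟨A, hA⟩ := Finset.card_pos.1 (show 0 < (F.filter (fun A => x ∈ A)).card by omega)
      rw [Finset.mem_filter] at hA
      exact (hF A hA.1).1 hA.2
    have hcount : ∀ y, y ≠ x → (F.filter (fun A => x ∈ A ∧ y ∈ A)).card ≤ D := by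
      intro y hyx
      by_cases hy : y ∈ Finset.Icc 1 n
      · have hsub : F.filter (fun A => x ∈ A ∧ y ∈ A) ⊆
            F.filter (fun A => ({x, y} : Finset ℕ) ⊆ A ∧ Disjoint A ∅) := by
          intro A hA
          rw [Finset.mem_filter] at hA ⊢
          refine ⟨hA.1, ?_, Finset.disjoint_empty_right A⟩
          rw [Finset.insert_subset_iff, Finset.singleton_subset_iff]
          exact hA.2
        have h1 := le_trans (Finset.card_le_card hsub) (count_fiber hF {x, y} ∅)
        have hxy : ({x, y} : Finset ℕ).card = 2 := by
          rw [Finset.card_insert_of_notMem (by simp [Ne.symm hyx]), Finset.card_singleton]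
        have hsubIcc : ({x, y} : Finset ℕ) ⊆ Finset.Icc 1 n := by
          rw [Finset.insert_subset_iff, Finset.singleton_subset_iff]
          exact ⟨hxIcc, hy⟩
        have hcard1 : (Finset.Icc 1 n \ ({x, y} ∪ ∅)).card = n - 2 := by
          rw [Finset.union_empty, Finset.card_sdiff_of_subset hsubIcc, Nat.card_Icc, hxy]
          omega
        rw [hcard1, hxy] at h1
        exact h1
      · have : F.filter (fun A => x ∈ A ∧ y ∈ A) = ∅ := by
          rw [Finset.filter_eq_empty_iff]
          intro A hA hcon2
          exact hy ((hF A hA).1 hcon2.2)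
        rw [this, Finset.card_empty]
        exact Nat.zero_le D
    have hFx : (F.filter (fun A => x ∈ A)).card ≤ Nat.choose (n-1) (k-1) := by
      have hsub : F.filter (fun A => x ∈ A) ⊆
          F.filter (fun A => ({x} : Finset ℕ) ⊆ A ∧ Disjoint A ∅) := by
        intro A hA
        rw [Finset.mem_filter] at hA ⊢
        exact ⟨hA.1, Finset.singleton_subset_iff.2 hA.2, Finset.disjoint_empty_right A⟩
      have h1 := le_trans (Finset.card_le_card hsub) (count_fiber hF {x} ∅)
      have hcard1 : (Finset.Icc 1 n \ ({x} ∪ ∅)).card = n - 1 := by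
        rw [Finset.union_empty, Finset.card_sdiff_of_subset (Finset.singleton_subset_iff.2 hxIcc),
          Nat.card_Icc, Finset.card_singleton]
        omega
      rw [hcard1, Finset.card_singleton] at h1
      exact h1
    set F₀ : Finset (Finset ℕ) := F.filter (fun A => x ∉ A) with hF₀def
    have hsplit := Finset.card_filter_add_card_filter_not
      (s := F) (p := fun A => x ∈ A)
    have hclaim : ∀ B ∈ F₀, ∀ B' ∈ F₀, B ≠ B' → m ≤ (B ∩ B').card := by
      intro B hB B' hB' hne
      rw [hF₀def, Finset.mem_filter] at hB hB'
      set W : Finset ℕ := B ∪ B' with hW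
      have hxW : x ∉ W := by
        rw [hW, Finset.mem_union]
        rintro (h | h)
        · exact hB.2 h
        · exact hB'.2 h
      have hWcard : W.card ≤ 2*k := by
        calc W.card ≤ B.card + B'.card := Finset.card_union_le _ _
          _ ≤ 2*k := by rw [(hF B hB.1).2, (hF B' hB'.1).2]; omega
      obtain ⟨P, hPF, hPcard, hPx, hPP⟩ := exists_petal_set
        (fun A hA => (hF A hA).2) hk1 W hxW hcount m
        (lt_of_le_of_lt (show (W.card + m*k)*D ≤ D₁ by rw [hD₁]; nlinarith) hx)
      set S : Fin m → Finset ℕ :=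
        fun i => (P.equivFin.symm (Fin.cast hPcard.symm i) : Finset ℕ) with hS
      have hSmem : ∀ i, S i ∈ P := fun i => (P.equivFin.symm (Fin.cast hPcard.symm i)).2
      have hSne : ∀ i j, i ≠ j → S i ≠ S j := by
        intro i j hij heq
        exact hij (Fin.cast_injective _
          (P.equivFin.symm.injective (Subtype.val_injective heq)))
      exact pair_bound hG' hB.1 hB'.1 hne hB.2 hB'.2 S
        (fun i => hPF (hSmem i))
        (fun i => (hPx _ (hSmem i)).1)
        (fun i => by rw [(hF _ (hPF (hSmem i))).2]; omega)
        (fun i j hij => hPP _ (hSmem i) _ (hSmem j) (hSne i j hij))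
        (fun i => (Finset.disjoint_union_right.1 (hPx _ (hSmem i)).2).1)
        (fun i => (Finset.disjoint_union_right.1 (hPx _ (hSmem i)).2).2)
    have hF₀le : F₀.card ≤ Nat.choose (n - (m+2) + 1) r := by
      by_cases htriv : F₀.card ≤ 1
      · exact le_trans htriv (Nat.choose_pos (by omega))
      · push_neg at htriv
        have hk' : m + 1 ≤ k := by
          by_contra hcon
          have hkm' : k = m := by omega
          obtain ⟨B, hB, B', hB', hne⟩ := Finset.one_lt_card.1 htriv
          have h1 := hclaim B hB B' hB' hne
          have hBk : B.card = k := (hF B (Finset.mem_filter.1 hB).1).2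
          have hB'k : B'.card = k := (hF B' (Finset.mem_filter.1 hB').1).2
          have h2 : B ∩ B' = B := by
            apply Finset.eq_of_subset_of_card_le Finset.inter_subset_left
            omega
          have h3 : B ⊆ B' := by
            rw [← h2]
            exact Finset.inter_subset_right
          exact hne (Finset.eq_of_subset_of_card_le h3 (by omega))
        obtain ⟨A₀, hA₀⟩ := Finset.card_pos.1 (show 0 < F₀.card by omega)
        rcases kernel_or_small hk'
          (fun A hA => (hF A (Finset.mem_filter.1 hA).1).2) hclaim hA₀ with
          ⟨τ, hτcard, hτA₀, hτall⟩ | ⟨U, hUcard, hUall⟩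
        · -- kernel case
          have hxA₀ : x ∉ A₀ := (Finset.mem_filter.1 hA₀).2
          have hxτ : x ∉ τ := fun h => hxA₀ (hτA₀ h)
          have hsub : F₀ ⊆ F.filter (fun A => τ ⊆ A ∧ Disjoint A {x}) := by
            intro B hB
            have hB' := Finset.mem_filter.1 hB
            rw [Finset.mem_filter]
            exact ⟨hB'.1, hτall B hB, Finset.disjoint_singleton_right.2 hB'.2⟩
          have h1 := le_trans (Finset.card_le_card hsub) (count_fiber hF τ {x})
          have hτIcc : τ ∪ {x} ⊆ Finset.Icc 1 n := by
            apply Finset.union_subset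
            · exact hτA₀.trans (hF A₀ (Finset.mem_filter.1 hA₀).1).1
            · exact Finset.singleton_subset_iff.2 hxIcc
          have hcard1 : (Finset.Icc 1 n \ (τ ∪ {x})).card = n - (m+1) := by
            rw [Finset.card_sdiff_of_subset hτIcc, Nat.card_Icc,
              Finset.card_union_of_disjoint (Finset.disjoint_singleton_right.2 hxτ),
              hτcard, Finset.card_singleton]
            omega
          rw [hcard1, hτcard, show n - (m+1) = n - (m+2) + 1 by omega] at h1
          refine le_trans h1 ?_
          by_cases hk2 : m + 2 ≤ k
          · rw [show k - m = r by omega]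
          · rw [show k - m = 1 by omega, show r = 2 by omega]
            exact arith3 (by omega) (by omega)
        · -- no kernel: small case
          have h1 := count_big_inter
            (fun A hA => hF A (Finset.mem_filter.1 hA).1) U (m+1) hUall
          have h2 : Nat.choose U.card (m+1) ≤ c₂ := by
            rw [hc₂]
            exact Nat.choose_le_choose _ hUcard
          have h3 : F₀.card ≤ c₂ * Nat.choose n s := by
            rw [hs]
            exact le_trans h1 (Nat.mul_le_mul_right _ h2)
          refine le_trans h3 ?_
          rw [show n - (m+2) + 1 = n - (m+1) by omega]
          exact arith2 (by omega) (by omega) (by omega)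
    calc F.card = (F.filter (fun A => x ∈ A)).card + F₀.card := by
          rw [hF₀def]; exact hsplit.symm
      _ ≤ Nat.choose (n-1) (k-1) + Nat.choose (n - (m+2) + 1) r :=
          Nat.add_le_add hFx hF₀le
end

section
/- There exists n₀ such that for all n ≥ n₀ the following holds. If F ⊆ binomial([n],k) satisfies, for any ℓ distinct members F₁,…,F_ℓ, the inequality ∑_{1≤i<j≤ℓ} |F_i ∩ F_j| ≥ binomial(ℓ,2)(t-1) + binomial(ℓ-1,2), then |F| ≤ binomial(n-t,k-t) + binomial(n-t-ℓ+2, k-t-ℓ+3). -/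
open Finset

private def SS (m : ℕ) (G : Fin m → Finset ℕ) : ℕ :=
  ∑ i : Fin m, ∑ j : Fin m, if i < j then (G i ∩ G j).card else 0

private lemma SS_cons (m : ℕ) (B : Finset ℕ) (A : Fin m → Finset ℕ) :
    SS (m+1) (Fin.cons B A) = (∑ i : Fin m, (B ∩ A i).card) + SS m A := by
  unfold SS
  rw [Fin.sum_univ_succ]
  congr 1
  · rw [Fin.sum_univ_succ]
    simp [Fin.succ_pos]
  · apply Finset.sum_congr rfl
    intro i _
    rw [Fin.sum_univ_succ]
    simp [Fin.succ_lt_succ_iff]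

private lemma SS_bound (m : ℕ) (G : Fin m → Finset ℕ) (c : ℕ)
    (h : ∀ i j, i ≠ j → (G i ∩ G j).card ≤ c) : SS m G ≤ c * Nat.choose m 2 := by
  induction m with
  | zero => simp [SS]
  | succ m ih =>
    rw [← Fin.cons_self_tail G, SS_cons]
    have h1 : (∑ i : Fin m, (G 0 ∩ Fin.tail G i).card) ≤ m * c := by
      calc (∑ i : Fin m, (G 0 ∩ Fin.tail G i).card) ≤ ∑ _i : Fin m, c := by
            apply Finset.sum_le_sum
            intro i _
            exact h 0 i.succ (Fin.succ_ne_zero i).symm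
        _ = m * c := by simp [mul_comm]
    have h2 : SS m (Fin.tail G) ≤ c * Nat.choose m 2 := by
      apply ih
      intro i j hij
      exact h i.succ j.succ (fun hh => hij (Fin.succ_injective _ hh))
    have h3 : Nat.choose (m+1) 2 = m + Nat.choose m 2 := by
      rw [Nat.choose_succ_succ m 1, Nat.choose_one_right]
    rw [h3]
    calc (∑ i : Fin m, (G 0 ∩ Fin.tail G i).card) + SS m (Fin.tail G)
        ≤ m * c + c * Nat.choose m 2 := Nat.add_le_add h1 h2
      _ = c * (m + Nat.choose m 2) := by ring

private lemma count_sub (U R : Finset ℕ) (k : ℕ) (F' : Finset (Finset ℕ))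
    (h : ∀ A ∈ F', A ⊆ U ∧ A.card = k ∧ R ⊆ A) :
    F'.card ≤ (U.card - R.card).choose (k - R.card) := by
  rcases F'.eq_empty_or_nonempty with rfl | ⟨A₀, hA₀⟩
  · simp
  have hRU : R ⊆ U := (h A₀ hA₀).2.2.trans (h A₀ hA₀).1
  have : F'.card ≤ ((U \ R).powersetCard (k - R.card)).card := by
    apply Finset.card_le_card_of_injOn (fun A => A \ R)
    · intro A hA
      rw [Finset.mem_coe, Finset.mem_powersetCard]
      obtain ⟨hAU, hAk, hRA⟩ := h A hA
      exact ⟨Finset.sdiff_subset_sdiff hAU (Finset.Subset.refl R),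
        by rw [Finset.card_sdiff_of_subset hRA, hAk]⟩
    · intro A hA B hB hAB
      obtain ⟨_, _, hRA⟩ := h A hA
      obtain ⟨_, _, hRB⟩ := h B hB
      have := congrArg (fun s => s ∪ R) hAB
      simpa [Finset.sdiff_union_of_subset hRA, Finset.sdiff_union_of_subset hRB] using this
  rwa [Finset.card_powersetCard, Finset.card_sdiff_of_subset hRU] at this

private lemma count_meet (U R Z : Finset ℕ) (k : ℕ) (F' : Finset (Finset ℕ))
    (h : ∀ A ∈ F', A ⊆ U ∧ A.card = k ∧ R ⊆ A ∧ ((A \ R) ∩ Z).Nonempty) :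
    F'.card ≤ Z.card * (U.card - R.card - 1).choose (k - R.card - 1) := by
  classical
  have hcov : F' ⊆ Z.biUnion (fun x => F'.filter (fun A => x ∈ A \ R)) := by
    intro A hA
    obtain ⟨x, hx⟩ := (h A hA).2.2.2
    rw [Finset.mem_inter] at hx
    exact Finset.mem_biUnion.2 ⟨x, hx.2, Finset.mem_filter.2 ⟨hA, hx.1⟩⟩
  calc F'.card ≤ (Z.biUnion (fun x => F'.filter (fun A => x ∈ A \ R))).card :=
        Finset.card_le_card hcov
    _ ≤ ∑ x ∈ Z, (F'.filter (fun A => x ∈ A \ R)).card := Finset.card_biUnion_le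
    _ ≤ ∑ _x ∈ Z, (U.card - R.card - 1).choose (k - R.card - 1) := by
        apply Finset.sum_le_sum
        intro x _
        rcases (F'.filter (fun A => x ∈ A \ R)).eq_empty_or_nonempty with he | ⟨A₁, hA₁⟩
        · rw [he]; simp
        · have hx₁ := (Finset.mem_filter.1 hA₁).2
          rw [Finset.mem_sdiff] at hx₁
          have hxR : x ∉ R := hx₁.2
          have := count_sub U (insert x R) k (F'.filter (fun A => x ∈ A \ R)) ?_
          · rwa [Finset.card_insert_of_notMem hxR, Nat.sub_add_eq, Nat.sub_add_eq] at this
          · intro A hA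
            rw [Finset.mem_filter, Finset.mem_sdiff] at hA
            obtain ⟨hAF, hxA, _⟩ := hA
            obtain ⟨h1, h2, h3⟩ := h A hAF
            exact ⟨h1, h2, Finset.insert_subset hxA h3.1⟩
    _ = Z.card * (U.card - R.card - 1).choose (k - R.card - 1) := by
        rw [Finset.sum_const, smul_eq_mul]

private lemma grow_choose (M b n' : ℕ) (hb : 1 ≤ b) (h : M * b ≤ n') (hbn : b ≤ n') :
    M * (n' - 1).choose (b - 1) ≤ n'.choose b := by
  rcases Nat.eq_zero_or_pos M with rfl | hM
  · simp
  have hn' : 1 ≤ n' := le_trans hb hbn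
  have key : n' * (n' - 1).choose (b - 1) = n'.choose b * b := by
    have := Nat.add_one_mul_choose_eq (n' - 1) (b - 1)
    rw [Nat.sub_add_cancel hn', Nat.sub_add_cancel hb] at this
    exact this
  have : M * (n' - 1).choose (b - 1) * b ≤ n'.choose b * b := by
    calc M * (n' - 1).choose (b - 1) * b = (M * b) * (n' - 1).choose (b - 1) := by ring
      _ ≤ n' * (n' - 1).choose (b - 1) := Nat.mul_le_mul_right _ h
      _ = n'.choose b * b := key
  exact Nat.le_of_mul_le_mul_right this (by omega)

private lemma step_choose (M c m : ℕ) (h : M * (c + 1) + c ≤ m) :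
    M * m.choose c ≤ m.choose (c + 1) := by
  have key := Nat.choose_succ_right_eq m c
  have h2 : M * m.choose c * (c + 1) ≤ m.choose (c + 1) * (c + 1) := by
    calc M * m.choose c * (c + 1) = (M * (c + 1)) * m.choose c := by ring
      _ ≤ (m - c) * m.choose c := Nat.mul_le_mul_right _ (by omega)
      _ = m.choose c * (m - c) := by ring
      _ = m.choose (c + 1) * (c + 1) := key.symm
  exact Nat.le_of_mul_le_mul_right h2 (by omega)

private lemma chain_choose (m c e : ℕ) (hce : c ≤ e) (h : 2 * e ≤ m) :
    m.choose c ≤ m.choose e := by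
  induction e with
  | zero => simp_all
  | succ e ih =>
    rcases Nat.lt_or_ge c (e + 1) with hlt | hge
    · have : m.choose c ≤ m.choose e := ih (by omega) (by omega)
      refine this.trans (Nat.choose_le_succ_of_lt_half_left ?_)
      omega
    · have : c = e + 1 := by omega
      rw [this]

private lemma generic_family (n k t : ℕ) (U : Finset ℕ) (hU : U.card = n)
    (F : Finset (Finset ℕ)) (hF : ∀ A ∈ F, A ⊆ U ∧ A.card = k)
    (T : Finset ℕ) (hT : T.card = t) (htk : t < k) :
    ∀ (m : ℕ) (Z : Finset ℕ), [DecidablePred (fun A => T ⊆ A)] →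
    (Z.card + m * k) * (n - t - 1).choose (k - t - 1)
        < (F.filter (fun A => T ⊆ A)).card →
    ∃ A : Fin m → Finset ℕ,
      (∀ i, A i ∈ F ∧ T ⊆ A i ∧ (A i \ T) ∩ Z = ∅) ∧
      (∀ i j, i ≠ j → A i ∩ A j = T) := by
  classical
  intro m
  induction m with
  | zero =>
    intro Z _ _
    exact ⟨fun i => i.elim0, fun i => i.elim0, fun i _ _ => i.elim0⟩
  | succ m ih =>
    intro Z _ hcard
    obtain ⟨A', hA'mem, hA'pair⟩ := ih Z (by
      refine lt_of_le_of_lt (Nat.mul_le_mul_right _ ?_) hcard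
      have : m * k ≤ (m+1) * k := Nat.mul_le_mul_right k (by omega)
      omega)
    set FT := F.filter (fun A => T ⊆ A) with hFT
    set Z' := Z ∪ (Finset.univ : Finset (Fin m)).biUnion (fun i => A' i \ T) with hZ'
    have hZ'card : Z'.card ≤ Z.card + m * k := by
      calc Z'.card ≤ Z.card + ((Finset.univ : Finset (Fin m)).biUnion (fun i => A' i \ T)).card :=
            Finset.card_union_le _ _
        _ ≤ Z.card + ∑ i : Fin m, (A' i \ T).card := by
            exact Nat.add_le_add_left Finset.card_biUnion_le _
        _ ≤ Z.card + ∑ _i : Fin m, k := by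
            refine Nat.add_le_add_left (Finset.sum_le_sum fun i _ => ?_) _
            calc (A' i \ T).card ≤ (A' i).card := Finset.card_le_card (Finset.sdiff_subset)
              _ = k := (hF _ (hA'mem i).1).2
        _ = Z.card + m * k := by simp [mul_comm]
    set bad := FT.filter (fun A => ((A \ T) ∩ Z').Nonempty) with hbad
    have hbadcard : bad.card ≤ (Z.card + m * k) * (n - t - 1).choose (k - t - 1) := by
      have := count_meet U T Z' k bad (fun A hA => by
        rw [hbad, Finset.mem_filter, hFT, Finset.mem_filter] at hA
        exact ⟨(hF A hA.1.1).1, (hF A hA.1.1).2, hA.1.2, hA.2⟩)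
      rw [hU, hT] at this
      calc bad.card ≤ Z'.card * (n - t - 1).choose (k - t - 1) := this
        _ ≤ (Z.card + m * k) * (n - t - 1).choose (k - t - 1) :=
            Nat.mul_le_mul_right _ hZ'card
    have hbadlt : bad.card < FT.card := lt_of_le_of_lt
      (hbadcard.trans (Nat.mul_le_mul_right _ (by
        have : m * k ≤ (m+1) * k := Nat.mul_le_mul_right k (by omega)
        omega))) hcard
    have : ¬ FT ⊆ bad := fun hsub => absurd (Finset.card_le_card hsub) (not_le.2 hbadlt)
    obtain ⟨A₀, hA₀FT, hA₀bad⟩ := Finset.not_subset.1 this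
    have hA₀F : A₀ ∈ F := (Finset.mem_filter.1 hA₀FT).1
    have hTA₀ : T ⊆ A₀ := (Finset.mem_filter.1 hA₀FT).2
    have hA₀Z' : (A₀ \ T) ∩ Z' = ∅ := by
      by_contra hne
      exact hA₀bad (Finset.mem_filter.2 ⟨hA₀FT, Finset.nonempty_iff_ne_empty.2 hne⟩)
    refine ⟨Fin.cons A₀ A', ?_, ?_⟩
    · intro i
      refine Fin.cases ?_ ?_ i
      · refine ⟨hA₀F, hTA₀, ?_⟩
        simp only [Fin.cons_zero]
        have hZZ' : Z ⊆ Z' := Finset.subset_union_left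
        have : (A₀ \ T) ∩ Z ⊆ (A₀ \ T) ∩ Z' := Finset.inter_subset_inter (le_refl _) hZZ'
        rw [hA₀Z'] at this
        exact Finset.subset_empty.1 this
      · intro j
        simpa using hA'mem j
    · have key : ∀ j', A₀ ∩ A' j' = T := by
        intro j'
        apply Finset.Subset.antisymm
        · intro x hx
          rw [Finset.mem_inter] at hx
          by_contra hxT
          have hx1 : x ∈ A₀ \ T := Finset.mem_sdiff.2 ⟨hx.1, hxT⟩
          have hx2 : x ∈ Z' := by
            rw [hZ']
            refine Finset.mem_union_right _ (Finset.mem_biUnion.2 ⟨j', Finset.mem_univ _, ?_⟩)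
            exact Finset.mem_sdiff.2 ⟨hx.2, hxT⟩
          have : x ∈ (A₀ \ T) ∩ Z' := Finset.mem_inter.2 ⟨hx1, hx2⟩
          rw [hA₀Z'] at this
          exact absurd this (Finset.notMem_empty x)
        · exact Finset.subset_inter hTA₀ (hA'mem j').2.1
      intro i j hij
      rcases Fin.eq_zero_or_eq_succ i with rfl | ⟨i', rfl⟩
      · rcases Fin.eq_zero_or_eq_succ j with rfl | ⟨j', rfl⟩
        · exact absurd rfl hij
        · simpa using key j'
      · rcases Fin.eq_zero_or_eq_succ j with rfl | ⟨j', rfl⟩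
        · rw [Finset.inter_comm]; simpa using key i'
        · simpa using hA'pair i' j' (fun h => hij (congrArg Fin.succ h))

theorem stmt_13 (t k ℓ : ℕ) (ht : 1 ≤ t) (hℓ : 3 ≤ ℓ) (hk : t + ℓ - 2 ≤ k) :
    ∃ n₀ : ℕ, ∀ n ≥ n₀, ∀ F : Finset (Finset ℕ),
      (∀ A ∈ F, A ⊆ Finset.Icc 1 n ∧ A.card = k) →
      (∀ G : Fin ℓ → Finset ℕ, Function.Injective G → (∀ i, G i ∈ F) →
        Nat.choose ℓ 2 * (t - 1) + Nat.choose (ℓ - 1) 2 ≤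
          ∑ i : Fin ℓ, ∑ j : Fin ℓ, if i < j then (G i ∩ G j).card else 0) →
      F.card ≤ Nat.choose (n - t) (k - t) +
        Nat.choose (n - t - ℓ + 2) (k - t - ℓ + 3) := by
  classical
  obtain ⟨c, rfl⟩ : ∃ c, ℓ = c + 3 := ⟨ℓ - 3, by omega⟩
  obtain ⟨t', rfl⟩ : ∃ t', t = t' + 1 := ⟨t - 1, by omega⟩
  have hk' : t' + c + 2 ≤ k := by omega
  -- constants
  refine ⟨(k+1) * ((c+2) * (1 + Nat.choose k (t'+1) * (2*k + (c+3)*k)))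
      + (k+1) * (k * Nat.choose k (t'+c+1) + t' + k + 5)
      + 10*k + t' + c + 100, ?_⟩
  intro n hn F hF hG
  set M₁ := (c+2) * (1 + Nat.choose k (t'+1) * (2*k + (c+3)*k)) with hM₁def
  set M₂ := k * Nat.choose k (t'+c+1) + t' + k + 5 with hM₂def
  have hnk : k + t' + c + 10 ≤ n := by
    have h1 : 10 * k ≤ 10 * k := le_refl _
    omega
  set U := Finset.Icc 1 n with hUdef
  have hU : U.card = n := by rw [hUdef, Nat.card_Icc]; omega
  have hC'pos : 1 ≤ (n - (t'+1) - 1).choose (k - (t'+1) - 1) :=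
    Nat.choose_pos (by omega)
  by_cases hrich : ∃ T : Finset ℕ, T.card = t' + 1 ∧
      (2*k + (c+3)*k) * (n - (t'+1) - 1).choose (k - (t'+1) - 1)
        < (F.filter (fun A => T ⊆ A)).card
  · -- rich case
    obtain ⟨T, hTc, hTrich⟩ := hrich
    set FT := F.filter (fun A => T ⊆ A) with hFTdef
    set E := F.filter (fun A => ¬ T ⊆ A) with hEdef
    have hTU : T ⊆ U := by
      have hpos : 0 < FT.card := lt_of_le_of_lt (Nat.zero_le _) hTrich
      obtain ⟨A₀, hA₀⟩ := Finset.card_pos.1 hpos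
      exact (Finset.mem_filter.1 hA₀).2.trans (hF _ (Finset.mem_filter.1 hA₀).1).1
    have hstar : FT.card ≤ (n - (t'+1)).choose (k - (t'+1)) := by
      have hc := count_sub U T k FT (fun A hA => by
        obtain ⟨hAF, hTA⟩ := Finset.mem_filter.1 hA
        exact ⟨(hF A hAF).1, (hF A hAF).2, hTA⟩)
      rwa [hU, hTc] at hc
    -- every member of E meets T in exactly t' points
    have hE1 : ∀ B ∈ E, (B ∩ T).card = t' := by
      intro B hBE
      have hBF : B ∈ F := (Finset.mem_filter.1 hBE).1
      have hTB : ¬ T ⊆ B := (Finset.mem_filter.1 hBE).2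
      have hle : (B ∩ T).card ≤ t' := by
        have hss : B ∩ T ⊂ T := by
          refine Finset.ssubset_iff_subset_ne.2 ⟨Finset.inter_subset_right, ?_⟩
          intro heq
          exact hTB (by rw [← heq]; exact Finset.inter_subset_left)
        have := Finset.card_lt_card hss
        omega
      have hthr : (B.card + (c+2) * k) * (n - (t'+1) - 1).choose (k - (t'+1) - 1)
          < (F.filter (fun A => T ⊆ A)).card := by
        refine lt_of_le_of_lt (Nat.mul_le_mul_right _ ?_) hTrich
        have hBk : B.card = k := (hF B hBF).2
        have he : (c+2)*k + k = (c+3)*k := by ring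
        omega
      obtain ⟨A, hAmem, hApair⟩ :=
        generic_family n k (t'+1) U hU F hF T hTc (by omega) (c+2) B hthr
      have hAinj : Function.Injective A := by
        intro i j hij
        by_contra hne
        have h1 := hApair i j hne
        rw [hij, Finset.inter_self] at h1
        have h2 : (A j).card = k := (hF _ (hAmem j).1).2
        rw [h1, hTc] at h2
        omega
      have hGinj : Function.Injective (Fin.cons B A : Fin (c+2+1) → Finset ℕ) := by
        rw [Fin.cons_injective_iff]
        constructor
        · rintro ⟨i, hi⟩
          exact hTB (hi ▸ (hAmem i).2.1)
        · exact hAinj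
      have hGF : ∀ i, (Fin.cons B A : Fin (c+2+1) → Finset ℕ) i ∈ F :=
        fun i => Fin.cases hBF (fun j => (hAmem j).1) i
      have hM := hG (Fin.cons B A : Fin (c+3) → Finset ℕ) hGinj hGF
      have hMval : Nat.choose (c+3) 2 * (t'+1-1) + Nat.choose (c+3-1) 2
          = Nat.choose (c+3) 2 * t' + Nat.choose (c+2) 2 := by congr 2 <;> omega
      rw [hMval] at hM
      have hsum1 : (∑ i : Fin (c+2), (B ∩ A i).card) ≤ (c+2) * (B ∩ T).card := by
        calc (∑ i : Fin (c+2), (B ∩ A i).card) ≤ ∑ _i : Fin (c+2), (B ∩ T).card := by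
              refine Finset.sum_le_sum fun i _ => Finset.card_le_card ?_
              intro x hx
              rw [Finset.mem_inter] at hx ⊢
              refine ⟨hx.1, ?_⟩
              by_contra hxT
              have hx1 : x ∈ (A i \ T) ∩ B :=
                Finset.mem_inter.2 ⟨Finset.mem_sdiff.2 ⟨hx.2, hxT⟩, hx.1⟩
              rw [(hAmem i).2.2] at hx1
              exact absurd hx1 (Finset.notMem_empty x)
          _ = (c+2) * (B ∩ T).card := by simp [mul_comm]
      have hSSA : SS (c+2) A ≤ (t'+1) * Nat.choose (c+2) 2 := by
        apply SS_bound
        intro i j hij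
        rw [hApair i j hij, hTc]
      have hM2 : Nat.choose (c+3) 2 * t' + Nat.choose (c+2) 2
          ≤ (c+2) * (B ∩ T).card + (t'+1) * Nat.choose (c+2) 2 := by
        have hM' : Nat.choose (c+3) 2 * t' + Nat.choose (c+2) 2
            ≤ SS (c+2+1) (Fin.cons B A) := hM
        rw [SS_cons] at hM'
        exact le_trans hM' (Nat.add_le_add hsum1 hSSA)
      have hsplitc : Nat.choose (c+3) 2 = (c+2) + Nat.choose (c+2) 2 := by
        have h := Nat.choose_succ_succ (c+2) 1
        simpa [Nat.choose_one_right] using h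
      rw [hsplitc] at hM2
      have e2 : ((c+2) + Nat.choose (c+2) 2) * t' + Nat.choose (c+2) 2
          = (c+2)*t' + (Nat.choose (c+2) 2 * t' + Nat.choose (c+2) 2) := by ring
      have e3 : (c+2) * (B ∩ T).card + (t'+1) * Nat.choose (c+2) 2
          = (c+2) * (B ∩ T).card + (Nat.choose (c+2) 2 * t' + Nat.choose (c+2) 2) := by ring
      rw [e2, e3] at hM2
      have hM3 : (c+2) * t' ≤ (c+2) * (B ∩ T).card := by omega
      have hfin : t' ≤ (B ∩ T).card := Nat.le_of_mul_le_mul_left hM3 (by omega)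
      omega
    -- pairwise intersections in E are large
    have hE2 : ∀ B₁ ∈ E, ∀ B₂ ∈ E, B₁ ≠ B₂ → t' + c + 1 ≤ (B₁ ∩ B₂).card := by
      intro B₁ hB₁E B₂ hB₂E hne
      have hB₁F : B₁ ∈ F := (Finset.mem_filter.1 hB₁E).1
      have hB₂F : B₂ ∈ F := (Finset.mem_filter.1 hB₂E).1
      have hTB₁ : ¬ T ⊆ B₁ := (Finset.mem_filter.1 hB₁E).2
      have hTB₂ : ¬ T ⊆ B₂ := (Finset.mem_filter.1 hB₂E).2
      have hthr : ((B₁ ∪ B₂).card + (c+1) * k) * (n - (t'+1) - 1).choose (k - (t'+1) - 1)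
          < (F.filter (fun A => T ⊆ A)).card := by
        refine lt_of_le_of_lt (Nat.mul_le_mul_right _ ?_) hTrich
        have hBk : (B₁ ∪ B₂).card ≤ 2 * k := by
          have h1 := Finset.card_union_le B₁ B₂
          have h2 : B₁.card = k := (hF _ hB₁F).2
          have h3 : B₂.card = k := (hF _ hB₂F).2
          omega
        have he : (c+1)*k + 2*k = (c+3)*k := by ring
        omega
      obtain ⟨A, hAmem, hApair⟩ :=
        generic_family n k (t'+1) U hU F hF T hTc (by omega) (c+1) (B₁ ∪ B₂) hthr
      have hAinj : Function.Injective A := by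
        intro i j hij
        by_contra hne2
        have h1 := hApair i j hne2
        rw [hij, Finset.inter_self] at h1
        have h2 : (A j).card = k := (hF _ (hAmem j).1).2
        rw [h1, hTc] at h2
        omega
      have hGinj : Function.Injective
          (Fin.cons B₁ (Fin.cons B₂ A) : Fin (c+1+1+1) → Finset ℕ) := by
        rw [Fin.cons_injective_iff]
        constructor
        · rintro ⟨i, hi⟩
          rcases Fin.eq_zero_or_eq_succ i with rfl | ⟨i', rfl⟩
          · simp only [Fin.cons_zero] at hi
            exact hne hi.symm
          · simp only [Fin.cons_succ] at hi
            exact hTB₁ (hi ▸ (hAmem i').2.1)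
        · rw [Fin.cons_injective_iff]
          constructor
          · rintro ⟨i, hi⟩
            exact hTB₂ (hi ▸ (hAmem i).2.1)
          · exact hAinj
      have hGF : ∀ i, (Fin.cons B₁ (Fin.cons B₂ A) : Fin (c+1+1+1) → Finset ℕ) i ∈ F :=
        fun i => Fin.cases hB₁F (fun j => Fin.cases hB₂F (fun j' => (hAmem j').1) j) i
      have hM := hG (Fin.cons B₁ (Fin.cons B₂ A) : Fin (c+3) → Finset ℕ) hGinj hGF
      have hMval : Nat.choose (c+3) 2 * (t'+1-1) + Nat.choose (c+3-1) 2
          = Nat.choose (c+3) 2 * t' + Nat.choose (c+2) 2 := by congr 2 <;> omega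
      rw [hMval] at hM
      have hMeet : ∀ (Bz : Finset ℕ), Bz = B₁ ∨ Bz = B₂ → ∀ i, (Bz ∩ A i).card ≤ t' := by
        intro Bz hBz i
        have hBzE : Bz ∈ E := by rcases hBz with rfl | rfl <;> assumption
        have hBzT : (Bz ∩ T).card = t' := hE1 Bz hBzE
        rw [← hBzT]
        refine Finset.card_le_card ?_
        intro x hx
        rw [Finset.mem_inter] at hx ⊢
        refine ⟨hx.1, ?_⟩
        by_contra hxT
        have hxU : x ∈ B₁ ∪ B₂ := by
          rcases hBz with rfl | rfl
          · exact Finset.mem_union_left _ hx.1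
          · exact Finset.mem_union_right _ hx.1
        have hx1 : x ∈ (A i \ T) ∩ (B₁ ∪ B₂) :=
          Finset.mem_inter.2 ⟨Finset.mem_sdiff.2 ⟨hx.2, hxT⟩, hxU⟩
        rw [(hAmem i).2.2] at hx1
        exact absurd hx1 (Finset.notMem_empty x)
      have hsum1 : (∑ i : Fin (c+2), (B₁ ∩ (Fin.cons B₂ A : Fin (c+2) → Finset ℕ) i).card)
          ≤ (B₁ ∩ B₂).card + (c+1) * t' := by
        rw [Fin.sum_univ_succ]
        simp only [Fin.cons_zero, Fin.cons_succ]
        refine Nat.add_le_add_left ?_ _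
        calc (∑ i : Fin (c+1), (B₁ ∩ A i).card) ≤ ∑ _i : Fin (c+1), t' :=
              Finset.sum_le_sum fun i _ => hMeet B₁ (Or.inl rfl) i
          _ = (c+1) * t' := by simp [mul_comm]
      have hsum2 : (∑ i : Fin (c+1), (B₂ ∩ A i).card) ≤ (c+1) * t' := by
        calc (∑ i : Fin (c+1), (B₂ ∩ A i).card) ≤ ∑ _i : Fin (c+1), t' :=
              Finset.sum_le_sum fun i _ => hMeet B₂ (Or.inr rfl) i
          _ = (c+1) * t' := by simp [mul_comm]
      have hSSA : SS (c+1) A ≤ (t'+1) * Nat.choose (c+1) 2 := by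
        apply SS_bound
        intro i j hij
        rw [hApair i j hij, hTc]
      have hM2 : Nat.choose (c+3) 2 * t' + Nat.choose (c+2) 2
          ≤ ((B₁ ∩ B₂).card + (c+1) * t') + ((c+1) * t' + (t'+1) * Nat.choose (c+1) 2) := by
        have hM' : Nat.choose (c+3) 2 * t' + Nat.choose (c+2) 2
            ≤ SS (c+2+1) (Fin.cons B₁ (Fin.cons B₂ A : Fin (c+2) → Finset ℕ)) := hM
        rw [SS_cons] at hM'
        have hM'' : SS (c+2) (Fin.cons B₂ A : Fin (c+2) → Finset ℕ)
            = (∑ i : Fin (c+1), (B₂ ∩ A i).card) + SS (c+1) A := SS_cons (c+1) B₂ A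
        rw [hM''] at hM'
        exact le_trans hM' (Nat.add_le_add hsum1 (Nat.add_le_add hsum2 hSSA))
      have hsplit2 : Nat.choose (c+2) 2 = (c+1) + Nat.choose (c+1) 2 := by
        have h := Nat.choose_succ_succ (c+1) 1
        simpa [Nat.choose_one_right] using h
      have hsplit3 : Nat.choose (c+3) 2 = (c+2) + Nat.choose (c+2) 2 := by
        have h := Nat.choose_succ_succ (c+2) 1
        simpa [Nat.choose_one_right] using h
      rw [hsplit3, hsplit2] at hM2
      set Y := Nat.choose (c+1) 2 with hYdef
      set q := (B₁ ∩ B₂).card with hqdef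
      have e4 : ((c+2) + ((c+1) + Y)) * t' + ((c+1) + Y)
          = ((c+1)*t' + t' + (c+1)) + ((c+1)*t' + (Y*t' + Y)) := by ring
      have e5 : (q + (c+1) * t') + ((c+1) * t' + (t'+1) * Y)
          = (q + (c+1)*t') + ((c+1)*t' + (Y*t' + Y)) := by ring
      rw [e4, e5] at hM2
      omega
    -- bound on E
    have hEbound : E.card ≤ (n - (t'+1) - (c+3) + 2).choose (k - (t'+1) - (c+3) + 3) := by
      rcases E.eq_empty_or_nonempty with hEe | ⟨A₀, hA₀E⟩
      · rw [hEe]; simp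
      set s := t' + c + 1 with hsdef
      set m' := n - (t'+1) - (c+3) + 2 with hm'def
      set e := k - (t'+1) - (c+3) + 3 with hedef
      have hks : k - s ≤ e := by omega
      have h2e : 2 * e ≤ m' := by omega
      by_cases hcore : ∃ S : Finset ℕ, S.card = s ∧ ∀ B ∈ E, S ⊆ B
      · obtain ⟨S, hScard, hSsub⟩ := hcore
        by_cases hST : (S ∩ T).card = t'
        · have hTSc : (T \ S).card = 1 := by
            have h := Finset.card_sdiff_add_card_inter T S
            rw [Finset.inter_comm] at h
            omega
          have hcount := count_sub (U \ (T \ S)) S k E ?_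
          · have hTSU : T \ S ⊆ U := (Finset.sdiff_subset).trans hTU
            rw [Finset.card_sdiff_of_subset hTSU, hU, hTSc, hScard] at hcount
            have hrw : n - 1 - s = m' := by omega
            rw [hrw] at hcount
            exact le_trans hcount (chain_choose m' (k - s) e hks h2e)
          · intro B hBE
            have hBF : B ∈ F := (Finset.mem_filter.1 hBE).1
            have hBTeq : S ∩ T = B ∩ T := by
              apply Finset.eq_of_subset_of_card_le
              · exact Finset.inter_subset_inter (hSsub B hBE) (Finset.Subset.refl T)
              · rw [hE1 B hBE, ← hST]
            refine ⟨?_, (hF B hBF).2, hSsub B hBE⟩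
            rw [Finset.subset_sdiff]
            refine ⟨(hF B hBF).1, ?_⟩
            rw [Finset.disjoint_left]
            intro x hxB hxTS
            rw [Finset.mem_sdiff] at hxTS
            have hx1 : x ∈ B ∩ T := Finset.mem_inter.2 ⟨hxB, hxTS.1⟩
            rw [← hBTeq] at hx1
            exact hxTS.2 (Finset.mem_inter.1 hx1).1
        · have hcount := count_meet U S (T \ S) k E ?_
          · rw [hU, hScard] at hcount
            have hrw : n - s - 1 = m' := by omega
            rw [hrw] at hcount
            have hTS : (T \ S).card ≤ t' + 1 :=
              le_trans (Finset.card_le_card Finset.sdiff_subset) (le_of_eq hTc)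
            have hstep : (t'+1) * m'.choose (k - s - 1) ≤ m'.choose (k - s - 1 + 1) := by
              apply step_choose
              have h1 : (t'+1) * ((k - s - 1) + 1) ≤ (t'+1) * (k+1) :=
                Nat.mul_le_mul_left _ (by omega)
              have h2 : (t'+1) * (k+1) ≤ M₂ * (k+1) := Nat.mul_le_mul_right _ (by omega)
              have h4 : M₂ * (k+1) = (k+1) * M₂ := by ring
              omega
            have hrw2 : k - s - 1 + 1 = k - s := by omega
            rw [hrw2] at hstep
            calc E.card ≤ (T \ S).card * m'.choose (k - s - 1) := hcount
              _ ≤ (t'+1) * m'.choose (k - s - 1) := Nat.mul_le_mul_right _ hTS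
              _ ≤ m'.choose (k - s) := hstep
              _ ≤ m'.choose e := chain_choose m' (k-s) e hks h2e
          · intro B hBE
            have hBF : B ∈ F := (Finset.mem_filter.1 hBE).1
            refine ⟨(hF B hBF).1, (hF B hBF).2, hSsub B hBE, ?_⟩
            have hne : ((B ∩ T) \ S).Nonempty := by
              rw [Finset.sdiff_nonempty]
              intro hsub2
              have h1 : B ∩ T ⊆ S ∩ T := Finset.subset_inter hsub2 Finset.inter_subset_right
              have h2 : S ∩ T ⊆ B ∩ T :=
                Finset.inter_subset_inter (hSsub B hBE) (Finset.Subset.refl T)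
              have h3 : S ∩ T = B ∩ T := Finset.Subset.antisymm h2 h1
              rw [h3, hE1 B hBE] at hST
              exact hST rfl
            obtain ⟨x, hx⟩ := hne
            rw [Finset.mem_sdiff, Finset.mem_inter] at hx
            refine ⟨x, ?_⟩
            rw [Finset.mem_inter, Finset.mem_sdiff, Finset.mem_sdiff]
            exact ⟨⟨hx.1.1, hx.2⟩, hx.1.2, hx.2⟩
      · push_neg at hcore
        have hA₀F : A₀ ∈ F := (Finset.mem_filter.1 hA₀E).1
        have hA₀k : A₀.card = k := (hF _ hA₀F).2
        have hcov2 : E ⊆ insert A₀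
            ((A₀.powersetCard s).biUnion (fun S => E.filter (fun B => S ⊆ B))) := by
          intro B hBE
          rcases eq_or_ne B A₀ with rfl | hne
          · exact Finset.mem_insert_self _ _
          · have hint : s ≤ (B ∩ A₀).card := hE2 B hBE A₀ hA₀E hne
            obtain ⟨S, hSsub, hScard⟩ := Finset.exists_subset_card_eq hint
            refine Finset.mem_insert_of_mem (Finset.mem_biUnion.2 ⟨S, ?_, ?_⟩)
            · exact Finset.mem_powersetCard.2
                ⟨hSsub.trans Finset.inter_subset_right, hScard⟩
            · exact Finset.mem_filter.2 ⟨hBE, hSsub.trans Finset.inter_subset_left⟩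
        have hper : ∀ S ∈ A₀.powersetCard s,
            (E.filter (fun B => S ⊆ B)).card ≤ k * m'.choose (k - s - 1) := by
          intro S hS
          obtain ⟨hSA₀, hScard⟩ := Finset.mem_powersetCard.1 hS
          obtain ⟨Bw, hBwE, hBwnS⟩ := hcore S hScard
          have hcount := count_meet U S (Bw \ S) k (E.filter (fun B => S ⊆ B)) ?_
          · rw [hU, hScard] at hcount
            have hrw : n - s - 1 = m' := by omega
            rw [hrw] at hcount
            refine le_trans hcount (Nat.mul_le_mul_right _ ?_)
            calc (Bw \ S).card ≤ Bw.card := Finset.card_le_card Finset.sdiff_subset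
              _ = k := (hF _ (Finset.mem_filter.1 hBwE).1).2
          · intro B hBf
            obtain ⟨hBE, hSB⟩ := Finset.mem_filter.1 hBf
            have hBF : B ∈ F := (Finset.mem_filter.1 hBE).1
            have hBBw : B ≠ Bw := fun h => hBwnS (h ▸ hSB)
            have hint : s ≤ (B ∩ Bw).card := hE2 B hBE Bw hBwE hBBw
            refine ⟨(hF B hBF).1, (hF B hBF).2, hSB, ?_⟩
            have hne2 : ((B ∩ Bw) \ S).Nonempty := by
              rw [Finset.sdiff_nonempty]
              intro hsub2
              have h1 : B ∩ Bw ⊆ S ∩ Bw := Finset.subset_inter hsub2 Finset.inter_subset_right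
              have h2 : (S ∩ Bw).card < s := by
                have hss : S ∩ Bw ⊂ S := by
                  refine Finset.ssubset_iff_subset_ne.2 ⟨Finset.inter_subset_left, ?_⟩
                  intro heq
                  exact hBwnS (by rw [← heq]; exact Finset.inter_subset_right)
                have := Finset.card_lt_card hss
                omega
              have h3 := Finset.card_le_card h1
              omega
            obtain ⟨x, hx⟩ := hne2
            rw [Finset.mem_sdiff, Finset.mem_inter] at hx
            refine ⟨x, ?_⟩
            rw [Finset.mem_inter, Finset.mem_sdiff, Finset.mem_sdiff]
            exact ⟨⟨hx.1.1, hx.2⟩, hx.1.2, hx.2⟩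
        have htot : E.card ≤ 1 + Nat.choose k s * (k * m'.choose (k - s - 1)) := by
          calc E.card ≤ (insert A₀
              ((A₀.powersetCard s).biUnion (fun S => E.filter (fun B => S ⊆ B)))).card :=
              Finset.card_le_card hcov2
            _ ≤ 1 + ((A₀.powersetCard s).biUnion (fun S => E.filter (fun B => S ⊆ B))).card := by
              have := Finset.card_insert_le A₀
                ((A₀.powersetCard s).biUnion (fun S => E.filter (fun B => S ⊆ B)))
              omega
            _ ≤ 1 + ∑ S ∈ A₀.powersetCard s, (E.filter (fun B => S ⊆ B)).card :=
              Nat.add_le_add_left Finset.card_biUnion_le _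
            _ ≤ 1 + ∑ _S ∈ A₀.powersetCard s, k * m'.choose (k - s - 1) :=
              Nat.add_le_add_left (Finset.sum_le_sum hper) _
            _ = 1 + Nat.choose k s * (k * m'.choose (k - s - 1)) := by
              rw [Finset.sum_const, smul_eq_mul, Finset.card_powersetCard, hA₀k]
        have hC1 : 1 ≤ m'.choose (k - s - 1) := Nat.choose_pos (by omega)
        have hM₂b : 1 + Nat.choose k s * (k * m'.choose (k - s - 1))
            ≤ M₂ * m'.choose (k - s - 1) := by
          have e1 : M₂ * m'.choose (k-s-1)
              = (k * Nat.choose k s) * m'.choose (k-s-1) + (t'+k+5) * m'.choose (k-s-1) := by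
            rw [hM₂def]; ring
          have e2 : Nat.choose k s * (k * m'.choose (k-s-1))
              = (k * Nat.choose k s) * m'.choose (k-s-1) := by ring
          have e3 : 1 ≤ (t'+k+5) * m'.choose (k-s-1) := by
            calc 1 ≤ m'.choose (k-s-1) := hC1
              _ ≤ (t'+k+5) * m'.choose (k-s-1) := Nat.le_mul_of_pos_left _ (by omega)
          omega
        have hstep : M₂ * m'.choose (k - s - 1) ≤ m'.choose (k - s) := by
          have h := step_choose M₂ (k - s - 1) m' ?_
          · rwa [show k - s - 1 + 1 = k - s by omega] at h
          · have h1 : M₂ * ((k-s-1)+1) ≤ M₂ * (k+1) := Nat.mul_le_mul_left _ (by omega)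
            have h4 : M₂ * (k+1) = (k+1) * M₂ := by ring
            omega
        calc E.card ≤ 1 + Nat.choose k s * (k * m'.choose (k - s - 1)) := htot
          _ ≤ M₂ * m'.choose (k - s - 1) := hM₂b
          _ ≤ m'.choose (k - s) := hstep
          _ ≤ m'.choose e := chain_choose m' (k - s) e hks h2e
    have hFsplit : FT.card + E.card = F.card :=
      Finset.card_filter_add_card_filter_not (fun A => T ⊆ A)
    omega
  · -- no rich t-set
    push_neg at hrich
    set X := 2*k + (c+3)*k with hXdef
    set C' := (n - (t'+1) - 1).choose (k - (t'+1) - 1) with hC'def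
    -- maximal scattered subfamily
    set P : Finset (Finset ℕ) → Prop :=
      fun D => ∀ A ∈ D, ∀ B ∈ D, A ≠ B → (A ∩ B).card ≤ t' with hPdef
    have hS : (F.powerset.filter P).Nonempty := by
      refine ⟨∅, Finset.mem_filter.2 ⟨Finset.mem_powerset.2 (Finset.empty_subset F), ?_⟩⟩
      intro A hA; exact absurd hA (Finset.notMem_empty A)
    obtain ⟨D, hDmem, hDmax⟩ := Finset.exists_max_image (F.powerset.filter P)
      (fun D => D.card) hS
    have hDF : D ⊆ F := Finset.mem_powerset.1 (Finset.mem_filter.1 hDmem).1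
    have hDpair : P D := (Finset.mem_filter.1 hDmem).2
    -- D has at most c+2 elements
    have hDcard : D.card ≤ c + 2 := by
      by_contra hbig
      push_neg at hbig
      obtain ⟨D', hD'D, hD'card⟩ := Finset.exists_subset_card_eq (show c + 3 ≤ D.card by omega)
      set G : Fin (c+3) → Finset ℕ :=
        fun i => ((D'.equivFin.symm (Fin.cast hD'card.symm i)) : Finset ℕ) with hGdef
      have hGD' : ∀ i, G i ∈ D' := fun i => (D'.equivFin.symm (Fin.cast hD'card.symm i)).2
      have hGinj : Function.Injective G := by
        intro a b hab
        have h1 := D'.equivFin.symm.injective (Subtype.ext hab)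
        have h2 := congrArg Fin.val h1
        exact Fin.ext (by simpa using h2)
      have hGF : ∀ i, G i ∈ F := fun i => hDF (hD'D (hGD' i))
      have hM := hG G hGinj hGF
      have hSS : SS (c+3) G ≤ t' * Nat.choose (c+3) 2 := by
        apply SS_bound
        intro i j hij
        exact hDpair (G i) (hD'D (hGD' i)) (G j) (hD'D (hGD' j)) (hGinj.ne hij)
      have hMval : Nat.choose (c+3) 2 * (t' + 1 - 1) + Nat.choose (c + 3 - 1) 2
          = Nat.choose (c+3) 2 * t' + Nat.choose (c+2) 2 := by
        congr 2 <;> omega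
      rw [hMval] at hM
      have hM2 : Nat.choose (c+3) 2 * t' + Nat.choose (c+2) 2 ≤ t' * Nat.choose (c+3) 2 :=
        le_trans hM hSS
      rw [mul_comm t' (Nat.choose (c+3) 2)] at hM2
      have hpos : 0 < Nat.choose (c+2) 2 := Nat.choose_pos (by omega)
      omega
    -- covering
    have hcov : ∀ A ∈ F, A ∈ D ∨ ∃ D₀ ∈ D, t' + 1 ≤ (A ∩ D₀).card := by
      intro A hA
      by_contra hcon
      push_neg at hcon
      obtain ⟨hAD, hsmall⟩ := hcon
      have hins : insert A D ∈ F.powerset.filter P := by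
        refine Finset.mem_filter.2 ⟨Finset.mem_powerset.2 (Finset.insert_subset hA hDF), ?_⟩
        intro A₁ h₁ A₂ h₂ hne
        rcases Finset.mem_insert.1 h₁ with rfl | h₁'
        · rcases Finset.mem_insert.1 h₂ with rfl | h₂'
          · exact absurd rfl hne
          · have := hsmall A₂ h₂'; omega
        · rcases Finset.mem_insert.1 h₂ with rfl | h₂'
          · rw [Finset.inter_comm]; have := hsmall A₁ h₁'; omega
          · exact hDpair A₁ h₁' A₂ h₂' hne
      have := hDmax _ hins
      rw [Finset.card_insert_of_notMem hAD] at this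
      omega
    have hsub : F ⊆ D ∪ D.biUnion (fun D₀ =>
        (D₀.powersetCard (t'+1)).biUnion (fun T => F.filter (fun A => T ⊆ A))) := by
      intro A hA
      rcases hcov A hA with h | ⟨D₀, hD₀, hbig⟩
      · exact Finset.mem_union_left _ h
      · refine Finset.mem_union_right _ (Finset.mem_biUnion.2 ⟨D₀, hD₀, ?_⟩)
        obtain ⟨T, hTsub, hTcard⟩ := Finset.exists_subset_card_eq hbig
        refine Finset.mem_biUnion.2 ⟨T, ?_, ?_⟩
        · exact Finset.mem_powersetCard.2
            ⟨hTsub.trans (Finset.inter_subset_right), hTcard⟩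
        · exact Finset.mem_filter.2 ⟨hA, hTsub.trans (Finset.inter_subset_left)⟩
    have hFcard : F.card ≤ (c+2) + (c+2) * (Nat.choose k (t'+1) * (X * C')) := by
      calc F.card ≤ (D ∪ D.biUnion (fun D₀ =>
            (D₀.powersetCard (t'+1)).biUnion (fun T => F.filter (fun A => T ⊆ A)))).card :=
            Finset.card_le_card hsub
        _ ≤ D.card + (D.biUnion (fun D₀ =>
            (D₀.powersetCard (t'+1)).biUnion (fun T => F.filter (fun A => T ⊆ A)))).card :=
            Finset.card_union_le _ _
        _ ≤ D.card + ∑ D₀ ∈ D, ((D₀.powersetCard (t'+1)).biUnion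
            (fun T => F.filter (fun A => T ⊆ A))).card :=
            Nat.add_le_add_left Finset.card_biUnion_le _
        _ ≤ D.card + ∑ D₀ ∈ D, (Nat.choose k (t'+1) * (X * C')) := by
            refine Nat.add_le_add_left (Finset.sum_le_sum fun D₀ hD₀ => ?_) _
            calc ((D₀.powersetCard (t'+1)).biUnion (fun T => F.filter (fun A => T ⊆ A))).card
                ≤ ∑ T ∈ D₀.powersetCard (t'+1), (F.filter (fun A => T ⊆ A)).card :=
                  Finset.card_biUnion_le
              _ ≤ ∑ _T ∈ D₀.powersetCard (t'+1), (X * C') := by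
                  refine Finset.sum_le_sum fun T hT => ?_
                  exact hrich T (Finset.mem_powersetCard.1 hT).2
              _ = (D₀.powersetCard (t'+1)).card * (X * C') := by
                  rw [Finset.sum_const, smul_eq_mul]
              _ = Nat.choose k (t'+1) * (X * C') := by
                  rw [Finset.card_powersetCard, (hF D₀ (hDF hD₀)).2]
        _ = D.card + D.card * (Nat.choose k (t'+1) * (X * C')) := by
            rw [Finset.sum_const, smul_eq_mul]
        _ ≤ (c+2) + (c+2) * (Nat.choose k (t'+1) * (X * C')) := by
            exact Nat.add_le_add hDcard (Nat.mul_le_mul_right _ hDcard)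
    have hM₁C : (c+2) + (c+2) * (Nat.choose k (t'+1) * (X * C')) ≤ M₁ * C' := by
      have e3 : M₁ * C' = (c+2) * C' + ((c+2) * (Nat.choose k (t'+1) * X)) * C' := by
        rw [hM₁def, hXdef]; ring
      rw [e3]
      refine Nat.add_le_add ?_ (le_of_eq (by ring))
      exact Nat.le_mul_of_pos_right _ hC'pos
    have hGrow : M₁ * C' ≤ (n - (t'+1)).choose (k - (t'+1)) := by
      apply grow_choose M₁ (k - (t'+1)) (n - (t'+1)) (by omega) ?_ (by omega)
      have h1 : M₁ * (k - (t'+1)) ≤ M₁ * (k+1) := Nat.mul_le_mul_left _ (by omega)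
      have h2 : M₁ * (k+1) = (k+1) * M₁ := by ring
      omega
    calc F.card ≤ (c+2) + (c+2) * (Nat.choose k (t'+1) * (X * C')) := hFcard
      _ ≤ M₁ * C' := hM₁C
      _ ≤ (n - (t'+1)).choose (k - (t'+1)) := hGrow
      _ ≤ _ := Nat.le_add_right _ _
end

section
/- Let g(x) = binomial(x,2) + binomial(ℓ-x,2)(ℓ-s-2). If 2s ≤ ℓ-1, then for every integer x with 0 ≤ x ≤ ℓ, g(x) ≥ binomial(ℓ-1,2) - s. -/
lemma natCast_sub_one_mul_sub_nonneg {K : Type*} [CommRing K] [LinearOrder K]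
    [IsStrictOrderedRing K] (t : ℕ) {a b : K} (hb : 0 ≤ b) (hba : b ≤ 2 * a) :
    0 ≤ ((t : K) - 1) * (a * t - b) := by
  rcases Nat.lt_or_ge t 2 with ht | ht
  · interval_cases t <;> simp [hb]
  · have ht' : (2 : K) ≤ t := by exact_mod_cast ht
    apply mul_nonneg <;> nlinarith

/-- With `n = s + 1 + m`, `x = n - t` and `y = t + 1`, twice the difference of the two sides is
`(t - 1) * ((m + 1) * t - 2 * s)`, which is nonnegative for integral `t` as soon as `s ≤ m + 1`. -/
lemma choose_two_le_choose_two_add_choose_two_mul (x t m s : ℕ) (hs : s ≤ m + 1)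
    (h : x + t = s + 1 + m) :
    (x + t).choose 2 ≤ x.choose 2 + (t + 1).choose 2 * m + s := by
  have key := natCast_sub_one_mul_sub_nonneg (K := ℚ) t (a := m + 1) (b := 2 * s)
    (by positivity) (by exact_mod_cast (by omega : 2 * s ≤ 2 * (m + 1)))
  have h' : (x : ℚ) + t = s + 1 + m := by exact_mod_cast h
  suffices ((x + t).choose 2 : ℚ) ≤ x.choose 2 + (t + 1).choose 2 * m + s by exact_mod_cast this
  simp only [Nat.cast_choose_two, Nat.cast_add, Nat.cast_one]
  linear_combination key / 2 + (t : ℚ) * h'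

theorem stmt_15 (s ℓ : ℕ) (hℓ3 : 3 ≤ ℓ) (hsℓ : 2 * s + 1 ≤ ℓ)
    (x : ℕ) (hx : x ≤ ℓ) :
    Nat.choose (ℓ - 1) 2 - s ≤
      Nat.choose x 2 + Nat.choose (ℓ - x) 2 * (ℓ - s - 2) := by
  obtain ⟨m, rfl⟩ : ∃ m, ℓ = s + 2 + m := ⟨ℓ - s - 2, by omega⟩
  rcases hx.lt_or_eq with hlt | rfl
  · obtain ⟨t, ht⟩ : ∃ t, x + t = s + 1 + m := ⟨s + 1 + m - x, by omega⟩
    rw [show s + 2 + m - 1 = x + t by omega, show s + 2 + m - x = t + 1 by omega,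
      show s + 2 + m - s - 2 = m by omega, Nat.sub_le_iff_le_add]
    exact choose_two_le_choose_two_add_choose_two_mul x t m s (by omega) ht
  · calc (s + 2 + m - 1).choose 2 - s ≤ (s + 2 + m).choose 2 :=
          (Nat.sub_le _ _).trans (Nat.choose_le_choose 2 (Nat.sub_le _ _))
      _ ≤ _ := Nat.le_add_right _ _
end

section
/- Suppose F ⊆ binomial([n],k) satisfies: for any ℓ distinct members F₁,…,F_ℓ, ∑_{i<j} |F_i ∩ F_j| ≥ binomial(ℓ,2)(t-1) + binomial(ℓ-1,2), and F contains a sunflower with t-element kernel T and 2k+ℓ-2 petals. Let a ∈ T and let F(T∖{a}, ā) = {F ∈ F : F ∩ T = T ∖ {a}}. Then |F(T∖{a}, ā)| ≤ binomial(n-t-ℓ+2, k-t-ℓ+3). -/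
open Finset


-- asymptotic lemma
lemma choose_asymp (C c d : ℕ) (hd : 1 ≤ d) :
    ∃ n₀ : ℕ, ∀ n ≥ n₀, 1 + C * n ^ (d - 1) ≤ (n - c).choose d := by
  refine ⟨3 * (c + d) + (1 + C) * d.factorial * 3 ^ (d - 1) * 3 + 3, fun n hn => ?_⟩
  have h3 : 1 ≤ 3 ^ (d - 1) := Nat.one_le_pow _ _ (by norm_num)
  have hfac : 1 ≤ d.factorial := d.factorial_pos
  set M := n - c - (d - 1) with hM
  have hnM : n ≤ 3 * M := by omega
  have hMb : (1 + C) * d.factorial * 3 ^ (d - 1) ≤ M := by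
    nlinarith [Nat.one_le_pow (d-1) 3 (by norm_num)]
  -- key: (1 + C * n^(d-1)) * d! ≤ M ^ d
  have key : (1 + C * n ^ (d - 1)) * d.factorial ≤ M ^ d := by
    have h1 : n ^ (d-1) ≤ 3 ^ (d-1) * M ^ (d-1) := by
      calc n ^ (d-1) ≤ (3 * M) ^ (d-1) := Nat.pow_le_pow_left hnM _
        _ = 3 ^ (d-1) * M ^ (d-1) := Nat.mul_pow _ _ _
    have h2 : 1 ≤ M ^ (d-1) := Nat.one_le_pow _ _ (by omega)
    have ha : C * n^(d-1) * d.factorial ≤ C * (3^(d-1) * M^(d-1)) * d.factorial :=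
      Nat.mul_le_mul_right _ (Nat.mul_le_mul_left _ h1)
    have hb : d.factorial ≤ d.factorial * (3^(d-1) * M^(d-1)) :=
      Nat.le_mul_of_pos_right _ (by positivity)
    have h4 : (1 + C * n ^ (d-1)) * d.factorial ≤ ((1 + C) * d.factorial * 3 ^ (d-1)) * M ^ (d-1) := by
      calc (1 + C*n^(d-1)) * d.factorial = d.factorial + C*n^(d-1)*d.factorial := by ring
        _ ≤ d.factorial*(3^(d-1)*M^(d-1)) + C*(3^(d-1)*M^(d-1))*d.factorial := Nat.add_le_add hb ha
        _ = ((1+C)*d.factorial*3^(d-1)) * M^(d-1) := by ring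
    calc (1 + C * n ^ (d-1)) * d.factorial ≤ M * M ^ (d-1) := h4.trans (Nat.mul_le_mul_right _ hMb)
      _ = M ^ d := by rw [← pow_succ']; congr 1; omega
  have hdesc : M ^ d ≤ (n - c).descFactorial d := by
    have : M = n - c + 1 - d := by omega
    rw [this]
    have := Nat.pow_sub_le_descFactorial (n - c) d
    simpa using this
  have : (1 + C * n ^ (d-1)) * d.factorial ≤ (n - c).choose d * d.factorial := by
    refine key.trans (hdesc.trans ?_)
    rw [Nat.descFactorial_eq_factorial_mul_choose, Nat.mul_comm]
  exact Nat.le_of_mul_le_mul_right this hfac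

lemma choose_le_pow' (n k : ℕ) : n.choose k ≤ n ^ k := by
  have h := Nat.descFactorial_le_pow n k
  rw [Nat.descFactorial_eq_factorial_mul_choose] at h
  calc n.choose k ≤ k.factorial * n.choose k := Nat.le_mul_of_pos_left _ k.factorial_pos
    _ ≤ n ^ k := h

lemma double_sum_le (f : ℕ → ℕ → ℕ) (u v : ℕ) :
    ∀ N, 2 ≤ N → (∀ j, 2 ≤ j → j < N → f 0 j ≤ u) → (∀ j, 2 ≤ j → j < N → f 1 j ≤ u) →
    (∀ i j, 2 ≤ i → i < j → j < N → f i j ≤ v) →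
    ∑ i ∈ range N, ∑ j ∈ range N, (if i < j then f i j else 0)
      ≤ f 0 1 + 2 * (N - 2) * u + (N - 2).choose 2 * v := by
  intro N hN
  induction N, hN using Nat.le_induction with
  | base => intro _ _ _; simp [Finset.sum_range_succ]
  | succ N hN IH =>
    intro h0 h1 h2
    have step1 : ∑ i ∈ range (N+1), ∑ j ∈ range (N+1), (if i < j then f i j else 0)
        = (∑ i ∈ range N, ∑ j ∈ range N, (if i < j then f i j else 0))
          + ∑ i ∈ range N, f i N := by
      rw [Finset.sum_range_succ]
      have hinner : ∀ i ∈ range N, ∑ j ∈ range (N+1), (if i < j then f i j else 0)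
          = (∑ j ∈ range N, (if i < j then f i j else 0)) + f i N := by
        intro i hi
        rw [Finset.sum_range_succ, if_pos (mem_range.mp hi)]
      rw [Finset.sum_congr rfl hinner, Finset.sum_add_distrib]
      have hlast : ∑ j ∈ range (N+1), (if N < j then f N j else 0) = 0 := by
        apply Finset.sum_eq_zero
        intro j hj
        have := mem_range.mp hj
        rw [if_neg (by omega)]
      rw [hlast]
      ring
    have step2 : ∑ i ∈ range N, f i N ≤ 2 * u + (N - 2) * v := by
      have hsplit : ∑ i ∈ range N, f i N
          = ∑ i ∈ Finset.Ico 0 2, f i N + ∑ i ∈ Finset.Ico 2 N, f i N := by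
        rw [Finset.sum_Ico_consecutive _ (by omega) (by omega), Finset.range_eq_Ico]
      have h02 : ∑ i ∈ Finset.Ico 0 2, f i N = f 0 N + f 1 N := by
        simp [Finset.sum_range_succ, ← Finset.range_eq_Ico]
      have hIco : ∑ i ∈ Finset.Ico 2 N, f i N ≤ (N - 2) * v := by
        calc ∑ i ∈ Finset.Ico 2 N, f i N ≤ ∑ i ∈ Finset.Ico 2 N, v :=
              Finset.sum_le_sum (fun i hi => by
                have := Finset.mem_Ico.mp hi
                exact h2 i N this.1 this.2 (by omega))
          _ = (N - 2) * v := by rw [Finset.sum_const, Nat.card_Ico, smul_eq_mul]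
      have hu0 := h0 N (by omega) (by omega)
      have hu1 := h1 N (by omega) (by omega)
      omega
    have IH' := IH (fun j h hj => h0 j h (by omega)) (fun j h hj => h1 j h (by omega))
      (fun i j hi hij hj => h2 i j hi hij (by omega))
    have hc : (N + 1 - 2).choose 2 = (N - 2).choose 2 + (N - 2) := by
      rw [show N + 1 - 2 = (N - 2) + 1 by omega, Nat.choose_succ_succ, Nat.choose_one_right]
      exact Nat.add_comm _ _
    calc ∑ i ∈ range (N+1), ∑ j ∈ range (N+1), (if i < j then f i j else 0)
        ≤ (f 0 1 + 2 * (N - 2) * u + (N - 2).choose 2 * v) + (2 * u + (N - 2) * v) := by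
          rw [step1]; exact Nat.add_le_add IH' step2
      _ = f 0 1 + 2 * (N + 1 - 2) * u + (N + 1 - 2).choose 2 * v := by
          rw [hc, show N + 1 - 2 = (N - 2) + 1 by omega]; ring

lemma arith_key (t ℓ cXY : ℕ) (ht : 1 ≤ t) (hℓ : 3 ≤ ℓ)
    (h : Nat.choose ℓ 2 * (t - 1) + Nat.choose (ℓ - 1) 2 ≤
      cXY + 2 * (ℓ - 2) * (t - 1) + (ℓ - 2).choose 2 * t) :
    t + ℓ - 3 ≤ cXY := by
  obtain ⟨m, rfl⟩ : ∃ m, ℓ = m + 3 := ⟨ℓ - 3, by omega⟩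
  obtain ⟨t', rfl⟩ : ∃ t', t = t' + 1 := ⟨t - 1, by omega⟩
  have e2 : (m + 2).choose 2 = (m + 1).choose 2 + (m + 1) := by
    have := Nat.choose_succ_succ (m + 1) 1
    norm_num [Nat.choose_one_right, Nat.succ_eq_add_one] at this
    rw [show m + 1 + 1 = m + 2 by omega] at this
    omega
  have e3 : (m + 3).choose 2 = (m + 1).choose 2 + (2 * m + 3) := by
    have := Nat.choose_succ_succ (m + 2) 1
    norm_num [Nat.choose_one_right, Nat.succ_eq_add_one] at this
    rw [show m + 2 + 1 = m + 3 by omega] at this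
    omega
  have h1 : m + 3 - 1 = m + 2 := by omega
  have h2 : m + 3 - 2 = m + 1 := by omega
  have h3 : t' + 1 - 1 = t' := by omega
  rw [h1, h2, h3, e2, e3] at h
  have goal' : t' + 1 + (m + 3) - 3 = t' + m + 1 := by omega
  rw [goal']
  nlinarith [h]


lemma choose_mono_right (m : ℕ) : ∀ j j' : ℕ, j ≤ j' → j' ≤ m / 2 → m.choose j ≤ m.choose j' := by
  intro j j' hjj
  induction j', hjj using Nat.le_induction with
  | base => intro _; exact le_refl _
  | succ j' hj' ih =>
    intro h
    exact (ih (by omega)).trans (Nat.choose_le_succ_of_lt_half_left (by omega))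

theorem stmt_18 (k t ℓ : ℕ) (ht : 1 ≤ t) (hℓ : 3 ≤ ℓ) (hk : t + ℓ - 2 ≤ k) :
    ∃ n₀ : ℕ, ∀ n ≥ n₀, ∀ F : Finset (Finset ℕ),
      (∀ A ∈ F, A ⊆ Finset.Icc 1 n ∧ A.card = k) →
      (∀ G : Fin ℓ → Finset ℕ, Function.Injective G → (∀ i, G i ∈ F) →
        Nat.choose ℓ 2 * (t - 1) + Nat.choose (ℓ - 1) 2 ≤
          ∑ i : Fin ℓ, ∑ j : Fin ℓ, if i < j then (G i ∩ G j).card else 0) →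
      ∀ T : Finset ℕ, T.card = t →
      ∀ S ⊆ F, S.card = 2 * k + ℓ - 2 →
        (∀ A ∈ S, ∀ B ∈ S, A ≠ B → A ∩ B = T) →
      ∀ a ∈ T,
        (F.filter (fun X => X ∩ T = T.erase a)).card ≤
          Nat.choose (n - t - ℓ + 2) (k - t - ℓ + 3) := by
  classical
  obtain ⟨n₁, hn₁⟩ := choose_asymp ((k - t + 1).choose (ℓ - 2) * (k - t + 1)) (t + ℓ - 2)
    (k - t - ℓ + 3) (by omega)
  refine ⟨n₁ + 2 * k + t + ℓ + 10, fun n hn F hF hsum T hT S hSF hScard hSint a haT => ?_⟩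
  have hnbig : 2 * k + t + ℓ + 10 ≤ n := by omega
  have harithA : k - t + 1 - (ℓ - 2) ≤ k - t - ℓ + 3 := by omega
  have harithB : k - t + 1 - (ℓ - 2 + 1) ≤ k - t - ℓ + 3 - 1 := by omega
  set filt := F.filter (fun X => X ∩ T = T.erase a) with hfiltdef
  have hS2 : 1 < S.card := by omega
  have hTsub : ∀ P ∈ S, T ⊆ P := by
    intro P hP
    obtain ⟨Q, hQ, hQP⟩ := Finset.exists_mem_ne hS2 P
    rw [← hSint Q hQ P hP hQP]
    exact inter_subset_right
  have hTicc : T ⊆ Finset.Icc 1 n := by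
    obtain ⟨P, hP⟩ := Finset.card_pos.mp (by omega : 0 < S.card)
    exact (hTsub P hP).trans (hF P (hSF hP)).1
  have hfiltmem : ∀ X ∈ filt, X ∈ F ∧ X ∩ T = T.erase a ∧ X ⊆ Finset.Icc 1 n ∧ X.card = k := by
    intro X hX
    have h1 := Finset.mem_filter.mp hX
    exact ⟨h1.1, h1.2, (hF X h1.1).1, (hF X h1.1).2⟩
  have hErase : (T.erase a).card = t - 1 := by rw [Finset.card_erase_of_mem haT, hT]
  have hXnotS : ∀ X ∈ filt, X ∉ S := by
    intro X hX hXS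
    have h1 := (hfiltmem X hX).2.1
    have h2 : a ∈ X ∩ T := Finset.mem_inter.mpr ⟨hTsub X hXS haT, haT⟩
    rw [h1] at h2
    exact (Finset.notMem_erase a T) h2
  have hEX : ∀ X ∈ filt, T.erase a ⊆ X := by
    intro X hX
    rw [← (hfiltmem X hX).2.1]
    exact inter_subset_left
  -- key pairwise claim
  have hkey : ∀ X ∈ filt, ∀ Y ∈ filt, X ≠ Y → t + ℓ - 3 ≤ (X ∩ Y).card := by
    intro X hX Y hY hXY
    obtain ⟨hXF, hXT, hXicc, hXcard⟩ := hfiltmem X hX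
    obtain ⟨hYF, hYT, hYicc, hYcard⟩ := hfiltmem Y hY
    set W := (X ∪ Y) \ T with hWdef
    set bad := S.filter (fun P => (W ∩ P).Nonempty) with hbaddef
    have hWcard : W.card ≤ 2 * k - 2 * t + 2 := by
      have hX1 : (X \ T).card + (X ∩ T).card = X.card := Finset.card_sdiff_add_card_inter X T
      have hY1 : (Y \ T).card + (Y ∩ T).card = Y.card := Finset.card_sdiff_add_card_inter Y T
      rw [hXT, hErase, hXcard] at hX1
      rw [hYT, hErase, hYcard] at hY1
      have hWu : W = (X \ T) ∪ (Y \ T) := by rw [hWdef]; exact Finset.union_sdiff_distrib X Y T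
      have := Finset.card_union_le (X \ T) (Y \ T)
      rw [← hWu] at this
      omega
    have hbadcard : bad.card ≤ W.card := by
      set f : Finset ℕ → ℕ := fun P => if h : (W ∩ P).Nonempty then h.choose else 0 with hfdef
      have hm : ∀ P ∈ bad, f P ∈ W := by
        intro P hP
        have h := (Finset.mem_filter.mp hP).2
        have : f P = h.choose := dif_pos h
        rw [this]
        exact (Finset.mem_inter.mp h.choose_spec).1
      refine Finset.card_le_card_of_injOn f hm ?_
      intro P hP Q hQ heq
      by_contra hne
      have hPS := (Finset.mem_filter.mp hP).1
      have hQS := (Finset.mem_filter.mp hQ).1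
      have h1 := (Finset.mem_filter.mp hP).2
      have h2 := (Finset.mem_filter.mp hQ).2
      have e1 : f P = h1.choose := dif_pos h1
      have e2 : f Q = h2.choose := dif_pos h2
      have hchoose : h1.choose = h2.choose := by rw [← e1, heq, e2]
      have hz1 := h1.choose_spec
      have hz2 := h2.choose_spec
      rw [← hchoose] at hz2
      have hzPQ : h1.choose ∈ P ∩ Q := Finset.mem_inter.mpr
        ⟨(Finset.mem_inter.mp hz1).2, (Finset.mem_inter.mp hz2).2⟩
      rw [hSint P hPS Q hQS hne] at hzPQ
      exact (Finset.mem_sdiff.mp (Finset.mem_inter.mp hz1).1).2 hzPQ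
    have hgoodcard : ℓ - 2 ≤ (S \ bad).card := by
      have hbS : bad ⊆ S := Finset.filter_subset _ _
      rw [Finset.card_sdiff_of_subset hbS]
      omega
    obtain ⟨P', hP'g, hP'card⟩ := Finset.exists_subset_card_eq hgoodcard
    have hP'S : P' ⊆ S := hP'g.trans (Finset.sdiff_subset)
    have hgoodprop : ∀ P ∈ P', ∀ z ∈ P, z ∈ X ∪ Y → z ∈ T := by
      intro P hP z hzP hzXY
      have hnb := (Finset.mem_sdiff.mp (hP'g hP)).2
      by_contra hzT
      exact hnb (Finset.mem_filter.mpr ⟨(Finset.mem_sdiff.mp (hP'g hP)).1,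
        ⟨z, Finset.mem_inter.mpr ⟨Finset.mem_sdiff.mpr ⟨hzXY, hzT⟩, hzP⟩⟩⟩)
    have hPX : ∀ P ∈ P', P ∩ X = T.erase a := by
      intro P hP
      ext z
      constructor
      · intro hz
        obtain ⟨hzP, hzX⟩ := Finset.mem_inter.mp hz
        have hzT : z ∈ T := hgoodprop P hP z hzP (Finset.mem_union_left _ hzX)
        rw [← hXT]; exact Finset.mem_inter.mpr ⟨hzX, hzT⟩
      · intro hz
        have hzT : z ∈ T := Finset.mem_of_mem_erase hz
        have hzX : z ∈ X := by rw [← hXT] at hz; exact (Finset.mem_inter.mp hz).1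
        exact Finset.mem_inter.mpr ⟨hTsub P (hP'S hP) hzT, hzX⟩
    have hPY : ∀ P ∈ P', P ∩ Y = T.erase a := by
      intro P hP
      ext z
      constructor
      · intro hz
        obtain ⟨hzP, hzY⟩ := Finset.mem_inter.mp hz
        have hzT : z ∈ T := hgoodprop P hP z hzP (Finset.mem_union_right _ hzY)
        rw [← hYT]; exact Finset.mem_inter.mpr ⟨hzY, hzT⟩
      · intro hz
        have hzT : z ∈ T := Finset.mem_of_mem_erase hz
        have hzY : z ∈ Y := by rw [← hYT] at hz; exact (Finset.mem_inter.mp hz).1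
        exact Finset.mem_inter.mpr ⟨hTsub P (hP'S hP) hzT, hzY⟩
    set g : Fin (ℓ - 2) → Finset ℕ :=
      fun i => (P'.equivFin.symm (Fin.cast hP'card.symm i) : Finset ℕ) with hgdef
    have hgmem : ∀ i : Fin (ℓ - 2), g i ∈ P' := fun i => (P'.equivFin.symm _).2
    have hginj : Function.Injective g := by
      intro x y hxy
      have h1 := P'.equivFin.symm.injective (Subtype.ext hxy)
      exact Fin.ext (by simpa using congrArg Fin.val h1)
    set G' : ℕ → Finset ℕ := fun i => if i = 0 then X else if i = 1 then Y else
      if h : i - 2 < ℓ - 2 then g ⟨i - 2, h⟩ else ∅ with hG'def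
    have hG'0 : G' 0 = X := by simp [hG'def]
    have hG'1 : G' 1 = Y := by simp [hG'def]
    have hG'mem : ∀ i, 2 ≤ i → i < ℓ → G' i ∈ P' := by
      intro i h2 hi
      have hlt : i - 2 < ℓ - 2 := by omega
      simp only [hG'def, if_neg (by omega : ¬ i = 0), if_neg (by omega : ¬ i = 1), dif_pos hlt]
      exact hgmem ⟨i - 2, hlt⟩
    have hG'inj : ∀ i < ℓ, ∀ j < ℓ, G' i = G' j → i = j := by
      have hXS := hXnotS X hX
      have hYS := hXnotS Y hY
      intro i hi j hj hij
      by_contra hne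
      rcases Nat.lt_or_ge i 2 with hi2 | hi2 <;> rcases Nat.lt_or_ge j 2 with hj2 | hj2
      · have hXY' : X = Y ∨ Y = X := by
          interval_cases i <;> interval_cases j <;>
            first
              | exact absurd rfl hne
              | (rw [hG'0, hG'1] at hij; exact Or.inl hij)
              | (rw [hG'0, hG'1] at hij; exact Or.inr hij)
        rcases hXY' with h | h
        · exact hXY h
        · exact hXY h.symm
      · have hjS : G' j ∈ S := hP'S (hG'mem j hj2 hj)
        rw [← hij] at hjS
        interval_cases i
        · rw [hG'0] at hjS; exact hXS hjS
        · rw [hG'1] at hjS; exact hYS hjS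
      · have hiS : G' i ∈ S := hP'S (hG'mem i hi2 hi)
        rw [hij] at hiS
        interval_cases j
        · rw [hG'0] at hiS; exact hXS hiS
        · rw [hG'1] at hiS; exact hYS hiS
      · have hlti : i - 2 < ℓ - 2 := by omega
        have hltj : j - 2 < ℓ - 2 := by omega
        have ei : G' i = g ⟨i - 2, hlti⟩ := by
          simp only [hG'def, if_neg (by omega : ¬ i = 0), if_neg (by omega : ¬ i = 1), dif_pos hlti]
        have ej : G' j = g ⟨j - 2, hltj⟩ := by
          simp only [hG'def, if_neg (by omega : ¬ j = 0), if_neg (by omega : ¬ j = 1), dif_pos hltj]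
        rw [ei, ej] at hij
        have h2 := hginj hij
        have : i - 2 = j - 2 := congrArg Fin.val h2
        omega
    set Gt : Fin ℓ → Finset ℕ := fun i => G' i.val with hGtdef
    have hGtinj : Function.Injective Gt := by
      intro i j hij
      exact Fin.ext (hG'inj i.val i.isLt j.val j.isLt hij)
    have hGtF : ∀ i, Gt i ∈ F := by
      intro i
      rcases Nat.lt_or_ge i.val 2 with h2 | h2
      · have : Gt i = G' i.val := rfl
        have hor : G' i.val = X ∨ G' i.val = Y := by
          interval_cases h : i.val
          · exact Or.inl hG'0
          · exact Or.inr hG'1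
        rw [this]
        rcases hor with h | h <;> rw [h]
        · exact hXF
        · exact hYF
      · exact hSF (hP'S (hG'mem i.val h2 i.isLt))
    have happ := hsum Gt hGtinj hGtF
    have hconv : (∑ i : Fin ℓ, ∑ j : Fin ℓ, if i < j then (Gt i ∩ Gt j).card else 0)
        = ∑ i ∈ range ℓ, ∑ j ∈ range ℓ, (if i < j then (G' i ∩ G' j).card else 0) := by
      rw [← Fin.sum_univ_eq_sum_range
        (fun i => ∑ j ∈ range ℓ, (if i < j then (G' i ∩ G' j).card else 0)) ℓ]
      refine Finset.sum_congr rfl fun i _ => ?_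
      rw [← Fin.sum_univ_eq_sum_range
        (fun j => (if (i : ℕ) < j then (G' (i : ℕ) ∩ G' j).card else 0)) ℓ]
      refine Finset.sum_congr rfl fun j _ => ?_
      simp only [Fin.lt_def]
      rfl
    rw [hconv] at happ
    have h0 : ∀ j, 2 ≤ j → j < ℓ → ((fun i j => (G' i ∩ G' j).card) 0 j) ≤ t - 1 := by
      intro j h2 hj
      have := hPX (G' j) (hG'mem j h2 hj)
      simp only
      rw [hG'0, Finset.inter_comm, this, hErase]
    have h1 : ∀ j, 2 ≤ j → j < ℓ → ((fun i j => (G' i ∩ G' j).card) 1 j) ≤ t - 1 := by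
      intro j h2 hj
      have := hPY (G' j) (hG'mem j h2 hj)
      simp only
      rw [hG'1, Finset.inter_comm, this, hErase]
    have h2' : ∀ i j, 2 ≤ i → i < j → j < ℓ → ((fun i j => (G' i ∩ G' j).card) i j) ≤ t := by
      intro i j h2 hij hj
      have hne : G' i ≠ G' j := fun h => absurd (hG'inj i (by omega) j hj h) (by omega)
      have := hSint (G' i) (hP'S (hG'mem i h2 (by omega))) (G' j) (hP'S (hG'mem j (by omega) hj)) hne
      simp only
      rw [this, hT]
    have hb := double_sum_le (fun i j => (G' i ∩ G' j).card) (t - 1) t ℓ (by omega) h0 h1 h2'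
    have hcomb := le_trans happ hb
    simp only [hG'0, hG'1] at hcomb
    exact arith_key t ℓ _ ht hℓ hcomb
  -- the image family
  set H := filt.image (fun X => X \ T.erase a) with hHdef
  have hinj : Set.InjOn (fun X => X \ T.erase a) filt := by
    intro X hX Y hY hXYeq
    have h1 := Finset.sdiff_union_of_subset (hEX X hX)
    rw [← h1, show X \ T.erase a = Y \ T.erase a from hXYeq,
      Finset.sdiff_union_of_subset (hEX Y hY)]
  have hHcard : H.card = filt.card := Finset.card_image_of_injOn hinj
  have hBsub : ∀ B ∈ H, B ⊆ Finset.Icc 1 n \ T := by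
    intro B hB
    obtain ⟨X, hX, rfl⟩ := Finset.mem_image.mp hB
    intro z hz
    have hz1 := Finset.mem_sdiff.mp hz
    refine Finset.mem_sdiff.mpr ⟨(hfiltmem X hX).2.2.1 hz1.1, fun hzT => ?_⟩
    have hzm : z ∈ X ∩ T := Finset.mem_inter.mpr ⟨hz1.1, hzT⟩
    rw [(hfiltmem X hX).2.1] at hzm
    exact hz1.2 hzm
  have hBcard : ∀ B ∈ H, B.card = k - t + 1 := by
    intro B hB
    obtain ⟨X, hX, rfl⟩ := Finset.mem_image.mp hB
    rw [Finset.card_sdiff_of_subset (hEX X hX), hErase, (hfiltmem X hX).2.2.2]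
    omega
  have hHpair : ∀ B ∈ H, ∀ B' ∈ H, B ≠ B' → ℓ - 2 ≤ (B ∩ B').card := by
    intro B hB B' hB' hne
    obtain ⟨X, hX, rfl⟩ := Finset.mem_image.mp hB
    obtain ⟨Y, hY, rfl⟩ := Finset.mem_image.mp hB'
    have hXY : X ≠ Y := fun h => hne (by rw [h])
    have h1 := hkey X hX Y hY hXY
    have h2 : (X \ T.erase a) ∩ (Y \ T.erase a) = (X ∩ Y) \ T.erase a := by
      ext z
      simp only [Finset.mem_sdiff, Finset.mem_inter]
      tauto
    have hEsub : T.erase a ⊆ X ∩ Y := Finset.subset_inter (hEX X hX) (hEX Y hY)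
    rw [h2, Finset.card_sdiff_of_subset hEsub, hErase]
    omega
  rw [← hHcard]
  rcases H.eq_empty_or_nonempty with hHe | ⟨A, hA⟩
  · rw [hHe]; simp
  by_cases hker : ∃ K : Finset ℕ, K.card = ℓ - 2 ∧ ∀ B ∈ H, K ⊆ B
  · obtain ⟨K, hKcard, hKsub⟩ := hker
    have hKground : K ⊆ Finset.Icc 1 n \ T := (hKsub A hA).trans (hBsub A hA)
    have hground : (Finset.Icc 1 n \ T).card = n - t := by
      rw [Finset.card_sdiff_of_subset hTicc, Nat.card_Icc, hT]
      omega
    have hgK : ((Finset.Icc 1 n \ T) \ K).card = n - t - ℓ + 2 := by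
      rw [Finset.card_sdiff_of_subset hKground, hground, hKcard]
      omega
    have hmap : ∀ B ∈ H, B \ K ∈ ((Finset.Icc 1 n \ T) \ K).powersetCard (k - t + 1 - (ℓ - 2)) := by
      intro B hB
      refine Finset.mem_powersetCard.mpr ⟨Finset.sdiff_subset_sdiff (hBsub B hB) (Finset.Subset.refl K), ?_⟩
      rw [Finset.card_sdiff_of_subset (hKsub B hB), hKcard, hBcard B hB]
    have hinjA : Set.InjOn (fun B => B \ K) H := by
      intro B hB B' hB' heq
      have e1 := Finset.sdiff_union_of_subset (hKsub B hB)
      rw [← e1, show B \ K = B' \ K from heq, Finset.sdiff_union_of_subset (hKsub B' hB')]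
    calc H.card ≤ (((Finset.Icc 1 n \ T) \ K).powersetCard (k - t + 1 - (ℓ - 2))).card :=
          Finset.card_le_card_of_injOn _ hmap hinjA
      _ = (n - t - ℓ + 2).choose (k - t + 1 - (ℓ - 2)) := by
          rw [Finset.card_powersetCard, hgK]
      _ ≤ (n - t - ℓ + 2).choose (k - t - ℓ + 3) :=
          choose_mono_right _ _ _ harithA (by omega)
  · push_neg at hker
    set CK : Finset ℕ → Finset ℕ := fun K => if h : ∃ B ∈ H, ¬ K ⊆ B then h.choose else ∅
      with hCKdef
    have hCK : ∀ K, K.card = ℓ - 2 → CK K ∈ H ∧ ¬ K ⊆ CK K := by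
      intro K hK
      obtain ⟨B, hB, hnsub⟩ := hker K hK
      have h : ∃ B ∈ H, ¬ K ⊆ B := ⟨B, hB, hnsub⟩
      have : CK K = h.choose := dif_pos h
      rw [this]
      exact ⟨h.choose_spec.1, h.choose_spec.2⟩
    set KB : Finset ℕ → Finset ℕ := fun B => if h : ∃ K' ⊆ B ∩ A, K'.card = ℓ - 2 then h.choose else ∅
      with hKBdef
    have hKB : ∀ B ∈ H, B ≠ A → KB B ⊆ B ∩ A ∧ (KB B).card = ℓ - 2 := by
      intro B hB hBA
      have hle := hHpair B hB A hA hBA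
      obtain ⟨K', hK'1, hK'2⟩ := Finset.exists_subset_card_eq hle
      have h : ∃ K' ⊆ B ∩ A, K'.card = ℓ - 2 := ⟨K', hK'1, hK'2⟩
      have : KB B = h.choose := dif_pos h
      rw [this]
      exact ⟨h.choose_spec.1, h.choose_spec.2⟩
    set xB : Finset ℕ → ℕ := fun B => if h : ∃ x ∈ B ∩ CK (KB B), x ∉ KB B then h.choose else 0
      with hxBdef
    have hxB : ∀ B ∈ H, B ≠ A → xB B ∈ B ∧ xB B ∈ CK (KB B) ∧ xB B ∉ KB B := by
      intro B hB hBA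
      obtain ⟨hK1, hK2⟩ := hKB B hB hBA
      obtain ⟨hC1, hC2⟩ := hCK (KB B) hK2
      have hneq : B ≠ CK (KB B) := by
        intro h
        exact hC2 (h ▸ (hK1.trans Finset.inter_subset_left))
      have hint := hHpair B hB _ hC1 hneq
      have hlt : (KB B ∩ CK (KB B)).card < ℓ - 2 := by
        have hss : KB B ∩ CK (KB B) ⊂ KB B := by
          refine Finset.ssubset_iff_subset_ne.mpr ⟨Finset.inter_subset_left, ?_⟩
          intro h
          exact hC2 (Finset.inter_eq_left.mp h)
        have := Finset.card_lt_card hss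
        omega
      have hex : ∃ x ∈ B ∩ CK (KB B), x ∉ KB B := by
        by_contra hno
        push_neg at hno
        have hsub2 : B ∩ CK (KB B) ⊆ KB B ∩ CK (KB B) := by
          intro x hx
          exact Finset.mem_inter.mpr ⟨hno x hx, (Finset.mem_inter.mp hx).2⟩
        have := Finset.card_le_card hsub2
        omega
      have : xB B = hex.choose := dif_pos hex
      rw [this]
      have hs := hex.choose_spec
      exact ⟨(Finset.mem_inter.mp hs.1).1, (Finset.mem_inter.mp hs.1).2, hs.2⟩
    set 𝒯 := (A.powersetCard (ℓ - 2)).biUnion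
      (fun K => {K} ×ˢ (CK K ×ˢ (Finset.Icc 1 n).powersetCard (k - t + 1 - (ℓ - 2 + 1)))) with h𝒯def
    have hsubB : ∀ B ∈ H, B ≠ A → insert (xB B) (KB B) ⊆ B := by
      intro B hB hBA
      exact Finset.insert_subset (hxB B hB hBA).1 ((hKB B hB hBA).1.trans Finset.inter_subset_left)
    have hmapsto : ∀ B ∈ H.erase A, (KB B, xB B, B \ insert (xB B) (KB B)) ∈ 𝒯 := by
      intro B hBe
      obtain ⟨hBA, hB⟩ := Finset.mem_erase.mp hBe
      obtain ⟨hK1, hK2⟩ := hKB B hB hBA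
      obtain ⟨hx1, hx2, hx3⟩ := hxB B hB hBA
      refine Finset.mem_biUnion.mpr ⟨KB B,
        Finset.mem_powersetCard.mpr ⟨hK1.trans Finset.inter_subset_right, hK2⟩, ?_⟩
      refine Finset.mem_product.mpr ⟨Finset.mem_singleton_self _, Finset.mem_product.mpr ⟨hx2, ?_⟩⟩
      refine Finset.mem_powersetCard.mpr ⟨?_, ?_⟩
      · exact Finset.sdiff_subset.trans ((hBsub B hB).trans Finset.sdiff_subset)
      · rw [Finset.card_sdiff_of_subset (hsubB B hB hBA), Finset.card_insert_of_notMem hx3, hK2,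
          hBcard B hB]
    have hinj2 : Set.InjOn (fun B => (KB B, xB B, B \ insert (xB B) (KB B))) (H.erase A) := by
      intro B hB B' hB' heq
      obtain ⟨hBA, hBH⟩ := Finset.mem_erase.mp hB
      obtain ⟨hBA', hBH'⟩ := Finset.mem_erase.mp hB'
      simp only [Prod.mk.injEq] at heq
      obtain ⟨e1, e2, e3⟩ := heq
      have u1 := Finset.union_sdiff_of_subset (hsubB B hBH hBA)
      have u2 := Finset.union_sdiff_of_subset (hsubB B' hBH' hBA')
      calc B = insert (xB B) (KB B) ∪ (B \ insert (xB B) (KB B)) := u1.symm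
        _ = insert (xB B') (KB B') ∪ (B' \ insert (xB B') (KB B')) := by rw [e3, e1, e2]
        _ = B' := u2
    have hcount : (H.erase A).card ≤ 𝒯.card := Finset.card_le_card_of_injOn _ hmapsto hinj2
    have h𝒯card : 𝒯.card ≤ (k - t + 1).choose (ℓ - 2) * ((k - t + 1) * n ^ (k - t - ℓ + 3 - 1)) := by
      refine (Finset.card_biUnion_le).trans ?_
      have hAcard : A.card = k - t + 1 := hBcard A hA
      have each : ∀ K ∈ A.powersetCard (ℓ - 2),
          ({K} ×ˢ (CK K ×ˢ (Finset.Icc 1 n).powersetCard (k - t + 1 - (ℓ - 2 + 1)))).card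
            ≤ (k - t + 1) * n ^ (k - t - ℓ + 3 - 1) := by
        intro K hK
        rw [Finset.card_product, Finset.card_product, Finset.card_singleton, one_mul,
          Finset.card_powersetCard, Nat.card_Icc]
        have hKc : K.card = ℓ - 2 := (Finset.mem_powersetCard.mp hK).2
        have hCKcard : (CK K).card ≤ k - t + 1 := by
          rw [hBcard (CK K) (hCK K hKc).1]
        have hch : (n + 1 - 1).choose (k - t + 1 - (ℓ - 2 + 1)) ≤ n ^ (k - t - ℓ + 3 - 1) := by
          rw [show n + 1 - 1 = n by omega]
          exact (choose_le_pow' n _).trans (Nat.pow_le_pow_right (by omega) harithB)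
        exact Nat.mul_le_mul hCKcard hch
      calc ∑ K ∈ A.powersetCard (ℓ - 2),
            ({K} ×ˢ (CK K ×ˢ (Finset.Icc 1 n).powersetCard (k - t + 1 - (ℓ - 2 + 1)))).card
          ≤ ∑ _K ∈ A.powersetCard (ℓ - 2), (k - t + 1) * n ^ (k - t - ℓ + 3 - 1) :=
            Finset.sum_le_sum each
        _ = (A.powersetCard (ℓ - 2)).card * ((k - t + 1) * n ^ (k - t - ℓ + 3 - 1)) := by
            rw [Finset.sum_const, smul_eq_mul]
        _ = (k - t + 1).choose (ℓ - 2) * ((k - t + 1) * n ^ (k - t - ℓ + 3 - 1)) := by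
            rw [Finset.card_powersetCard, hAcard]
    have hfinal : H.card ≤ 1 + (k - t + 1).choose (ℓ - 2) * (k - t + 1) * n ^ (k - t - ℓ + 3 - 1) := by
      have he := Finset.card_erase_add_one hA
      rw [mul_assoc]
      omega
    have hasy := hn₁ n (by omega)
    calc H.card ≤ 1 + (k - t + 1).choose (ℓ - 2) * (k - t + 1) * n ^ (k - t - ℓ + 3 - 1) := hfinal
      _ ≤ (n - (t + ℓ - 2)).choose (k - t - ℓ + 3) := by
          rw [mul_assoc] at *
          omega
      _ = (n - t - ℓ + 2).choose (k - t - ℓ + 3) := by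
          rw [show n - (t + ℓ - 2) = n - t - ℓ + 2 by omega]
end
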